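/- arXiv:1502.02307 — 10 statements merged into one kernel-verified Lean document; each statement's English description precedes it below -/
import Mathlib

section
/- There exists a regularly recurrent sequence x : ℕ₊ → {−1, 1} (i.e., for every n ≥ 1 there is p ≥ 1 such that x(n + mp) = x(n) for all m ≥ 0) such that limsup_{N→∞} (1/N)·∑_{n=1}^{N} x(n)·μMob(n) > 0. -/
/-!
Fill the positions in stages: at stage `k`, every position `n` not filled before with
`n % q k < L k` receives `moebiusSign (n % q k)`. As `q j ∣ q k` for `j ≤ k`, a position filled at
stage `k` repeats with period `q k`, so the result is Toeplitz. Below `L k`, a position not reached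
by an earlier stage receives `moebiusSign n` itself, and there the product with `μ` is `μ²`. With
`L j / q j = B⁻¹ ^ (j + 1)` the earlier stages reach at most a `2 / (B - 1)` fraction of `[1, L k)`,
while at least `1 / 12` of the integers are squarefree, so the average correlation up to `L k - 1` is
at least `1 / 12 - 4 / (B - 1)`, which is positive for `B = 64`.
-/

open Filter Finset ArithmeticFunction
open scoped ArithmeticFunction.Moebius

section ToeplitzFill

variable {α : Type*} {q L : ℕ → ℕ} (hcover : ∀ n, ∃ k, n % q k < L k)

def toeplitzStage (n : ℕ) : ℕ := Nat.find (hcover n)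

def toeplitzFill (v : ℕ → α) (n : ℕ) : α := v (n % q (toeplitzStage hcover n))

variable {hcover}

lemma toeplitzStage_add_mul (hdvd : ∀ j k, j ≤ k → q j ∣ q k) (n m : ℕ) :
    toeplitzStage hcover (n + m * q (toeplitzStage hcover n)) = toeplitzStage hcover n := by
  rw [toeplitzStage, Nat.find_eq_iff, Nat.add_mul_mod_self_right]
  refine ⟨Nat.find_spec (hcover n), fun j hj => ?_⟩
  obtain ⟨c, hc⟩ := hdvd j _ hj.le
  rw [hc, ← mul_assoc, mul_right_comm, Nat.add_mul_mod_self_right]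
  exact Nat.find_min (hcover n) hj

lemma toeplitzFill_add_mul (hdvd : ∀ j k, j ≤ k → q j ∣ q k) (v : ℕ → α) (n m : ℕ) :
    toeplitzFill hcover v (n + m * q (toeplitzStage hcover n)) = toeplitzFill hcover v n := by
  rw [toeplitzFill, toeplitzStage_add_mul hdvd, Nat.add_mul_mod_self_right, toeplitzFill]

lemma toeplitzStage_period_pos (hle : ∀ k, L k ≤ q k) (n : ℕ) :
    0 < q (toeplitzStage hcover n) :=
  (Nat.zero_le _).trans_lt ((Nat.find_spec (hcover n)).trans_le (hle _))

lemma toeplitzFill_eq_of_lt (hle : ∀ k, L k ≤ q k) (v : ℕ → α) {k n : ℕ} (hn : n < L k)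
    (hfree : ∀ j < k, L j ≤ n % q j) : toeplitzFill hcover v n = v n := by
  have hnq : n % q k = n := Nat.mod_eq_of_lt (hn.trans_le (hle k))
  have hstage : toeplitzStage hcover n = k := by
    rw [toeplitzStage, Nat.find_eq_iff, hnq]
    exact ⟨hn, fun j hj => (hfree j hj).not_gt⟩
  rw [toeplitzFill, hstage, hnq]

end ToeplitzFill

lemma card_filter_mod_lt_le (M Q L : ℕ) : #{n ∈ Icc 1 M | n % Q < L} ≤ (M / Q + 1) * L := by
  set s := {n ∈ Icc 1 M | n % Q < L}
  have hmaps : Set.MapsTo (fun n => (n / Q, n % Q)) s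
      (range (M / Q + 1) ×ˢ range L : Finset (ℕ × ℕ)) := by
    intro n hn
    simp only [s, coe_filter, mem_Icc] at hn
    simp only [coe_product, coe_range, Set.mem_prod, Set.mem_Iio]
    exact ⟨Nat.lt_succ_of_le (Nat.div_le_div_right hn.1.2), hn.2⟩
  have hinj : Set.InjOn (fun n => (n / Q, n % Q)) s :=
    fun a _ b _ hab => by
      rw [← Nat.div_add_mod a Q, ← Nat.div_add_mod b Q, (Prod.mk.inj hab).1, (Prod.mk.inj hab).2]
  simpa using card_le_card_of_injOn _ hmaps hinj

lemma card_filter_exists_mod_lt_le (q L : ℕ → ℕ) (M k : ℕ) :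
    #{n ∈ Icc 1 M | ∃ j < k, n % q j < L j} ≤ ∑ j ∈ range k, (M / q j + 1) * L j := by
  calc #{n ∈ Icc 1 M | ∃ j < k, n % q j < L j}
      ≤ #((range k).biUnion fun j => {n ∈ Icc 1 M | n % q j < L j}) := by
        refine card_le_card fun n hn => ?_
        simp only [mem_filter, mem_biUnion, mem_range] at hn ⊢
        obtain ⟨hn, j, hj, hmod⟩ := hn
        exact ⟨j, hj, hn, hmod⟩
    _ ≤ ∑ j ∈ range k, #{n ∈ Icc 1 M | n % q j < L j} := card_biUnion_le
    _ ≤ _ := sum_le_sum fun j _ => card_filter_mod_lt_le M (q j) (L j)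

lemma card_filter_not_squarefree_le (M : ℕ) :
    (#{n ∈ Icc 1 M | ¬Squarefree n} : ℝ) ≤ 11 / 12 * M := by
  set D := insert 2 (Ioo 2 (M + 1))
  have hsub : {n ∈ Icc 1 M | ¬Squarefree n} ⊆ D.biUnion fun d => {n ∈ Ioc 0 M | d * d ∣ n} := by
    intro n hn
    simp only [mem_filter, mem_Icc, Nat.squarefree_iff_prime_squarefree, not_forall,
      not_not] at hn
    obtain ⟨⟨hn1, hnM⟩, p, hp, hpn⟩ := hn
    have hp2 := hp.two_le
    have hpM : p ≤ M := (Nat.le_of_dvd hn1 (Dvd.intro p rfl |>.trans hpn)).trans hnM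
    simp only [D, mem_biUnion, mem_insert, mem_Ioo, mem_filter, mem_Ioc]
    exact ⟨p, by omega, ⟨by omega, hnM⟩, hpn⟩
  have hcard : #{n ∈ Icc 1 M | ¬Squarefree n} ≤ ∑ d ∈ D, M / (d * d) := by
    refine (card_le_card hsub).trans (card_biUnion_le.trans_eq (sum_congr rfl fun d _ => ?_))
    exact Nat.Ioc_filter_dvd_card_eq_div M (d * d)
  have htail : ∑ d ∈ Ioo 2 (M + 1), ((d : ℝ) ^ 2)⁻¹ ≤ 2 / 3 :=
    (sum_Ioo_inv_sq_le 2 (M + 1)).trans_eq (by norm_num)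
  calc (#{n ∈ Icc 1 M | ¬Squarefree n} : ℝ) ≤ ∑ d ∈ D, ((M / (d * d) : ℕ) : ℝ) := by
        exact_mod_cast hcard
    _ ≤ ∑ d ∈ D, (M : ℝ) * ((d : ℝ) ^ 2)⁻¹ := sum_le_sum fun d _ => by
        rw [← div_eq_mul_inv, sq]; exact_mod_cast Nat.cast_div_le
    _ = M / 4 + M * ∑ d ∈ Ioo 2 (M + 1), ((d : ℝ) ^ 2)⁻¹ := by
        rw [sum_insert (by simp), mul_sum]
        push_cast
        ring
    _ ≤ 11 / 12 * M := by nlinarith [(M.cast_nonneg : (0 : ℝ) ≤ M)]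

lemma card_filter_squarefree_ge (M : ℕ) : (M : ℝ) / 12 ≤ #{n ∈ Icc 1 M | Squarefree n} := by
  have hsplit := card_filter_add_card_filter_not (s := Icc 1 M) Squarefree
  rw [Nat.card_Icc, add_tsub_cancel_right] at hsplit
  have hsplit' : (#{n ∈ Icc 1 M | Squarefree n} : ℝ) + #{n ∈ Icc 1 M | ¬Squarefree n} = M := by
    exact_mod_cast hsplit
  linarith [card_filter_not_squarefree_le M]

def moebiusSign (n : ℕ) : ℤ := if μ n = -1 then -1 else 1

lemma moebiusSign_eq_one_or (n : ℕ) : moebiusSign n = 1 ∨ moebiusSign n = -1 := by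
  unfold moebiusSign
  split_ifs <;> simp

lemma moebiusSign_mul_moebius (n : ℕ) : moebiusSign n * μ n = |μ n| := by
  have := abs_le.mp (abs_moebius_le_one (n := n))
  unfold moebiusSign
  split_ifs with h
  · simp [h]
  · rw [one_mul, abs_of_nonneg (by omega)]

lemma abs_mul_moebius_le_one {a : ℤ} (ha : |a| ≤ 1) (n : ℕ) : |a * μ n| ≤ 1 := by
  rw [abs_mul]
  exact mul_le_one₀ ha (abs_nonneg _) abs_moebius_le_one

lemma card_squarefree_sub_card_ne_moebiusSign_le_sum (s : Finset ℕ) {x : ℕ → ℤ}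
    (hx : ∀ n, |x n| ≤ 1) :
    (#{n ∈ s | Squarefree n} : ℤ) - 2 * #{n ∈ s | x n ≠ moebiusSign n} ≤ ∑ n ∈ s, x n * μ n := by
  rw [natCast_card_filter, natCast_card_filter, mul_sum, ← sum_sub_distrib]
  refine sum_le_sum fun n _ => ?_
  by_cases h : x n = moebiusSign n
  · simp [h, moebiusSign_mul_moebius, abs_moebius]
  · have := (abs_le.mp (abs_mul_moebius_le_one (hx n) n)).1
    rw [if_pos h]
    split_ifs <;> linarith

lemma inv_mul_sum_mul_moebius_le_one {x : ℕ → ℤ} (hx : ∀ n, |x n| ≤ 1) (N : ℕ) :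
    (N : ℝ)⁻¹ * ∑ n ∈ Icc 1 N, (x n : ℝ) * (μ n : ℝ) ≤ 1 := by
  refine inv_mul_le_one_of_le₀ ?_ N.cast_nonneg
  calc ∑ n ∈ Icc 1 N, (x n : ℝ) * (μ n : ℝ) ≤ ∑ n ∈ Icc 1 N, (1 : ℝ) := sum_le_sum fun n _ => by
        exact_mod_cast (le_abs_self _).trans (abs_mul_moebius_le_one (hx n) n)
    _ = N := by simp

section GeometricScheme

variable (B : ℕ)

def toeplitzPeriod (k : ℕ) : ℕ := B ^ ((k + 1) * (k + 2))

def toeplitzWindow (k : ℕ) : ℕ := B ^ ((k + 1) ^ 2)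

lemma toeplitzPeriod_dvd (j k : ℕ) (h : j ≤ k) : toeplitzPeriod B j ∣ toeplitzPeriod B k :=
  pow_dvd_pow B (Nat.mul_le_mul (by omega) (by omega))

variable {B}

lemma toeplitzWindow_le_period (hB : 0 < B) (k : ℕ) : toeplitzWindow B k ≤ toeplitzPeriod B k :=
  Nat.pow_le_pow_right hB (by nlinarith)

lemma toeplitzPeriod_lt_window (hB : 1 < B) {j k : ℕ} (h : j < k) :
    toeplitzPeriod B j < toeplitzWindow B k :=
  Nat.pow_lt_pow_right hB (by nlinarith)

lemma lt_toeplitzWindow (hB : 1 < B) (k : ℕ) : k + 1 < toeplitzWindow B k :=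
  (Nat.lt_pow_self hB).trans_le (Nat.pow_le_pow_right (by omega) (by nlinarith))

lemma exists_mod_toeplitzPeriod_lt_window (hB : 1 < B) (n : ℕ) :
    ∃ k, n % toeplitzPeriod B k < toeplitzWindow B k :=
  ⟨n, (Nat.mod_le _ _).trans_lt ((Nat.lt_succ_self n).trans (lt_toeplitzWindow hB n))⟩

lemma toeplitzPeriod_eq (k : ℕ) : toeplitzPeriod B k = B ^ (k + 1) * toeplitzWindow B k := by
  rw [toeplitzPeriod, toeplitzWindow, ← pow_add]
  ring_nf

lemma card_filter_exists_mod_toeplitzPeriod_lt_le (hB : 1 < B) {M k : ℕ}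
    (hM : ∀ j < k, toeplitzPeriod B j ≤ M) :
    (#{n ∈ Icc 1 M | ∃ j < k, n % toeplitzPeriod B j < toeplitzWindow B j} : ℝ) ≤
      2 * M / (B - 1) := by
  have hB' : (1 : ℝ) < B := by exact_mod_cast hB
  have hB0 : (B : ℝ) ≠ 0 := by positivity
  have hterm : ∀ j ∈ range k, (((M / toeplitzPeriod B j + 1) * toeplitzWindow B j : ℕ) : ℝ) ≤
      2 * M / B * (1 / B : ℝ) ^ j := fun j hj => by
    have hq : 0 < toeplitzPeriod B j := pow_pos (by omega) _
    have hdiv : 1 ≤ M / toeplitzPeriod B j := Nat.div_pos (hM j (mem_range.mp hj)) hq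
    calc (((M / toeplitzPeriod B j + 1) * toeplitzWindow B j : ℕ) : ℝ)
        ≤ 2 * ((M / toeplitzPeriod B j : ℕ) : ℝ) * toeplitzWindow B j := by
          rw [Nat.cast_mul]
          gcongr
          exact_mod_cast (by omega : M / toeplitzPeriod B j + 1 ≤ 2 * (M / toeplitzPeriod B j))
      _ ≤ 2 * (M / toeplitzPeriod B j : ℝ) * toeplitzWindow B j := by gcongr; exact Nat.cast_div_le
      _ = 2 * M / B * (1 / B : ℝ) ^ j := by
          rw [toeplitzPeriod_eq]
          have : (toeplitzWindow B j : ℝ) ≠ 0 := by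
            exact_mod_cast (pow_pos (by omega : 0 < B) _).ne'
          push_cast
          rw [one_div_pow, pow_succ]
          field_simp
  have hgeom : ∑ j ∈ range k, (1 / B : ℝ) ^ j ≤ B / (B - 1) := by
    rw [range_eq_Ico]
    refine (geom_sum_Ico_le_of_lt_one (by positivity)
      ((div_lt_one (by linarith)).mpr hB')).trans_eq ?_
    field_simp
  calc (#{n ∈ Icc 1 M | ∃ j < k, n % toeplitzPeriod B j < toeplitzWindow B j} : ℝ)
      ≤ ∑ j ∈ range k, (((M / toeplitzPeriod B j + 1) * toeplitzWindow B j : ℕ) : ℝ) := by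
        exact_mod_cast card_filter_exists_mod_lt_le _ _ M k
    _ ≤ 2 * M / B * ∑ j ∈ range k, (1 / B : ℝ) ^ j := by rw [mul_sum]; exact sum_le_sum hterm
    _ ≤ 2 * M / B * (B / (B - 1)) := by gcongr
    _ = 2 * M / (B - 1) := by field_simp

end GeometricScheme

def moebiusToeplitz {B : ℕ} (hB : 1 < B) : ℕ → ℤ :=
  toeplitzFill (exists_mod_toeplitzPeriod_lt_window hB) moebiusSign

lemma moebiusToeplitz_eq_one_or {B : ℕ} (hB : 1 < B) (n : ℕ) :
    moebiusToeplitz hB n = 1 ∨ moebiusToeplitz hB n = -1 :=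
  moebiusSign_eq_one_or _

lemma abs_moebiusToeplitz_le_one {B : ℕ} (hB : 1 < B) (n : ℕ) : |moebiusToeplitz hB n| ≤ 1 := by
  rcases moebiusToeplitz_eq_one_or hB n with h | h <;> simp [h]

lemma sum_moebiusToeplitz_mul_moebius_ge {B M k : ℕ} (hB : 1 < B) (hMk : M < toeplitzWindow B k)
    (hkM : ∀ j < k, toeplitzPeriod B j ≤ M) :
    (1 / 12 - 4 / (B - 1) : ℝ) * M ≤ ∑ n ∈ Icc 1 M, (moebiusToeplitz hB n : ℝ) * (μ n : ℝ) := by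
  have hne : #{n ∈ Icc 1 M | moebiusToeplitz hB n ≠ moebiusSign n} ≤
      #{n ∈ Icc 1 M | ∃ j < k, n % toeplitzPeriod B j < toeplitzWindow B j} := by
    refine card_le_card fun n hn => ?_
    rw [mem_filter] at hn ⊢
    refine ⟨hn.1, ?_⟩
    by_contra! hfree
    exact hn.2 (toeplitzFill_eq_of_lt (toeplitzWindow_le_period (by omega)) _
      ((mem_Icc.mp hn.1).2.trans_lt hMk) hfree)
  have hforced : (#{n ∈ Icc 1 M | moebiusToeplitz hB n ≠ moebiusSign n} : ℝ) ≤ 2 * M / (B - 1) :=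
    (Nat.cast_le.mpr hne).trans (card_filter_exists_mod_toeplitzPeriod_lt_le hB hkM)
  have hcorr : (#{n ∈ Icc 1 M | Squarefree n} : ℝ) -
      2 * #{n ∈ Icc 1 M | moebiusToeplitz hB n ≠ moebiusSign n} ≤
        ∑ n ∈ Icc 1 M, (moebiusToeplitz hB n : ℝ) * (μ n : ℝ) := by
    exact_mod_cast card_squarefree_sub_card_ne_moebiusSign_le_sum (Icc 1 M)
      (abs_moebiusToeplitz_le_one hB)
  have hsq := card_filter_squarefree_ge M
  linarith [show 4 / (B - 1 : ℝ) * M = 2 * (2 * M / (B - 1)) by ring]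

lemma frequently_le_avg_moebiusToeplitz_mul_moebius {B : ℕ} (hB : 1 < B) :
    ∃ᶠ N : ℕ in atTop, (1 / 12 - 4 / (B - 1) : ℝ) ≤
      (N : ℝ)⁻¹ * ∑ n ∈ Icc 1 N, (moebiusToeplitz hB n : ℝ) * (μ n : ℝ) := by
  refine frequently_atTop.mpr fun k => ⟨toeplitzWindow B k - 1, ?_, ?_⟩
  · have := lt_toeplitzWindow hB k
    omega
  · have hM : 0 < toeplitzWindow B k - 1 := by
      have := lt_toeplitzWindow hB k
      omega
    rw [le_inv_mul_iff₀ (by exact_mod_cast hM), mul_comm]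
    exact sum_moebiusToeplitz_mul_moebius_ge hB (by omega)
      fun j hj => Nat.le_sub_one_of_lt (toeplitzPeriod_lt_window hB hj)

/-- There exists a one-sided Toeplitz (regularly recurrent) sequence with
values in `{-1, 1}` that is weakly correlated with the Möbius function. -/
theorem exists_toeplitz_weakly_correlated_with_moebius :
    ∃ x : ℕ → ℤ,
      (∀ n : ℕ, 1 ≤ n → x n = 1 ∨ x n = -1) ∧
      (∀ n : ℕ, 1 ≤ n → ∃ p : ℕ, 1 ≤ p ∧ ∀ m : ℕ, x (n + m * p) = x n) ∧
      0 < Filter.limsup (fun N : ℕ =>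
          (N : ℝ)⁻¹ * ∑ n ∈ Finset.Icc 1 N,
            (x n : ℝ) * (ArithmeticFunction.moebius n : ℝ)) atTop := by
  have hB : 1 < 64 := by norm_num
  refine ⟨moebiusToeplitz hB, fun n _ => moebiusToeplitz_eq_one_or hB n,
    fun n _ => ⟨_, toeplitzStage_period_pos (toeplitzWindow_le_period (by norm_num)) n,
      toeplitzFill_add_mul (toeplitzPeriod_dvd 64) _ n⟩, ?_⟩
  have hbdd : IsBoundedUnder (· ≤ ·) atTop fun N : ℕ =>
      (N : ℝ)⁻¹ * ∑ n ∈ Icc 1 N, (moebiusToeplitz hB n : ℝ) * (μ n : ℝ) :=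
    isBoundedUnder_of ⟨1, inv_mul_sum_mul_moebius_le_one (abs_moebiusToeplitz_le_one hB)⟩
  refine lt_of_lt_of_le ?_ (le_limsup_of_frequently_le
    (frequently_le_avg_moebiusToeplitz_mul_moebius hB) hbdd)
  norm_num
end

section
/- Assume moreover ρ < 3/π². Define x : ℕ₊ → {−1, 0, 1} by x(n) = μMob(b_k), where k is the unique index with n ∈ {b_k + m·p_k : m ≥ 0}. Then x is a regularly recurrent (Toeplitz) sequence and liminf_{N→∞} (1/N)·∑_{n=1}^{N} x(n)·μMob(n) ≥ 6/π² − 2ρ > 0; in particular there exists a one-sided Toeplitz sequence strongly correlated with the Möbius function. -/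
open Filter Topology Finset ArithmeticFunction
open scoped ArithmeticFunction.Moebius

/-!
The squarefree numbers have density `6/π²`: `μ(n)² = ∑_{d² ∣ n} μ(d)` gives
`∑_{n ≤ N} μ(n)² = ∑_{d ≤ √N} μ(d) ⌊N/d²⌋ = N ∑_{d ≤ √N} μ(d)/d² + O(√N)`, and
`∑ μ(d)/d² = 1/ζ(2)`. The greedy choice of the `b_k` makes the progressions `b_k + p_k ℕ` cover
the positive integers, with `b_k ≥ k`; so `x` is periodic, and `x(n) = μ(n)` whenever `n` is the
first term `b_k` of its progression. All other `n ≤ N` lie in some `b_k + p_k ℕ₊` with `k ≤ N`,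
so there are at most `∑_k N/p_k ≤ Nρ` of them (`ρ` is finite because `p_{k+1} ≥ 2 p_k`), and at
each of them `x(n)μ(n) ≥ μ(n)² - 2`. Hence the correlation is at least `6/π² - 2ρ`.
-/

lemma hasSum_moebius_div_sq : HasSum (fun n : ℕ => (μ n : ℝ) / n ^ 2) (6 / Real.pi ^ 2) := by
  have hs : 1 < (2 : ℂ).re := by norm_num
  have hL : LSeries (fun n => (μ n : ℂ)) 2 = 6 / Real.pi ^ 2 := by
    have h := LSeries_one_mul_Lseries_moebius hs
    rw [LSeries_one_eq_riemannZeta hs, riemannZeta_two] at h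
    have : (Real.pi : ℂ) ≠ 0 := by exact_mod_cast Real.pi_ne_zero
    field_simp
    linear_combination 6 * h
  have h := (LSeriesSummable_moebius_iff.mpr hs).LSeriesHasSum
  rw [hL, LSeriesHasSum] at h
  refine Complex.hasSum_ofReal.mp ?_
  convert h using 1
  · funext n
    rcases eq_or_ne n 0 with rfl | hn
    · simp
    · rw [LSeries.term_of_ne_zero hn, show (2 : ℂ) = ((2 : ℕ) : ℂ) by norm_num,
        Complex.cpow_natCast]
      push_cast
      rfl
  · push_cast; rfl

lemma floorRoot_two_eq_one_iff {n : ℕ} : Nat.floorRoot 2 n = 1 ↔ Squarefree n := by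
  simp only [Squarefree, ← sq, Nat.pow_dvd_iff_dvd_floorRoot, Nat.isUnit_iff]
  exact ⟨fun h d hd => Nat.dvd_one.mp (h ▸ hd), fun h => h _ dvd_rfl⟩

lemma sum_divisors_floorRoot_two_moebius (n : ℕ) :
    ∑ d ∈ (Nat.floorRoot 2 n).divisors, μ d = μ n ^ 2 := by
  rw [← coe_mul_zeta_apply, moebius_mul_coe_zeta, one_apply, moebius_sq,
    if_congr floorRoot_two_eq_one_iff rfl rfl]

lemma sum_Icc_moebius_sq (N : ℕ) :
    ∑ n ∈ Icc 1 N, μ n ^ 2 = ∑ d ∈ Icc 1 N.sqrt, μ d * (N / d ^ 2 : ℕ) := by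
  have hdiv : ∀ n ∈ Icc 1 N,
      (Nat.floorRoot 2 n).divisors = {d ∈ Icc 1 N.sqrt | d ^ 2 ∣ n} := by
    intro n hn
    rw [mem_Icc] at hn
    ext d
    simp only [Nat.mem_divisors, mem_filter, mem_Icc, ← Nat.pow_dvd_iff_dvd_floorRoot,
      Nat.floorRoot_ne_zero]
    constructor
    · rintro ⟨hd, -⟩
      have hd0 : d ≠ 0 := by rintro rfl; simp at hd; omega
      exact ⟨⟨by omega, Nat.le_sqrt'.mpr ((Nat.le_of_dvd (by omega) hd).trans hn.2)⟩, hd⟩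
    · exact fun h => ⟨h.2, two_ne_zero, by omega⟩
  rw [← sum_congr rfl fun n hn => (hdiv n hn ▸ sum_divisors_floorRoot_two_moebius n)]
  simp_rw [sum_filter]
  rw [sum_comm]
  refine sum_congr rfl fun d _ => ?_
  rw [← sum_filter, sum_const, show Icc 1 N = Ioc 0 N from Icc_add_one_left_eq_Ioc 0 N,
    Nat.Ioc_filter_dvd_card_eq_div, nsmul_eq_mul, mul_comm]

lemma abs_natCast_div_sub_div_le_one (N q : ℕ) : |((N / q : ℕ) : ℝ) - N / q| ≤ 1 := by
  rw [← Nat.floor_div_eq_div (K := ℝ), abs_sub_comm, abs_of_nonneg (sub_nonneg.mpr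
    (Nat.floor_le (by positivity)))]
  linarith [Nat.lt_floor_add_one ((N : ℝ) / q)]

lemma abs_sum_Icc_moebius_sq_sub_le (N : ℕ) :
    |∑ n ∈ Icc 1 N, (μ n : ℝ) ^ 2 - N * ∑ d ∈ Icc 1 N.sqrt, (μ d : ℝ) / d ^ 2| ≤ N.sqrt := by
  have hcount : ∑ n ∈ Icc 1 N, (μ n : ℝ) ^ 2 =
      ∑ d ∈ Icc 1 N.sqrt, (μ d : ℝ) * (N / d ^ 2 : ℕ) := by
    have h := congrArg (Int.cast : ℤ → ℝ) (sum_Icc_moebius_sq N)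
    push_cast at h
    exact h
  rw [hcount, mul_sum, ← sum_sub_distrib]
  calc _ ≤ ∑ d ∈ Icc 1 N.sqrt, (1 : ℝ) := by
        refine (abs_sum_le_sum_abs _ _).trans (sum_le_sum fun d _ => ?_)
        have hμ : |(μ d : ℝ)| ≤ 1 := by exact_mod_cast abs_moebius_le_one
        rw [show (μ d : ℝ) * (N / d ^ 2 : ℕ) - N * ((μ d : ℝ) / d ^ 2) =
            μ d * ((N / d ^ 2 : ℕ) - (N : ℝ) / (d ^ 2 : ℕ)) by push_cast; ring, abs_mul]
        exact mul_le_one₀ hμ (abs_nonneg _) (abs_natCast_div_sub_div_le_one _ _)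
    _ = N.sqrt := by simp

lemma tendsto_nat_sqrt_atTop : Tendsto Nat.sqrt atTop atTop :=
  tendsto_atTop_atTop.mpr fun M => ⟨M * M, fun _ hN => Nat.le_sqrt.mpr hN⟩

lemma tendsto_nat_sqrt_div_atTop : Tendsto (fun N : ℕ => (N.sqrt : ℝ) / N) atTop (𝓝 0) := by
  refine squeeze_zero (fun N => by positivity) (fun N => ?_)
    (tendsto_inv_atTop_zero.comp (tendsto_natCast_atTop_atTop.comp tendsto_nat_sqrt_atTop))
  rcases Nat.eq_zero_or_pos N.sqrt with h | h
  · simp [h]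
  have hN : (N.sqrt : ℝ) * N.sqrt ≤ N := by exact_mod_cast Nat.sqrt_le N
  have hpos : (0 : ℝ) < N.sqrt := by exact_mod_cast h
  rw [Function.comp_apply, Function.comp_apply, div_le_iff₀ (by nlinarith), inv_mul_eq_div,
    le_div_iff₀ hpos]
  exact hN

theorem tendsto_inv_mul_sum_moebius_sq :
    Tendsto (fun N : ℕ => (N : ℝ)⁻¹ * ∑ n ∈ Icc 1 N, (μ n : ℝ) ^ 2) atTop
      (𝓝 (6 / Real.pi ^ 2)) := by
  have hpartial : Tendsto (fun M => ∑ d ∈ Icc 1 M, (μ d : ℝ) / d ^ 2) atTop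
      (𝓝 (6 / Real.pi ^ 2)) := by
    refine (hasSum_moebius_div_sq.tendsto_sum_nat.comp (tendsto_add_atTop_nat 1)).congr
      fun M => ?_
    rw [Function.comp_apply, sum_range_succ', ← Ico_add_one_right_eq_Icc, sum_Ico_eq_sum_range]
    simp [add_comm]
  refine (hpartial.comp tendsto_nat_sqrt_atTop).congr_dist ?_
  refine squeeze_zero (fun N => dist_nonneg) (fun N => ?_) tendsto_nat_sqrt_div_atTop
  rcases Nat.eq_zero_or_pos N with rfl | hN
  · simp
  have hN' : (0 : ℝ) < N := by exact_mod_cast hN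
  rw [Function.comp_apply, dist_comm, Real.dist_eq,
    ← inv_mul_cancel_left₀ hN'.ne' (∑ d ∈ Icc 1 N.sqrt, (μ d : ℝ) / d ^ 2), ← mul_sub, abs_mul,
    abs_of_pos (inv_pos.2 hN'), inv_mul_eq_div, div_le_div_iff_of_pos_right hN']
  exact abs_sum_Icc_moebius_sq_sub_le N

def uncovered (p b : ℕ → ℕ) (k : ℕ) : Set ℕ :=
  {n | 1 ≤ n ∧ ∀ j, 1 ≤ j → j ≤ k → ¬∃ m, n = b j + m * p j}

section GreedyProgressions

variable {p b : ℕ → ℕ}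

lemma uncovered_succ_subset (k : ℕ) : uncovered p b (k + 1) ⊆ uncovered p b k :=
  fun _ hn => ⟨hn.1, fun j hj hjk => hn.2 j hj (by omega)⟩

lemma not_mem_uncovered {k : ℕ} (hk : 1 ≤ k) : b k ∉ uncovered p b k :=
  fun h => h.2 k hk le_rfl ⟨0, by simp⟩

lemma lt_succ_of_isLeast_uncovered (hb1 : b 1 = 1)
    (hb : ∀ k, 1 ≤ k → IsLeast (uncovered p b k) (b (k + 1))) {k : ℕ} (hk : 1 ≤ k) :
    b k < b (k + 1) := by
  have hle : b k ≤ b (k + 1) := by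
    obtain ⟨j, rfl⟩ : ∃ j, k = j + 1 := ⟨k - 1, by omega⟩
    rcases Nat.eq_zero_or_pos j with rfl | hj
    · simpa [hb1] using (hb 1 le_rfl).1.1
    · exact (hb j hj).2 (uncovered_succ_subset j (hb (j + 1) hk).1)
  exact hle.lt_of_ne fun h => not_mem_uncovered hk (h ▸ (hb k hk).1)

lemma le_of_isLeast_uncovered (hb1 : b 1 = 1)
    (hb : ∀ k, 1 ≤ k → IsLeast (uncovered p b k) (b (k + 1))) {k : ℕ} (hk : 1 ≤ k) :
    k ≤ b k := by
  induction k, hk using Nat.le_induction with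
  | base => exact hb1.ge
  | succ k hk ih => exact ih.trans_lt (lt_succ_of_isLeast_uncovered hb1 hb hk)

lemma exists_mem_progression (hb1 : b 1 = 1)
    (hb : ∀ k, 1 ≤ k → IsLeast (uncovered p b k) (b (k + 1))) {n : ℕ} (hn : 1 ≤ n) :
    ∃ k, 1 ≤ k ∧ k ≤ n ∧ ∃ m, n = b k + m * p k := by
  have hlt : n < b (n + 1) := le_of_isLeast_uncovered hb1 hb (Nat.le_add_left 1 n)
  have hnot : n ∉ uncovered p b n := fun h => hlt.not_ge ((hb n hn).2 h)
  simp only [uncovered, Set.mem_ofPred_eq, not_and, not_forall, not_not] at hnot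
  obtain ⟨k, hk, hkn, hmem⟩ := hnot hn
  exact ⟨k, hk, hkn, hmem⟩

end GreedyProgressions

section DivisibilityChain

variable {p : ℕ → ℕ}

lemma two_mul_le_of_dvd_chain (hpmono : ∀ k, 1 ≤ k → p k < p (k + 1))
    (hpdvd : ∀ k, 1 ≤ k → p k ∣ p (k + 1)) {k : ℕ} (hk : 1 ≤ k) : 2 * p k ≤ p (k + 1) := by
  obtain ⟨c, hc⟩ := hpdvd k hk
  have hlt := hpmono k hk
  rw [hc] at hlt ⊢
  rcases c with _ | _ | c
  · simp at hlt
  · simp at hlt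
  · nlinarith

lemma pos_of_dvd_chain (hpmono : ∀ k, 1 ≤ k → p k < p (k + 1))
    (hpdvd : ∀ k, 1 ≤ k → p k ∣ p (k + 1)) {k : ℕ} (hk : 1 ≤ k) :
    0 < p k := by
  refine Nat.pos_of_ne_zero fun h => ?_
  have hzero := hpdvd k hk
  rw [h, zero_dvd_iff] at hzero
  simpa [h, hzero] using hpmono k hk

lemma two_pow_le_of_dvd_chain (hpmono : ∀ k, 1 ≤ k → p k < p (k + 1))
    (hpdvd : ∀ k, 1 ≤ k → p k ∣ p (k + 1)) (k : ℕ) : 2 ^ k ≤ p (k + 1) := by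
  induction k with
  | zero => exact pos_of_dvd_chain hpmono hpdvd le_rfl
  | succ k ih =>
    rw [pow_succ']
    exact (Nat.mul_le_mul_left 2 ih).trans
      (two_mul_le_of_dvd_chain hpmono hpdvd (Nat.le_add_left 1 k))

lemma summable_one_div_of_dvd_chain (hpmono : ∀ k, 1 ≤ k → p k < p (k + 1))
    (hpdvd : ∀ k, 1 ≤ k → p k ∣ p (k + 1)) :
    Summable fun k => (1 : ℝ) / p (k + 1) := by
  refine summable_geometric_two.of_nonneg_of_le (fun k => by positivity) fun k => ?_
  rw [one_div_pow]
  have : (2 : ℝ) ^ k ≤ p (k + 1) := by exact_mod_cast two_pow_le_of_dvd_chain hpmono hpdvd k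
  exact one_div_le_one_div_of_le (by positivity) this

end DivisibilityChain

open scoped Classical in
lemma card_filter_mem_progression_le (N a q : ℕ) (hq : 0 < q) :
    #{n ∈ Icc 1 N | ∃ m, 1 ≤ m ∧ n = a + m * q} ≤ N / q := by
  calc _ ≤ #((Icc 1 (N / q)).image fun m => a + m * q) := card_le_card fun n hn => by
        simp only [mem_filter, mem_Icc] at hn
        obtain ⟨⟨-, hnN⟩, m, hm, rfl⟩ := hn
        exact mem_image.mpr ⟨m, mem_Icc.mpr ⟨hm, (Nat.le_div_iff_mul_le hq).mpr (by omega)⟩, rfl⟩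
    _ ≤ #(Icc 1 (N / q)) := card_image_le
    _ = N / q := by simp

lemma inv_mul_sum_Icc_le_one {f : ℕ → ℝ} {N : ℕ} (hf : ∀ n ∈ Icc 1 N, f n ≤ 1) :
    (N : ℝ)⁻¹ * ∑ n ∈ Icc 1 N, f n ≤ 1 := by
  rcases N.eq_zero_or_pos with rfl | hN
  · simp
  have hsum : ∑ n ∈ Icc 1 N, f n ≤ N := by simpa using sum_le_card_nsmul _ f 1 hf
  rwa [inv_mul_le_iff₀ (by positivity), mul_one]

lemma sum_Icc_div_le_mul_tsum {p : ℕ → ℕ} (hsum : Summable fun k => (1 : ℝ) / p (k + 1))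
    (N M : ℕ) : ∑ k ∈ Icc 1 M, ((N / p k : ℕ) : ℝ) ≤ N * ∑' k, (1 : ℝ) / p (k + 1) := by
  calc ∑ k ∈ Icc 1 M, ((N / p k : ℕ) : ℝ) ≤ ∑ k ∈ Icc 1 M, N * (1 / (p k : ℝ)) :=
        sum_le_sum fun k _ => Nat.cast_div_le.trans_eq (mul_one_div _ _).symm
    _ = N * ∑ k ∈ range M, (1 : ℝ) / p (k + 1) := by
        rw [← mul_sum, ← Ico_add_one_right_eq_Icc, sum_Ico_eq_sum_range]
        simp only [add_comm, Nat.add_sub_cancel]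
    _ ≤ N * ∑' k, (1 : ℝ) / p (k + 1) := by
        gcongr
        exact hsum.sum_le_tsum _ fun _ _ => by positivity

section ProgressionSequence

variable {p b : ℕ → ℕ} {x : ℕ → ℤ}

lemma abs_mul_moebius_le_one_s6
    (hcover : ∀ n, 1 ≤ n → ∃ k, 1 ≤ k ∧ k ≤ n ∧ ∃ m, n = b k + m * p k)
    (hx : ∀ k, 1 ≤ k → ∀ m, x (b k + m * p k) = μ (b k)) {n : ℕ} (hn : 1 ≤ n) :
    |(x n : ℝ) * μ n| ≤ 1 := by
  have hμ : ∀ d, |(μ d : ℝ)| ≤ 1 := fun d => by exact_mod_cast abs_moebius_le_one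
  obtain ⟨k, hk, -, m, rfl⟩ := hcover n hn
  rw [hx k hk m, abs_mul]
  exact mul_le_one₀ (hμ _) (abs_nonneg _) (hμ _)

lemma exists_period_of_mem_progression (hp : ∀ k, 1 ≤ k → 0 < p k)
    (hcover : ∀ n, 1 ≤ n → ∃ k, 1 ≤ k ∧ k ≤ n ∧ ∃ m, n = b k + m * p k)
    (hx : ∀ k, 1 ≤ k → ∀ m, x (b k + m * p k) = μ (b k)) {n : ℕ} (hn : 1 ≤ n) :
    ∃ q, 1 ≤ q ∧ ∀ m, x (n + m * q) = x n := by
  obtain ⟨k, hk, -, m, rfl⟩ := hcover n hn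
  refine ⟨p k, hp k hk, fun m' => ?_⟩
  rw [add_assoc, ← add_mul, hx k hk, hx k hk]

lemma sum_moebius_sq_sub_le_sum_mul_moebius (hp : ∀ k, 1 ≤ k → 0 < p k)
    (hcover : ∀ n, 1 ≤ n → ∃ k, 1 ≤ k ∧ k ≤ n ∧ ∃ m, n = b k + m * p k)
    (hx : ∀ k, 1 ≤ k → ∀ m, x (b k + m * p k) = μ (b k))
    (hsum : Summable fun k => (1 : ℝ) / p (k + 1)) (N : ℕ) :
    ∑ n ∈ Icc 1 N, (μ n : ℝ) ^ 2 - 2 * (N * ∑' k, (1 : ℝ) / p (k + 1)) ≤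
      ∑ n ∈ Icc 1 N, (x n : ℝ) * μ n := by
  classical
  let r : ℕ → ℕ → Prop := fun n k => ∃ m, 1 ≤ m ∧ n = b k + m * p k
  have hpoint : ∀ n ∈ Icc 1 N,
      (μ n : ℝ) ^ 2 - x n * μ n ≤ 2 * #((Icc 1 N).bipartiteAbove r n) := by
    intro n hn
    rw [mem_Icc] at hn
    obtain ⟨k, hk, hkn, m, hnk⟩ := hcover n hn.1
    rcases Nat.eq_zero_or_pos m with rfl | hm
    · have hxn : x n = μ n := by simpa [hnk] using hx k hk 0
      simp [hxn, sq]
    · have hcard : 1 ≤ #((Icc 1 N).bipartiteAbove r n) :=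
        card_pos.mpr ⟨k, mem_filter.mpr ⟨mem_Icc.mpr ⟨hk, hkn.trans hn.2⟩, m, hm, hnk⟩⟩
      have hμ : (μ n : ℝ) ^ 2 ≤ 1 := by
        exact_mod_cast (sq_le_one_iff_abs_le_one _).mpr abs_moebius_le_one
      have hxμ := (abs_le.mp (abs_mul_moebius_le_one_s6 hcover hx hn.1)).1
      have hcard' : (1 : ℝ) ≤ #((Icc 1 N).bipartiteAbove r n) := by exact_mod_cast hcard
      linarith
  have hcount : ∑ n ∈ Icc 1 N, #((Icc 1 N).bipartiteAbove r n) ≤ ∑ k ∈ Icc 1 N, N / p k := by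
    rw [sum_card_bipartiteAbove_eq_sum_card_bipartiteBelow]
    exact sum_le_sum fun k hk =>
      card_filter_mem_progression_le N (b k) (p k) (hp k (mem_Icc.mp hk).1)
  have hcount' : ∑ n ∈ Icc 1 N, (#((Icc 1 N).bipartiteAbove r n) : ℝ) ≤
      ∑ k ∈ Icc 1 N, ((N / p k : ℕ) : ℝ) := by exact_mod_cast hcount
  have hsum_point := sum_le_sum hpoint
  rw [sum_sub_distrib, ← mul_sum] at hsum_point
  linarith [sum_Icc_div_le_mul_tsum hsum N N]

end ProgressionSequence

theorem toeplitz_strongly_correlated_with_moebius_general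
    (p : ℕ → ℕ)
    (hpmono : ∀ k : ℕ, 1 ≤ k → p k < p (k + 1))
    (hpdvd : ∀ k : ℕ, 1 ≤ k → p k ∣ p (k + 1))
    -- ρ = ∑_{k ≥ 1} 1/p_k < 3/π²
    (hρ : (∑' k : ℕ, (1 : ℝ) / p (k + 1)) < 3 / Real.pi ^ 2)
    -- b_1 = 1 and b_{k+1} is the least positive integer not in the first k progressions
    (b : ℕ → ℕ) (hb1 : b 1 = 1)
    (hbrec : ∀ k : ℕ, 1 ≤ k → IsLeast
      {n : ℕ | 1 ≤ n ∧ ∀ j : ℕ, 1 ≤ j → j ≤ k → ¬∃ m : ℕ, n = b j + m * p j} (b (k + 1)))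
    -- x(n) = μ(b_k) for n in the k-th progression
    (x : ℕ → ℤ)
    (hx : ∀ k : ℕ, 1 ≤ k → ∀ m : ℕ, x (b k + m * p k) = ArithmeticFunction.moebius (b k)) :
    -- x is regularly recurrent
    (∀ n : ℕ, 1 ≤ n → ∃ q : ℕ, 1 ≤ q ∧ ∀ m : ℕ, x (n + m * q) = x n) ∧
    -- and strongly correlated with the Möbius function
    6 / Real.pi ^ 2 - 2 * (∑' k : ℕ, (1 : ℝ) / p (k + 1)) ≤
      Filter.liminf (fun N : ℕ =>
        (N : ℝ)⁻¹ * ∑ n ∈ Finset.Icc 1 N,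
          (x n : ℝ) * (ArithmeticFunction.moebius n : ℝ)) atTop ∧
    0 < Filter.liminf (fun N : ℕ =>
        (N : ℝ)⁻¹ * ∑ n ∈ Finset.Icc 1 N,
          (x n : ℝ) * (ArithmeticFunction.moebius n : ℝ)) atTop := by
  have hp : ∀ k, 1 ≤ k → 0 < p k := fun k => pos_of_dvd_chain hpmono hpdvd
  have hcover : ∀ n, 1 ≤ n → ∃ k, 1 ≤ k ∧ k ≤ n ∧ ∃ m, n = b k + m * p k :=
    fun n => exists_mem_progression hb1 hbrec
  have hsum := summable_one_div_of_dvd_chain hpmono hpdvd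
  set ρ := ∑' k : ℕ, (1 : ℝ) / p (k + 1)
  have hlower : ∀ᶠ N : ℕ in atTop, (N : ℝ)⁻¹ * ∑ n ∈ Icc 1 N, (μ n : ℝ) ^ 2 - 2 * ρ ≤
      (N : ℝ)⁻¹ * ∑ n ∈ Icc 1 N, (x n : ℝ) * μ n := by
    filter_upwards [eventually_gt_atTop 0] with N hN
    have hN : (0 : ℝ) < N := Nat.cast_pos.mpr hN
    have h := sum_moebius_sq_sub_le_sum_mul_moebius hp hcover hx hsum N
    rw [← mul_le_mul_iff_of_pos_left hN, mul_sub, mul_inv_cancel_left₀ hN.ne',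
      mul_inv_cancel_left₀ hN.ne']
    linarith
  have hupper : ∀ N : ℕ, (N : ℝ)⁻¹ * ∑ n ∈ Icc 1 N, (x n : ℝ) * μ n ≤ 1 := fun N =>
    inv_mul_sum_Icc_le_one fun n hn =>
      (le_abs_self _).trans (abs_mul_moebius_le_one_s6 hcover hx (mem_Icc.mp hn).1)
  have hlim := tendsto_inv_mul_sum_moebius_sq.sub_const (2 * ρ)
  have hliminf : 6 / Real.pi ^ 2 - 2 * ρ ≤ liminf (fun N : ℕ =>
      (N : ℝ)⁻¹ * ∑ n ∈ Icc 1 N, (x n : ℝ) * μ n) atTop :=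
    hlim.liminf_eq ▸ liminf_le_liminf hlower hlim.isBoundedUnder_ge
      (isCoboundedUnder_ge_of_le _ hupper)
  have hpos : 0 < 6 / Real.pi ^ 2 - 2 * ρ := by
    linarith [show 6 / Real.pi ^ 2 = 2 * (3 / Real.pi ^ 2) by ring]
  exact ⟨fun n => exists_period_of_mem_progression hp hcover hx, hliminf,
    hpos.trans_le hliminf⟩

/-- For the Toeplitz sequence obtained by placing the value `μ(b_k)` along the
arithmetic progression `{b_k + m p_k : m ≥ 0}` (the scheme of Lemańczyk et al.), where
`ρ = ∑_k 1/p_k < 3/π²`, the resulting sequence `x` is regularly recurrent and strongly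
correlated with the Möbius function: `liminf (1/N) ∑_{n≤N} x(n) μ(n) ≥ 6/π² − 2ρ > 0`. -/
theorem toeplitz_strongly_correlated_with_moebius
    (p : ℕ → ℕ)
    (hp1 : 3 ≤ p 1)
    (hpmono : ∀ k : ℕ, 1 ≤ k → p k < p (k + 1))
    (hpdvd : ∀ k : ℕ, 1 ≤ k → p k ∣ p (k + 1))
    -- ρ = ∑_{k ≥ 1} 1/p_k < 3/π²
    (hρ : (∑' k : ℕ, (1 : ℝ) / p (k + 1)) < 3 / Real.pi ^ 2)
    -- b_1 = 1 and b_{k+1} is the least positive integer not in the first k progressions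
    (b : ℕ → ℕ) (hb1 : b 1 = 1)
    (hbrec : ∀ k : ℕ, 1 ≤ k → IsLeast
      {n : ℕ | 1 ≤ n ∧ ∀ j : ℕ, 1 ≤ j → j ≤ k → ¬∃ m : ℕ, n = b j + m * p j} (b (k + 1)))
    -- x(n) = μ(b_k) for n in the k-th progression
    (x : ℕ → ℤ)
    (hx : ∀ k : ℕ, 1 ≤ k → ∀ m : ℕ, x (b k + m * p k) = ArithmeticFunction.moebius (b k)) :
    -- x is regularly recurrent
    (∀ n : ℕ, 1 ≤ n → ∃ q : ℕ, 1 ≤ q ∧ ∀ m : ℕ, x (n + m * q) = x n) ∧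
    -- and strongly correlated with the Möbius function
    6 / Real.pi ^ 2 - 2 * (∑' k : ℕ, (1 : ℝ) / p (k + 1)) ≤
      Filter.liminf (fun N : ℕ =>
        (N : ℝ)⁻¹ * ∑ n ∈ Finset.Icc 1 N,
          (x n : ℝ) * (ArithmeticFunction.moebius n : ℝ)) atTop ∧
    0 < Filter.liminf (fun N : ℕ =>
        (N : ℝ)⁻¹ * ∑ n ∈ Finset.Icc 1 N,
          (x n : ℝ) * (ArithmeticFunction.moebius n : ℝ)) atTop :=
  toeplitz_strongly_correlated_with_moebius_general p hpmono hpdvd hρ b hb1 hbrec x hx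
end

section
/- For every k ≥ 1, the number of n ∈ {1, …, p_k} with z(n) = 0 equals ∑_{j=1}^{k−1} (p_k/p_j − 1). Consequently the frequency of zeros of z in {1, …, p_k} equals (∑_{j=1}^{k−1} 1/p_j) − (k−1)/p_k, which is strictly less than ρ for every k and converges to ρ as k → ∞. -/
open Classical Filter Topology

lemma ap_count (a q N : ℕ) (ha : 1 ≤ a) (haq : a ≤ q) (hqN : q ∣ N) :
    ((Finset.Icc 1 N).filter (fun n => ∃ m : ℕ, n = a + m * q)).card = N / q := by
  have hq : 0 < q := ha.trans haq
  have hset : ((Finset.Icc 1 N).filter (fun n => ∃ m : ℕ, n = a + m * q))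
      = (Finset.range (N / q)).image (fun m => a + m * q) := by
    ext n
    simp only [Finset.mem_filter, Finset.mem_Icc, Finset.mem_image, Finset.mem_range]
    constructor
    · rintro ⟨⟨h1, h2⟩, m, rfl⟩
      refine ⟨m, ?_, rfl⟩
      by_contra hm
      push_neg at hm
      have : N ≤ m * q := by
        calc N = N / q * q := (Nat.div_mul_cancel hqN).symm
        _ ≤ m * q := Nat.mul_le_mul_right q hm
      omega
    · rintro ⟨m, hm, rfl⟩
      have : (m + 1) * q ≤ N / q * q := Nat.mul_le_mul_right q hm
      rw [Nat.div_mul_cancel hqN, Nat.succ_mul] at this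
      constructor
      · omega
      · exact ⟨m, rfl⟩
  rw [hset, Finset.card_image_of_injective _ (fun x y hxy =>
    Nat.eq_of_mul_eq_mul_right hq (by omega : x * q = y * q)),
    Finset.card_range]

lemma ap_count' (a q N : ℕ) (ha : 1 ≤ a) (haq : a ≤ q) (hqN : q ∣ N) (hN : 0 < N) :
    ((Finset.Icc 1 N).filter (fun n => ∃ m : ℕ, 1 ≤ m ∧ n = a + m * q)).card = N / q - 1 := by
  have hq : 0 < q := ha.trans haq
  have hqle : q ≤ N := Nat.le_of_dvd hN hqN
  have hset : ((Finset.Icc 1 N).filter (fun n => ∃ m : ℕ, 1 ≤ m ∧ n = a + m * q))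
      = ((Finset.Icc 1 N).filter (fun n => ∃ m : ℕ, n = a + m * q)).erase a := by
    ext n
    simp only [Finset.mem_filter, Finset.mem_erase, Finset.mem_Icc]
    constructor
    · rintro ⟨h1, m, hm, rfl⟩
      exact ⟨by nlinarith, h1, m, rfl⟩
    · rintro ⟨hne, h1, m, rfl⟩
      refine ⟨h1, m, ?_, rfl⟩
      rcases Nat.eq_zero_or_pos m with h | h
      · subst h; simp at hne
      · exact h
  have hmem : a ∈ (Finset.Icc 1 N).filter (fun n => ∃ m : ℕ, n = a + m * q) := by
    simp only [Finset.mem_filter, Finset.mem_Icc]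
    exact ⟨⟨ha, haq.trans hqle⟩, 0, by omega⟩
  rw [hset, Finset.card_erase_of_mem hmem, ap_count a q N ha haq hqN]

/-- For the indicator `z` of the set of "initials" `{b_k}`, the number of zeros
of `z` in `{1, …, p_k}` equals `∑_{j=1}^{k−1} (p_k/p_j − 1)`; hence the frequency of zeros in
`{1, …, p_k}` equals `(∑_{j=1}^{k−1} 1/p_j) − (k−1)/p_k`, is strictly less than `ρ`, and
converges to `ρ` as `k → ∞`. -/
theorem frequency_of_zeros_in_initial_blocks
    (p : ℕ → ℕ)
    (hp1 : 3 ≤ p 1)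
    (hpmono : ∀ k : ℕ, 1 ≤ k → p k < p (k + 1))
    (hpdvd : ∀ k : ℕ, 1 ≤ k → p k ∣ p (k + 1))
    (b : ℕ → ℕ) (hb1 : b 1 = 1)
    (hbrec : ∀ k : ℕ, 1 ≤ k → IsLeast
      {n : ℕ | 1 ≤ n ∧ ∀ j : ℕ, 1 ≤ j → j ≤ k → ¬∃ m : ℕ, n = b j + m * p j} (b (k + 1)))
    (z : ℕ → ℕ)
    (hz : ∀ n : ℕ, (z n = 1 ↔ ∃ k : ℕ, 1 ≤ k ∧ b k = n) ∧ (z n = 1 ∨ z n = 0)) :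
    ∀ k : ℕ, 1 ≤ k →
      -- exact count of zeros in {1, …, p_k}
      ((Finset.Icc 1 (p k)).filter (fun n => z n = 0)).card
        = ∑ j ∈ Finset.Icc 1 (k - 1), (p k / p j - 1) ∧
      -- the frequency of zeros in {1, …, p_k}
      (((Finset.Icc 1 (p k)).filter (fun n => z n = 0)).card : ℝ) / (p k : ℝ)
        = (∑ j ∈ Finset.Icc 1 (k - 1), (1 : ℝ) / p j) - ((k : ℝ) - 1) / p k ∧
      -- it is strictly less than ρ
      (((Finset.Icc 1 (p k)).filter (fun n => z n = 0)).card : ℝ) / (p k : ℝ)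
        < ∑' j : ℕ, (1 : ℝ) / p (j + 1) ∧
      -- and it converges to ρ as k → ∞
      Tendsto (fun k : ℕ =>
          (((Finset.Icc 1 (p k)).filter (fun n => z n = 0)).card : ℝ) / (p k : ℝ))
        atTop (𝓝 (∑' j : ℕ, (1 : ℝ) / p (j + 1))) := by
  -- basic facts about p
  have hppos : ∀ k, 1 ≤ k → 0 < p k := by
    intro k hk
    induction k, hk using Nat.le_induction with
    | base => omega
    | succ n hn ih => exact ih.trans (hpmono n hn)
  have hple : ∀ j k, 1 ≤ j → j ≤ k → p j ≤ p k := by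
    intro j k hj hjk
    induction k, hjk using Nat.le_induction with
    | base => exact le_rfl
    | succ n hn ih => exact ih.trans (hpmono n (hj.trans hn)).le
  have hplt : ∀ j k, 1 ≤ j → j < k → p j < p k := fun j k hj hjk =>
    (hpmono j hj).trans_le (hple (j + 1) k (by omega) hjk)
  have hdvd2 : ∀ j k, 1 ≤ j → j ≤ k → p j ∣ p k := by
    intro j k hj hjk
    induction k, hjk using Nat.le_induction with
    | base => exact dvd_rfl
    | succ n hn ih => exact ih.trans (hpdvd n (hj.trans hn))
  have hdouble : ∀ k, 1 ≤ k → 2 * p k ≤ p (k + 1) := by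
    intro k hk
    obtain ⟨c, hc⟩ := hpdvd k hk
    have h1 := hpmono k hk
    have h0 := hppos k hk
    have hc2 : 2 ≤ c := by
      by_contra h
      push_neg at h
      interval_cases c <;> omega
    calc 2 * p k = p k * 2 := mul_comm _ _
    _ ≤ p k * c := Nat.mul_le_mul_left _ hc2
    _ = p (k + 1) := hc.symm
  have hpow2 : ∀ k, 1 ≤ k → 2 ^ k ≤ p k := by
    intro k hk
    induction k, hk using Nat.le_induction with
    | base => omega
    | succ n hn ih =>
      calc 2 ^ (n + 1) = 2 * 2 ^ n := by ring
      _ ≤ 2 * p n := by omega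
      _ ≤ p (n + 1) := hdouble n hn
  -- the covering-sum bound
  have hcovsum : ∀ k, 1 ≤ k → (∑ j ∈ Finset.Icc 1 k, p k / p j) < p k := by
    intro k hk
    induction k, hk using Nat.le_induction with
    | base =>
      rw [Finset.Icc_self, Finset.sum_singleton, Nat.div_self (hppos 1 le_rfl)]
      omega
    | succ n hn ih =>
      obtain ⟨c, hc⟩ := hpdvd n hn
      have h0 := hppos n hn
      have hc2 : 2 ≤ c := by
        have := hdouble n hn
        rw [hc] at this
        by_contra h
        push_neg at h
        interval_cases c <;> omega
      rw [Finset.sum_Icc_succ_top (by omega : 1 ≤ n + 1)]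
      have hterm : ∀ j ∈ Finset.Icc 1 n, p (n + 1) / p j = c * (p n / p j) := by
        intro j hj
        simp only [Finset.mem_Icc] at hj
        rw [hc, mul_comm (p n) c, Nat.mul_div_assoc c (hdvd2 j n hj.1 hj.2)]
      rw [Finset.sum_congr rfl hterm, ← Finset.mul_sum, Nat.div_self (hppos (n + 1) (by omega))]
      have hmul : c * ((∑ j ∈ Finset.Icc 1 n, p n / p j) + 1) ≤ c * p n :=
        Nat.mul_le_mul_left _ ih
      rw [Nat.mul_add] at hmul
      rw [hc]
      have : p n * c = c * p n := mul_comm _ _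
      omega
  -- bounds on b
  have hbb : ∀ k : ℕ, ∀ j, 1 ≤ j → j ≤ k → 1 ≤ b j ∧ b j ≤ p j := by
    intro k
    induction k with
    | zero => omega
    | succ n ih =>
      intro j hj hjn
      rcases Nat.lt_or_ge j (n + 1) with h | h
      on_goal 2 => have hje : j = n + 1 := by omega
      on_goal 2 => subst hje
      · exact ih j hj (by omega)
      · rcases Nat.eq_zero_or_pos n with rfl | hn
        · show 1 ≤ b 1 ∧ b 1 ≤ p 1
          rw [hb1]
          exact ⟨le_rfl, by omega⟩
        · obtain ⟨⟨hmem1, hmem2⟩, hlb⟩ := hbrec n hn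
          refine ⟨hmem1, ?_⟩
          -- the covered set has cardinality < p n
          set C := (Finset.Icc 1 (p n)).filter
            (fun x => ∃ i, 1 ≤ i ∧ i ≤ n ∧ ∃ m, x = b i + m * p i) with hC
          have hsub : C ⊆ (Finset.Icc 1 n).biUnion
              (fun i => (Finset.Icc 1 (p n)).filter (fun x => ∃ m, x = b i + m * p i)) := by
            intro x hx
            simp only [hC, Finset.mem_filter, Finset.mem_biUnion, Finset.mem_Icc] at hx ⊢
            obtain ⟨hx1, i, hi1, hi2, hm⟩ := hx
            exact ⟨i, ⟨hi1, hi2⟩, hx1, hm⟩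
          have hcard : C.card < p n := by
            calc C.card ≤ _ := Finset.card_le_card hsub
            _ ≤ ∑ i ∈ Finset.Icc 1 n, ((Finset.Icc 1 (p n)).filter
                (fun x => ∃ m, x = b i + m * p i)).card := Finset.card_biUnion_le
            _ = ∑ i ∈ Finset.Icc 1 n, p n / p i := by
                refine Finset.sum_congr rfl fun i hi => ?_
                simp only [Finset.mem_Icc] at hi
                obtain ⟨hbi1, hbi2⟩ := ih i hi.1 hi.2
                exact ap_count _ _ _ hbi1 hbi2 (hdvd2 i n hi.1 hi.2)
            _ < p n := hcovsum n hn
          have : ∃ x ∈ Finset.Icc 1 (p n), x ∉ C := by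
            by_contra h
            push_neg at h
            have : Finset.Icc 1 (p n) ⊆ C := by
              intro x hx
              exact h x hx
            have := Finset.card_le_card this
            rw [Nat.card_Icc] at this
            omega
          obtain ⟨x, hx, hxC⟩ := this
          simp only [Finset.mem_Icc] at hx
          simp only [hC, Finset.mem_filter, Finset.mem_Icc, not_and, not_exists] at hxC
          have hxmem : x ∈ {n' : ℕ | 1 ≤ n' ∧ ∀ j, 1 ≤ j → j ≤ n → ¬∃ m, n' = b j + m * p j} := by
            refine ⟨hx.1, fun i hi1 hi2 hex => ?_⟩
            obtain ⟨m, hm⟩ := hex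
            exact (hxC ⟨hx.1, hx.2⟩) i hi1 hi2 m hm
          calc b (n + 1) ≤ x := hlb hxmem
          _ ≤ p n := hx.2
          _ ≤ p (n + 1) := (hpmono n hn).le
  have hbb' : ∀ j, 1 ≤ j → 1 ≤ b j ∧ b j ≤ p j := fun j hj => hbb j j hj le_rfl
  -- b is strictly increasing
  have hbmono : ∀ k, 1 ≤ k → b k < b (k + 1) := by
    intro k hk
    obtain ⟨⟨h1, h2⟩, hlb⟩ := hbrec k hk
    have hne : b (k + 1) ≠ b k := by
      intro h
      exact h2 k hk le_rfl ⟨0, by omega⟩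
    rcases Nat.eq_or_lt_of_le hk with h | h
    · -- k = 1
      subst h
      rw [hb1] at hne ⊢
      omega
    · -- k ≥ 2
      obtain ⟨t, rfl⟩ : ∃ t, k = t + 1 := ⟨k - 1, by omega⟩
      have ht : 1 ≤ t := by omega
      have hmem : b (t + 1 + 1) ∈ {n : ℕ | 1 ≤ n ∧ ∀ j, 1 ≤ j → j ≤ t →
          ¬∃ m, n = b j + m * p j} :=
        ⟨h1, fun j hj1 hj2 => h2 j hj1 (by omega)⟩
      exact lt_of_le_of_ne ((hbrec t ht).2 hmem) (Ne.symm hne)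
  have hbge : ∀ k, 1 ≤ k → k ≤ b k := by
    intro k hk
    induction k, hk using Nat.le_induction with
    | base => omega
    | succ n hn ih => have := hbmono n hn; omega
  -- every positive integer is covered by some progression
  have hcover : ∀ n, 1 ≤ n → ∃ j, 1 ≤ j ∧ ∃ m, n = b j + m * p j := by
    intro n hn
    by_contra h
    push_neg at h
    have hmem : n ∈ {x : ℕ | 1 ≤ x ∧ ∀ j, 1 ≤ j → j ≤ n → ¬∃ m, x = b j + m * p j} :=
      ⟨hn, fun j hj1 _ hex => by
        obtain ⟨m, hm⟩ := hex
        exact absurd hm (h j hj1 m)⟩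
    have h1 := (hbrec n hn).2 hmem
    have h2 := hbge (n + 1) (by omega)
    omega
  -- disjointness of distinct progressions
  have huniq : ∀ i j, 1 ≤ i → 1 ≤ j → i < j → ∀ mi mj : ℕ,
      b i + mi * p i ≠ b j + mj * p j := by
    intro i j hi hj hij mi mj heq
    obtain ⟨t, rfl⟩ : ∃ t, j = t + 1 := ⟨j - 1, by omega⟩
    have ht : 1 ≤ t := by omega
    have hit : i ≤ t := by omega
    have hnot := (hbrec t ht).1.2 i hi hit
    have hpi : 0 < p i := hppos i hi
    have hdij : p i ∣ p (t + 1) := hdvd2 i (t + 1) hi (by omega)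
    have hbi := hbb' i hi
    have hbt1 : 1 ≤ b (t + 1) := (hbb' (t + 1) (by omega)).1
    have hA : p i ∣ mi * p i := dvd_mul_left _ _
    have hB : p i ∣ mj * p (t + 1) := hdij.trans (dvd_mul_left _ _)
    rcases Nat.lt_or_ge (b (t + 1)) (b i) with hlt | hge
    · -- b j < b i : then b i - b j is a positive multiple of p i, contradiction
      have hsub : b i - b (t + 1) = mj * p (t + 1) - mi * p i := by omega
      have hdvd : p i ∣ b i - b (t + 1) := by
        rw [hsub]; exact Nat.dvd_sub hB hA
      have hpos : 0 < b i - b (t + 1) := by omega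
      have := Nat.le_of_dvd hpos hdvd
      omega
    · -- b i ≤ b j : then b j = b i + m * p i, contradicting minimality
      have hsub : b (t + 1) - b i = mi * p i - mj * p (t + 1) := by omega
      have hdvd : p i ∣ b (t + 1) - b i := by
        rw [hsub]; exact Nat.dvd_sub hA hB
      obtain ⟨m, hm⟩ := hdvd
      refine hnot ⟨m, ?_⟩
      rw [mul_comm m (p i)]
      omega
  -- a non-initial element of a progression is not an initial
  have hbne : ∀ j m, 1 ≤ j → 1 ≤ m → ∀ i, 1 ≤ i → b i ≠ b j + m * p j := by
    intro j m hj hm i hi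
    rcases lt_trichotomy i j with h | rfl | h
    · intro heq
      exact huniq i j hi hj h 0 m (by omega)
    · intro heq
      have h2 : 1 ≤ m * p i := Nat.mul_pos hm (hppos i hi)
      omega
    · intro heq
      exact huniq j i hj hi h m 0 (by omega)
  have hzval : ∀ n, z n = 0 ↔ ¬∃ i, 1 ≤ i ∧ b i = n := by
    intro n
    obtain ⟨h1, h2⟩ := hz n
    constructor
    · intro h0 hex
      have := h1.mpr hex
      omega
    · intro hne
      rcases h2 with h | h
      · exact absurd (h1.mp h) hne
      · exact h
  have hzchar : ∀ k, 1 ≤ k → ∀ n, n ∈ Finset.Icc 1 (p k) →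
      (z n = 0 ↔ ∃ j, 1 ≤ j ∧ j ≤ k - 1 ∧ ∃ m, 1 ≤ m ∧ n = b j + m * p j) := by
    intro k hk n hn
    simp only [Finset.mem_Icc] at hn
    rw [hzval n]
    constructor
    · intro hno
      obtain ⟨j, hj, m, hm⟩ := hcover n hn.1
      have hm1 : 1 ≤ m := by
        rcases Nat.eq_zero_or_pos m with rfl | h
        · exact absurd ⟨j, hj, by omega⟩ hno
        · exact h
      refine ⟨j, hj, ?_, m, hm1, hm⟩
      by_contra hjk
      push_neg at hjk
      have hkj : k ≤ j := by omega
      have h1 : p k ≤ p j := hple k j hk hkj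
      have h3 : 1 ≤ b j := (hbb' j hj).1
      have h4 : p j ≤ m * p j := Nat.le_mul_of_pos_left _ hm1
      omega
    · rintro ⟨j, hj, hjk, m, hm, rfl⟩
      rintro ⟨i, hi, heq⟩
      exact hbne j m hj hm i hi heq
  -- the exact count
  have hcount : ∀ k, 1 ≤ k → ((Finset.Icc 1 (p k)).filter (fun n => z n = 0)).card
      = ∑ j ∈ Finset.Icc 1 (k - 1), (p k / p j - 1) := by
    intro k hk
    have hset : (Finset.Icc 1 (p k)).filter (fun n => z n = 0)
        = (Finset.Icc 1 (k - 1)).biUnion (fun j => (Finset.Icc 1 (p k)).filter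
            (fun n => ∃ m, 1 ≤ m ∧ n = b j + m * p j)) := by
      ext n
      simp only [Finset.mem_filter, Finset.mem_biUnion, Finset.mem_Icc]
      constructor
      · rintro ⟨hn, hzn⟩
        obtain ⟨j, hj1, hj2, hex⟩ := (hzchar k hk n (Finset.mem_Icc.mpr hn)).mp hzn
        exact ⟨j, ⟨hj1, hj2⟩, hn, hex⟩
      · rintro ⟨j, ⟨hj1, hj2⟩, hn, hex⟩
        exact ⟨hn, (hzchar k hk n (Finset.mem_Icc.mpr hn)).mpr ⟨j, hj1, hj2, hex⟩⟩
    have hdisj : ∀ x ∈ Finset.Icc 1 (k - 1), ∀ y ∈ Finset.Icc 1 (k - 1), x ≠ y →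
        Disjoint ((Finset.Icc 1 (p k)).filter (fun n => ∃ m, 1 ≤ m ∧ n = b x + m * p x))
          ((Finset.Icc 1 (p k)).filter (fun n => ∃ m, 1 ≤ m ∧ n = b y + m * p y)) := by
      intro x hx y hy hxy
      simp only [Finset.mem_Icc] at hx hy
      rw [Finset.disjoint_left]
      rintro n hnx hny
      simp only [Finset.mem_filter] at hnx hny
      obtain ⟨-, mx, hmx, hex⟩ := hnx
      obtain ⟨-, my, hmy, hey⟩ := hny
      rcases lt_or_gt_of_ne hxy with h | h
      · exact huniq x y hx.1 hy.1 h mx my (by omega)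
      · exact huniq y x hy.1 hx.1 h my mx (by omega)
    rw [hset, Finset.card_biUnion hdisj]
    refine Finset.sum_congr rfl fun j hj => ?_
    simp only [Finset.mem_Icc] at hj
    have hjk : j ≤ k := by omega
    obtain ⟨hb1', hb2'⟩ := hbb' j hj.1
    exact ap_count' _ _ _ hb1' hb2' (hdvd2 j k hj.1 hjk) (hppos k hk)
  -- summability of the series
  have hsummable : Summable (fun j : ℕ => (1 : ℝ) / p (j + 1)) := by
    refine Summable.of_nonneg_of_le (fun j => by positivity) (fun j => ?_)
      (summable_geometric_two)
    have h1 : (2 : ℝ) ^ j ≤ (p (j + 1) : ℝ) := by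
      have h2 := hpow2 (j + 1) (by omega)
      have h3 : (2 : ℕ) ^ j ≤ 2 ^ (j + 1) := Nat.pow_le_pow_right (by omega) (by omega)
      exact_mod_cast h3.trans h2
    rw [show ((1 : ℝ) / 2) ^ j = 1 / 2 ^ j by rw [div_pow, one_pow]]
    exact one_div_le_one_div_of_le (by positivity) h1
  -- frequency formula
  have hfreq : ∀ k, 1 ≤ k →
      (((Finset.Icc 1 (p k)).filter (fun n => z n = 0)).card : ℝ) / (p k : ℝ)
        = (∑ j ∈ Finset.Icc 1 (k - 1), (1 : ℝ) / p j) - ((k : ℝ) - 1) / p k := by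
    intro k hk
    have hpk0 : (p k : ℝ) ≠ 0 := Nat.cast_ne_zero.mpr (hppos k hk).ne'
    have hcard : ((((Finset.Icc 1 (p k)).filter (fun n => z n = 0)).card : ℕ) : ℝ)
        = ∑ j ∈ Finset.Icc 1 (k - 1), ((p k : ℝ) / (p j : ℝ) - 1) := by
      rw [hcount k hk, Nat.cast_sum]
      refine Finset.sum_congr rfl fun j hj => ?_
      simp only [Finset.mem_Icc] at hj
      have hjk : j ≤ k := by omega
      have hd := hdvd2 j k hj.1 hjk
      have hq1 : 1 ≤ p k / p j :=
        (Nat.one_le_div_iff (hppos j hj.1)).mpr (hple j k hj.1 hjk)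
      rw [Nat.cast_sub hq1, Nat.cast_div hd (Nat.cast_ne_zero.mpr (hppos j hj.1).ne'),
        Nat.cast_one]
    rw [hcard, Finset.sum_div]
    have h2 : ∀ j ∈ Finset.Icc 1 (k - 1),
        ((p k : ℝ) / (p j : ℝ) - 1) / (p k : ℝ) = 1 / (p j : ℝ) - 1 / (p k : ℝ) := by
      intro j hj
      simp only [Finset.mem_Icc] at hj
      have hpj0 : (p j : ℝ) ≠ 0 := Nat.cast_ne_zero.mpr (hppos j hj.1).ne'
      field_simp
    rw [Finset.sum_congr rfl h2, Finset.sum_sub_distrib, Finset.sum_const, Nat.card_Icc]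
    have : ((k - 1 + 1 - 1 : ℕ) : ℝ) = (k : ℝ) - 1 := by
      have : k - 1 + 1 - 1 = k - 1 := by omega
      rw [this, Nat.cast_sub hk, Nat.cast_one]
    rw [nsmul_eq_mul, this]
    ring
  -- partial sums as range sums
  have hrange : ∀ k : ℕ, ∑ j ∈ Finset.Icc 1 k, (1 : ℝ) / p j
      = ∑ i ∈ Finset.range k, (1 : ℝ) / p (i + 1) := by
    intro k
    rw [← Finset.Ico_add_one_right_eq_Icc, Finset.sum_Ico_eq_sum_range]
    simp [add_comm]
  -- strict inequality
  have hlt : ∀ k, 1 ≤ k →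
      (((Finset.Icc 1 (p k)).filter (fun n => z n = 0)).card : ℝ) / (p k : ℝ)
        < ∑' j : ℕ, (1 : ℝ) / p (j + 1) := by
    intro k hk
    rw [hfreq k hk]
    have hpartial : (∑ j ∈ Finset.Icc 1 (k - 1), (1 : ℝ) / p j)
        ≤ ∑' j : ℕ, (1 : ℝ) / p (j + 1) := by
      rw [hrange]
      exact Summable.sum_le_tsum _ (fun i _ => by positivity) hsummable
    rcases Nat.eq_or_lt_of_le hk with h | h
    · -- k = 1
      subst h
      rw [show (1:ℕ) - 1 = 0 from rfl, Finset.Icc_eq_empty (by omega : ¬ (1:ℕ) ≤ 0),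
        Finset.sum_empty]
      rw [show ((1:ℕ):ℝ) - 1 = 0 by norm_num, zero_div, sub_zero]
      have h01 : (0:ℕ) + 1 = 1 := rfl
      have hpos : (0:ℝ) < 1 / (p (0 + 1) : ℝ) := by
        rw [h01]
        have := hppos 1 le_rfl
        positivity
      exact lt_of_lt_of_le hpos (Summable.le_tsum hsummable 0 (fun j _ => by positivity))
    · -- k ≥ 2
      have hpos : 0 < ((k : ℝ) - 1) / (p k : ℝ) := by
        apply div_pos
        · have : (2 : ℝ) ≤ (k : ℝ) := by exact_mod_cast h
          linarith
        · exact_mod_cast hppos k hk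
      linarith
  -- convergence
  have htends : Tendsto (fun k : ℕ =>
      (((Finset.Icc 1 (p k)).filter (fun n => z n = 0)).card : ℝ) / (p k : ℝ))
      atTop (𝓝 (∑' j : ℕ, (1 : ℝ) / p (j + 1))) := by
    have heq : (fun k : ℕ => (∑ i ∈ Finset.range (k - 1), (1 : ℝ) / p (i + 1))
          - ((k : ℝ) - 1) / p k)
        =ᶠ[atTop] (fun k : ℕ =>
          (((Finset.Icc 1 (p k)).filter (fun n => z n = 0)).card : ℝ) / (p k : ℝ)) := by
      rw [Filter.eventuallyEq_iff_exists_mem]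
      refine ⟨Set.Ici 1, Filter.Ici_mem_atTop 1, fun k hk => ?_⟩
      dsimp only
      rw [hfreq k hk, hrange]
    refine Tendsto.congr' heq ?_
    have hA : Tendsto (fun k : ℕ => ∑ i ∈ Finset.range (k - 1), (1 : ℝ) / p (i + 1))
        atTop (𝓝 (∑' j : ℕ, (1 : ℝ) / p (j + 1))) :=
      (hsummable.hasSum.tendsto_sum_nat).comp (tendsto_sub_atTop_nat 1)
    have hB : Tendsto (fun k : ℕ => ((k : ℝ) - 1) / p k) atTop (𝓝 0) := by
      apply squeeze_zero' (g := fun k : ℕ => (k : ℝ) / 2 ^ k)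
      · rw [Filter.eventually_atTop]
        refine ⟨1, fun k hk => ?_⟩
        apply div_nonneg
        · have : (1 : ℝ) ≤ (k : ℝ) := by exact_mod_cast hk
          linarith
        · positivity
      · rw [Filter.eventually_atTop]
        refine ⟨1, fun k hk => ?_⟩
        have h1 : (2 : ℝ) ^ k ≤ (p k : ℝ) := by exact_mod_cast hpow2 k hk
        apply div_le_div₀ (by positivity) (by linarith [Nat.cast_nonneg (α := ℝ) k])
          (by positivity) h1
      · have := tendsto_pow_const_div_const_pow_of_one_lt 1 (by norm_num : (1:ℝ) < 2)
        simpa [pow_one] using this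
    simpa using hA.sub hB
  intro k hk
  exact ⟨hcount k hk, hfreq k hk, hlt k hk, htends⟩
end

section
/- For every k ≥ 1, every j ≥ 0 and every i ∈ {1, …, p_k}: z(j·p_k + i) ≤ z(i). Equivalently, the block (z(j·p_k + 1), …, z(j·p_k + p_k)) is obtained from the block (z(1), …, z(p_k)) by only replacing some 1's by 0's. -/
open Filter Topology

/-- For the indicator `z` of the set of "initials" `{b_k}`: for every `k ≥ 1`,
`j ≥ 0` and `i ∈ {1, …, p_k}` we have `z(j·p_k + i) ≤ z(i)`; i.e., each block of length `p_k`
is obtained from the initial block by only replacing some 1's by 0's. -/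
theorem later_blocks_dominated_by_initial_block
    (p : ℕ → ℕ)
    (hp1 : 3 ≤ p 1)
    (hpmono : ∀ k : ℕ, 1 ≤ k → p k < p (k + 1))
    (hpdvd : ∀ k : ℕ, 1 ≤ k → p k ∣ p (k + 1))
    (b : ℕ → ℕ) (hb1 : b 1 = 1)
    (hbrec : ∀ k : ℕ, 1 ≤ k → IsLeast
      {n : ℕ | 1 ≤ n ∧ ∀ j : ℕ, 1 ≤ j → j ≤ k → ¬∃ m : ℕ, n = b j + m * p j} (b (k + 1)))
    (z : ℕ → ℕ)
    (hz : ∀ n : ℕ, (z n = 1 ↔ ∃ k : ℕ, 1 ≤ k ∧ b k = n) ∧ (z n = 1 ∨ z n = 0)) :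
    ∀ k : ℕ, 1 ≤ k → ∀ j : ℕ, ∀ i : ℕ, 1 ≤ i → i ≤ p k →
      z (j * p k + i) ≤ z i := by
  -- p is monotone and divisibility-chained on indices ≥ 1
  have hple : ∀ a c : ℕ, 1 ≤ a → a ≤ c → p a ≤ p c := by
    intro a c ha hac
    induction c, hac using Nat.le_induction with
    | base => exact le_refl _
    | succ n hn ih => exact le_trans ih (le_of_lt (hpmono n (le_trans ha hn)))
  have hplt : ∀ a c : ℕ, 1 ≤ a → a < c → p a < p c := by
    intro a c ha hac
    have h1 : p a < p (a + 1) := hpmono a ha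
    have h2 : p (a + 1) ≤ p c := hple (a + 1) c (by omega) hac
    omega
  have hpdvd' : ∀ a c : ℕ, 1 ≤ a → a ≤ c → p a ∣ p c := by
    intro a c ha hac
    induction c, hac using Nat.le_induction with
    | base => exact dvd_refl _
    | succ n hn ih => exact dvd_trans ih (hpdvd n (le_trans ha hn))
  have hppos : ∀ a : ℕ, 1 ≤ a → 1 ≤ p a := by
    intro a ha
    have := hple 1 a le_rfl ha
    omega
  -- b is strictly increasing on indices ≥ 1
  have hbstep : ∀ t : ℕ, 1 ≤ t → b t < b (t + 1) := by
    intro t ht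
    obtain ⟨⟨h1, havoid⟩, hleast⟩ := hbrec t ht
    have hne : b (t + 1) ≠ b t := by
      intro h
      exact havoid t ht le_rfl ⟨0, by omega⟩
    rcases Nat.eq_or_lt_of_le ht with h1t | h2t
    · subst h1t; rw [hb1] at hne ⊢; omega
    · -- t ≥ 2, use hbrec (t-1)
      obtain ⟨t', rfl⟩ : ∃ t', t = t' + 1 := ⟨t - 1, by omega⟩
      have ht' : 1 ≤ t' := by omega
      have hmem : b (t' + 1 + 1) ∈
          {n : ℕ | 1 ≤ n ∧ ∀ j : ℕ, 1 ≤ j → j ≤ t' → ¬∃ m : ℕ, n = b j + m * p j} := by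
        refine ⟨h1, fun j hj hjt' => havoid j hj (by omega)⟩
      have := (hbrec t' ht').2 hmem
      omega
  have hbmono : ∀ a c : ℕ, 1 ≤ a → a ≤ c → b a ≤ b c := by
    intro a c ha hac
    induction c, hac using Nat.le_induction with
    | base => exact le_refl _
    | succ n hn ih => exact le_trans ih (le_of_lt (hbstep n (le_trans ha hn)))
  have hblower : ∀ l : ℕ, 1 ≤ l → l ≤ b l := by
    intro l hl
    induction l with
    | zero => omega
    | succ n ih =>
      rcases Nat.eq_or_lt_of_le hl with h | h
      · rw [← h, hb1]
      · have hn : 1 ≤ n := by omega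
        have := hbstep n hn
        have := ih hn
        omega
  -- covering: every i ≥ 1 is an initial or lies strictly inside some progression
  have hcover : ∀ i : ℕ, 1 ≤ i →
      (∃ l, 1 ≤ l ∧ b l = i) ∨
      (∃ t m, 1 ≤ t ∧ 1 ≤ m ∧ i = b t + m * p t) := by
    intro i hi
    by_contra h
    push_neg at h
    obtain ⟨h1, h2⟩ := h
    have hmem : i ∈
        {n : ℕ | 1 ≤ n ∧ ∀ j : ℕ, 1 ≤ j → j ≤ i → ¬∃ m : ℕ, n = b j + m * p j} := by
      refine ⟨hi, fun t ht hti hex => ?_⟩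
      obtain ⟨m, hm⟩ := hex
      rcases Nat.eq_zero_or_pos m with rfl | hm1
      · exact h1 t ht (by omega)
      · exact absurd hm (h2 t m ht hm1)
    have hle := (hbrec i hi).2 hmem
    have := hblower (i + 1) (by omega)
    omega
  -- disjointness: b l avoids progression t for t < l
  have hdisj : ∀ t l : ℕ, 1 ≤ t → t < l → ¬∃ m : ℕ, b l = b t + m * p t := by
    intro t l ht htl
    obtain ⟨l', rfl⟩ : ∃ l', l = l' + 1 := ⟨l - 1, by omega⟩
    exact (hbrec l' (by omega)).1.2 t ht (by omega)
  -- main proof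
  intro k hk j i hi1 hip
  rcases (hz (j * p k + i)).2 with hzn | hzn
  · -- z (j * p k + i) = 1
    obtain ⟨l, hl1, hbl⟩ := (hz (j * p k + i)).1.mp hzn
    have hzi : z i = 1 := by
      rcases hcover i hi1 with ⟨l', hl'1, hbl'⟩ | ⟨t, m, ht1, hm1, heq⟩
      · exact (hz i).1.mpr ⟨l', hl'1, hbl'⟩
      · exfalso
        -- first show t ≤ k
        have htk : t ≤ k := by
          by_contra hcon
          have hklt : k < t := by omega
          have := hplt k t hk hklt
          have hmp : p t ≤ m * p t := Nat.le_mul_of_pos_left _ hm1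
          omega
        obtain ⟨c, hc⟩ := hpdvd' t k ht1 htk
        have hbleq : b l = b t + (m + j * c) * p t := by
          rw [hbl, heq, hc]; ring
        rcases Nat.lt_or_ge t l with hlt | hge
        · exact hdisj t l ht1 hlt ⟨m + j * c, hbleq⟩
        · -- l ≤ t, but b l > b t, contradiction with monotonicity
          have h1 : b l ≤ b t := hbmono l t hl1 hge
          have h2 : 1 * p t ≤ (m + j * c) * p t :=
            Nat.mul_le_mul_right _ (by omega)
          have h3 : 1 ≤ p t := hppos t ht1
          omega
    rw [hzn, hzi]
  · rw [hzn]; exact Nat.zero_le _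
end

section
/- The set Z = {n ∈ ℕ₊ : z(n) = 0} has lower Banach density equal to ρ, that is: lim_{L→∞} inf_{t ≥ 0} |Z ∩ (t, t + L]| / L = ρ. -/
open Classical Filter Topology

lemma aux_cast_sub (a c : ℕ) : (a : ℝ) - c ≤ ((a - c : ℕ) : ℝ) := by
  rcases le_total c a with h | h
  · rw [Nat.cast_sub h]
  · rw [Nat.sub_eq_zero_of_le h]
    have : (a:ℝ) ≤ c := by exact_mod_cast h
    simp; linarith

section aux
variable (p b : ℕ → ℕ)

lemma aux_ppos (hp1 : 3 ≤ p 1) (hpmono : ∀ k : ℕ, 1 ≤ k → p k < p (k + 1)) :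
    ∀ j : ℕ, 1 ≤ j → 3 ≤ p j := by
  have h : ∀ j : ℕ, 3 ≤ p (j + 1) := by
    intro j
    induction j with
    | zero => exact hp1
    | succ n ih => exact le_trans ih (le_of_lt (hpmono (n + 1) (by omega)))
  intro j hj
  obtain ⟨k, rfl⟩ : ∃ k, j = k + 1 := ⟨j - 1, by omega⟩
  exact h k

lemma aux_pdvd (hpdvd : ∀ k : ℕ, 1 ≤ k → p k ∣ p (k + 1)) :
    ∀ i j : ℕ, 1 ≤ i → i ≤ j → p i ∣ p j := by
  intro i j hi hij
  obtain ⟨d, rfl⟩ : ∃ d, j = i + d := ⟨j - i, by omega⟩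
  clear hij
  induction d with
  | zero => exact dvd_refl _
  | succ n ih =>
    have : p (i + n) ∣ p (i + n + 1) := hpdvd (i + n) (by omega)
    rw [show i + (n + 1) = i + n + 1 from rfl]
    exact ih.trans this

lemma aux_bsucc (hb1 : b 1 = 1)
    (hbrec : ∀ k : ℕ, 1 ≤ k → IsLeast
      {n : ℕ | 1 ≤ n ∧ ∀ j : ℕ, 1 ≤ j → j ≤ k → ¬∃ m : ℕ, n = b j + m * p j} (b (k + 1))) :
    ∀ k : ℕ, 1 ≤ k → b k < b (k + 1) := by
  intro k hk
  have h2 := hbrec k hk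
  have hne : b (k + 1) ≠ b k := by
    intro h
    exact h2.1.2 k hk le_rfl ⟨0, by simp [h]⟩
  have hle : b k ≤ b (k + 1) := by
    rcases eq_or_lt_of_le hk with h1 | h1
    · subst h1; rw [hb1]; exact h2.1.1
    · obtain ⟨k', rfl⟩ : ∃ k', k = k' + 1 := ⟨k - 1, by omega⟩
      exact (hbrec k' (by omega)).2 ⟨h2.1.1, fun j hj hjk => h2.1.2 j hj (by omega)⟩
  omega

lemma aux_bmono (hb1 : b 1 = 1)
    (hbrec : ∀ k : ℕ, 1 ≤ k → IsLeast
      {n : ℕ | 1 ≤ n ∧ ∀ j : ℕ, 1 ≤ j → j ≤ k → ¬∃ m : ℕ, n = b j + m * p j} (b (k + 1))) :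
    ∀ i j : ℕ, 1 ≤ i → i < j → b i < b j := by
  intro i j hi hij
  obtain ⟨d, rfl⟩ : ∃ d, j = i + (d + 1) := ⟨j - i - 1, by omega⟩
  clear hij
  induction d with
  | zero => exact aux_bsucc p b hb1 hbrec i hi
  | succ n ih =>
    refine lt_trans ih ?_
    rw [show i + (n + 1 + 1) = (i + (n + 1)) + 1 from by ring]
    exact aux_bsucc p b hb1 hbrec (i + (n + 1)) (by omega)

lemma aux_bge (hb1 : b 1 = 1)
    (hbrec : ∀ k : ℕ, 1 ≤ k → IsLeast
      {n : ℕ | 1 ≤ n ∧ ∀ j : ℕ, 1 ≤ j → j ≤ k → ¬∃ m : ℕ, n = b j + m * p j} (b (k + 1))) :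
    ∀ k : ℕ, 1 ≤ k → k ≤ b k := by
  have h : ∀ k : ℕ, k + 1 ≤ b (k + 1) := by
    intro k
    induction k with
    | zero => simp [hb1]
    | succ n ih =>
      have := aux_bsucc p b hb1 hbrec (n + 1) (by omega)
      omega
  intro k hk
  obtain ⟨k', rfl⟩ : ∃ k', k = k' + 1 := ⟨k - 1, by omega⟩
  exact h k'

lemma aux_unique (hp1 : 3 ≤ p 1) (hpmono : ∀ k : ℕ, 1 ≤ k → p k < p (k + 1))
    (hpdvd : ∀ k : ℕ, 1 ≤ k → p k ∣ p (k + 1)) (hb1 : b 1 = 1)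
    (hbrec : ∀ k : ℕ, 1 ≤ k → IsLeast
      {n : ℕ | 1 ≤ n ∧ ∀ j : ℕ, 1 ≤ j → j ≤ k → ¬∃ m : ℕ, n = b j + m * p j} (b (k + 1))) :
    ∀ i j m m' : ℕ, 1 ≤ i → i < j → b i + m * p i ≠ b j + m' * p j := by
  intro i j m m' hi hij heq
  obtain ⟨k, rfl⟩ : ∃ k, j = k + 1 := ⟨j - 1, by omega⟩
  have hk : 1 ≤ k := by omega
  have hblt : b i < b (k + 1) := by
    apply (aux_bmono p b hb1 hbrec) i (k+1) hi hij
  have hdvd : p i ∣ p (k + 1) := aux_pdvd p hpdvd i (k + 1) hi (by omega)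
  have h3 : p i ∣ m * p i := dvd_mul_left (p i) m
  have h4 : p i ∣ m' * p (k + 1) := hdvd.mul_left m'
  obtain ⟨X, hX⟩ : ∃ X, m * p i = X := ⟨_, rfl⟩
  obtain ⟨Y, hY⟩ : ∃ Y, m' * p (k + 1) = Y := ⟨_, rfl⟩
  rw [hX] at heq h3
  rw [hY] at heq h4
  -- heq : b i + X = b (k+1) + Y
  have h5 : b (k + 1) - b i + Y = X := by omega
  have h6 : p i ∣ b (k + 1) - b i := by
    have h7 := Nat.dvd_sub h3 h4
    have h8 : X - Y = b (k + 1) - b i := by omega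
    rwa [h8] at h7
  obtain ⟨q, hq⟩ := h6
  refine (hbrec k hk).1.2 i hi (by omega) ⟨q, ?_⟩
  have := (Nat.sub_eq_iff_eq_add (le_of_lt hblt)).mp hq
  rw [this]; ring

lemma aux_cover (hp1 : 3 ≤ p 1) (hpmono : ∀ k : ℕ, 1 ≤ k → p k < p (k + 1)) (hb1 : b 1 = 1)
    (hbrec : ∀ k : ℕ, 1 ≤ k → IsLeast
      {n : ℕ | 1 ≤ n ∧ ∀ j : ℕ, 1 ≤ j → j ≤ k → ¬∃ m : ℕ, n = b j + m * p j} (b (k + 1))) :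
    ∀ n : ℕ, 1 ≤ n → ∃ j m : ℕ, 1 ≤ j ∧ j ≤ n ∧ n = b j + m * p j := by
  intro n hn
  by_contra hc
  push_neg at hc
  have hmem : n ∈ {x : ℕ | 1 ≤ x ∧ ∀ j : ℕ, 1 ≤ j → j ≤ n → ¬∃ m : ℕ, x = b j + m * p j} := by
    refine ⟨hn, fun j hj hjn hex => ?_⟩
    obtain ⟨m, hm⟩ := hex
    exact hc j m hj hjn hm
  have h2 := (hbrec n hn).2 hmem
  have h3 := aux_bge p b hb1 hbrec (n + 1) (by omega)
  omega


lemma aux_card_lower (hp3 : ∀ j : ℕ, 1 ≤ j → 3 ≤ p j) (j t L : ℕ) (hj : 1 ≤ j) :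
    (L : ℝ) / p j - ((b j : ℝ) + 1) ≤
      (((Finset.Ioc t (t + L)).filter (fun n => ∃ m, 1 ≤ m ∧ n = b j + m * p j)).card : ℝ) := by
  have hpj : 0 < p j := by have := hp3 j hj; omega
  set A := (t - b j) / p j with hA
  set B := (t + L - b j) / p j with hB
  have hsub : Finset.image (fun m => b j + m * p j) (Finset.Ioc A B) ⊆
      (Finset.Ioc t (t + L)).filter (fun n => ∃ m, 1 ≤ m ∧ n = b j + m * p j) := by
    intro n hn
    simp only [Finset.mem_image, Finset.mem_Ioc] at hn
    obtain ⟨m, ⟨hmA, hmB⟩, rfl⟩ := hn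
    have hm1 : 1 ≤ m := Nat.succ_le_of_lt (Nat.lt_of_le_of_lt (Nat.zero_le A) hmA)
    have h2 : A * p j + p j ≤ m * p j := by
      calc A * p j + p j = (A + 1) * p j := by ring
        _ ≤ m * p j := Nat.mul_le_mul_right (p j) hmA
    have h3 : t - b j < A * p j + p j := by rw [hA]; exact Nat.lt_div_mul_add hpj
    have h4 : B * p j ≤ t + L - b j := by rw [hB]; exact Nat.div_mul_le_self _ _
    have h5 : m * p j ≤ B * p j := Nat.mul_le_mul_right (p j) hmB
    simp only [Finset.mem_filter, Finset.mem_Ioc]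
    obtain ⟨Q, hQ⟩ : ∃ Q, m * p j = Q := ⟨_, rfl⟩
    have hQ1 : 1 ≤ Q := by rw [← hQ]; exact Nat.one_le_iff_ne_zero.mpr (by positivity)
    rw [hQ] at h5
    have key1 : t - b j < Q := by omega
    have key2 : Q ≤ t + L - b j := le_trans h5 h4
    exact ⟨⟨by omega, by omega⟩, m, hm1, rfl⟩
  have hcard := Finset.card_le_card hsub
  have himg : (Finset.image (fun m => b j + m * p j) (Finset.Ioc A B)).card
      = (Finset.Ioc A B).card := by
    apply Finset.card_image_of_injective
    intro m₁ m₂ h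
    have h' : m₁ * p j = m₂ * p j := Nat.add_left_cancel h
    exact Nat.eq_of_mul_eq_mul_right hpj h'
  rw [himg, Nat.card_Ioc] at hcard
  -- real estimates
  have hP0 : (0 : ℝ) < p j := by exact_mod_cast hpj
  have hP1 : (3 : ℝ) ≤ p j := by exact_mod_cast hp3 j hj
  set c : ℝ := ((((Finset.Ioc t (t + L)).filter
      (fun n => ∃ m, 1 ≤ m ∧ n = b j + m * p j)).card : ℕ) : ℝ) with hc
  have hc1 : ((B - A : ℕ) : ℝ) ≤ c := by rw [hc]; exact_mod_cast hcard
  have f4 : (B : ℝ) - A ≤ ((B - A : ℕ) : ℝ) := aux_cast_sub B A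
  have f1 : ((t + L - b j : ℕ) : ℝ) < ((B : ℝ) + 1) * p j := by
    have : t + L - b j < B * p j + p j := by rw [hB]; exact Nat.lt_div_mul_add hpj
    have := (Nat.cast_lt (α := ℝ)).mpr this
    push_cast at this ⊢
    linarith
  have f2 : (t : ℝ) + L - b j ≤ ((t + L - b j : ℕ) : ℝ) := by
    have := aux_cast_sub (t + L) (b j)
    push_cast at this ⊢
    linarith
  have f3 : (A : ℝ) * p j ≤ t := by
    have h1 : A * p j ≤ t := le_trans (by rw [hA]; exact Nat.div_mul_le_self _ _) (Nat.sub_le t (b j))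
    exact_mod_cast h1
  have g1 : (t : ℝ) + L - b j < ((B : ℝ) + 1) * p j := lt_of_le_of_lt f2 f1
  have g2 : (B : ℝ) - A ≤ c := le_trans f4 hc1
  have hbj0 : (0 : ℝ) ≤ b j := Nat.cast_nonneg _
  have g3 : ((B : ℝ) - A + 1) * p j ≤ (c + 1) * p j :=
    mul_le_mul_of_nonneg_right (by linarith) hP0.le
  have g4 : (L : ℝ) ≤ (c + 1) * p j + b j := by nlinarith [g1, f3, g3]
  have g5 : (L : ℝ) ≤ (c + b j + 1) * p j := by nlinarith [g4, hbj0, hP1]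
  have g6 : (L : ℝ) / p j ≤ c + b j + 1 := (div_le_iff₀ hP0).mpr g5
  linarith

lemma aux_not_initial (hp1 : 3 ≤ p 1) (hpmono : ∀ k : ℕ, 1 ≤ k → p k < p (k + 1))
    (hpdvd : ∀ k : ℕ, 1 ≤ k → p k ∣ p (k + 1)) (hb1 : b 1 = 1)
    (hbrec : ∀ k : ℕ, 1 ≤ k → IsLeast
      {n : ℕ | 1 ≤ n ∧ ∀ j : ℕ, 1 ≤ j → j ≤ k → ¬∃ m : ℕ, n = b j + m * p j} (b (k + 1)))
    (j m : ℕ) (hj : 1 ≤ j) (hm : 1 ≤ m) :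
    ∀ k, 1 ≤ k → b k ≠ b j + m * p j := by
  intro k hk heq
  rcases lt_trichotomy k j with h | h | h
  · exact aux_unique p b hp1 hpmono hpdvd hb1 hbrec k j 0 m hk h (by simpa using heq)
  · subst h
    have hple : 1 * p k ≤ m * p k := Nat.mul_le_mul_right (p k) hm
    have hp3 : 3 ≤ p k := aux_ppos p hp1 hpmono k hk
    obtain ⟨X, hX⟩ : ∃ X, m * p k = X := ⟨_, rfl⟩
    rw [hX] at heq hple
    omega
  · exact aux_unique p b hp1 hpmono hpdvd hb1 hbrec j k m 0 hj h (by simpa using heq.symm)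

end aux

/-- The set of zeros of `z` (the complement of the set of "initials" `{b_k}`)
has lower Banach density exactly `ρ`:
`lim_{L→∞} inf_{t≥0} |{n ∈ (t, t+L] : z(n) = 0}| / L = ρ`. -/
theorem zeros_lower_Banach_density_eq_rho
    (p : ℕ → ℕ)
    (hp1 : 3 ≤ p 1)
    (hpmono : ∀ k : ℕ, 1 ≤ k → p k < p (k + 1))
    (hpdvd : ∀ k : ℕ, 1 ≤ k → p k ∣ p (k + 1))
    (b : ℕ → ℕ) (hb1 : b 1 = 1)
    (hbrec : ∀ k : ℕ, 1 ≤ k → IsLeast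
      {n : ℕ | 1 ≤ n ∧ ∀ j : ℕ, 1 ≤ j → j ≤ k → ¬∃ m : ℕ, n = b j + m * p j} (b (k + 1)))
    (z : ℕ → ℕ)
    (hz : ∀ n : ℕ, (z n = 1 ↔ ∃ k : ℕ, 1 ≤ k ∧ b k = n) ∧ (z n = 1 ∨ z n = 0)) :
    Tendsto (fun L : ℕ =>
        ⨅ t : ℕ, (((Finset.Ioc t (t + L)).filter (fun n => z n = 0)).card : ℝ) / L)
      atTop (𝓝 (∑' j : ℕ, (1 : ℝ) / p (j + 1))) := by
  have hp3 := aux_ppos p hp1 hpmono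
  have hbge := aux_bge p b hb1 hbrec
  -- z value characterization
  have hz0 : ∀ n : ℕ, z n = 0 ↔ ¬∃ k : ℕ, 1 ≤ k ∧ b k = n := by
    intro n
    obtain ⟨h1, h2⟩ := hz n
    constructor
    · intro h0 hex
      have := h1.mpr hex
      omega
    · intro hne
      rcases h2 with h | h
      · exact absurd (h1.mp h) hne
      · exact h
  -- growth and summability
  have hgrow : ∀ j : ℕ, 3 * 2 ^ j ≤ p (j + 1) := by
    intro j
    induction j with
    | zero => simpa only [pow_zero, Nat.mul_one] using hp1
    | succ n ih =>
      obtain ⟨c, hc⟩ := hpdvd (n + 1) (by omega)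
      have hlt := hpmono (n + 1) (by omega)
      have hc2 : 2 ≤ c := by
        by_contra hcon
        push_neg at hcon
        interval_cases c <;> omega
      calc 3 * 2 ^ (n + 1) = 3 * 2 ^ n * 2 := by ring
        _ ≤ p (n + 1) * c := Nat.mul_le_mul ih hc2
        _ = p (n + 1 + 1) := hc.symm
  have hsum : Summable (fun j : ℕ => (1 : ℝ) / p (j + 1)) := by
    refine Summable.of_nonneg_of_le (fun j => by positivity) (fun j => ?_)
      ((summable_geometric_of_lt_one (by norm_num) (by norm_num : (1:ℝ)/2 < 1)).mul_left (1/3))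
    have h1 : (3 : ℝ) * 2 ^ j ≤ p (j + 1) := by exact_mod_cast hgrow j
    calc (1 : ℝ) / p (j + 1) ≤ 1 / (3 * 2 ^ j) :=
          one_div_le_one_div_of_le (by positivity) h1
      _ = 1 / 3 * (1 / 2) ^ j := by rw [div_pow, one_pow]; ring
  set ρ : ℝ := ∑' j : ℕ, (1 : ℝ) / p (j + 1) with hρ
  -- partial sums over Icc
  have hreindex : ∀ K : ℕ, ∑ j ∈ Finset.Icc 1 K, (1 : ℝ) / p j
      = ∑ i ∈ Finset.range K, (1 : ℝ) / p (i + 1) := by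
    intro K
    rw [← Finset.Ico_add_one_right_eq_Icc, Finset.sum_Ico_eq_sum_range,
      show K + 1 - 1 = K from rfl]
    exact Finset.sum_congr rfl fun i _ => by rw [Nat.add_comm]
  -- nonnegativity and boundedness
  have hnn : ∀ L t : ℕ,
      (0:ℝ) ≤ (((Finset.Ioc t (t + L)).filter (fun n => z n = 0)).card : ℝ) / L :=
    fun L t => by positivity
  have hbdd : ∀ L : ℕ, BddBelow (Set.range fun t : ℕ =>
      (((Finset.Ioc t (t + L)).filter (fun n => z n = 0)).card : ℝ) / L) :=
    fun L => ⟨0, by rintro x ⟨t, rfl⟩; exact hnn L t⟩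
  -- UPPER BOUND : for L ≥ 1 the infimum is at most ρ
  have hupper : ∀ L : ℕ, 1 ≤ L →
      (⨅ t : ℕ, (((Finset.Ioc t (t + L)).filter (fun n => z n = 0)).card : ℝ) / L) ≤ ρ := by
    intro L hL
    have hL0 : (0:ℝ) < L := by exact_mod_cast hL
    refine le_trans (ciInf_le (hbdd L) 0) ?_
    rw [zero_add]
    -- card bound
    have hsub : (Finset.Ioc 0 L).filter (fun n => z n = 0) ⊆
        (Finset.Icc 1 L).biUnion (fun j =>
          (Finset.Ioc 0 L).filter (fun n => ∃ m, 1 ≤ m ∧ n = b j + m * p j)) := by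
      intro n hn
      simp only [Finset.mem_filter, Finset.mem_Ioc] at hn
      obtain ⟨⟨hn0, hnL⟩, hzn⟩ := hn
      obtain ⟨j, m, hj1, hjn, hnm⟩ := aux_cover p b hp1 hpmono hb1 hbrec n hn0
      have hm : 1 ≤ m := by
        rcases Nat.eq_zero_or_pos m with rfl | h
        · exfalso
          exact (hz0 n).mp hzn ⟨j, hj1, by omega⟩
        · exact h
      simp only [Finset.mem_biUnion, Finset.mem_Icc, Finset.mem_filter, Finset.mem_Ioc]
      exact ⟨j, ⟨hj1, le_trans hjn hnL⟩, ⟨hn0, hnL⟩, m, hm, hnm⟩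
    have hcard1 := Finset.card_le_card hsub
    have hcard2 := Finset.card_biUnion_le (s := Finset.Icc 1 L)
      (t := fun j => (Finset.Ioc 0 L).filter (fun n => ∃ m, 1 ≤ m ∧ n = b j + m * p j))
    have hper : ∀ j ∈ Finset.Icc 1 L,
        ((Finset.Ioc 0 L).filter (fun n => ∃ m, 1 ≤ m ∧ n = b j + m * p j)).card ≤ L / p j := by
      intro j hjmem
      simp only [Finset.mem_Icc] at hjmem
      have hpj : 0 < p j := by have := hp3 j hjmem.1; omega
      have hsubj : (Finset.Ioc 0 L).filter (fun n => ∃ m, 1 ≤ m ∧ n = b j + m * p j) ⊆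
          Finset.image (fun m => b j + m * p j) (Finset.Icc 1 (L / p j)) := by
        intro n hn
        simp only [Finset.mem_filter, Finset.mem_Ioc] at hn
        obtain ⟨⟨hn0, hnL⟩, m, hm1, rfl⟩ := hn
        have hbj : 1 ≤ b j := le_trans hjmem.1 (hbge j hjmem.1)
        have hmle : m * p j ≤ L := by
          obtain ⟨X, hX⟩ : ∃ X, m * p j = X := ⟨_, rfl⟩
          rw [hX] at hnL ⊢
          omega
        simp only [Finset.mem_image, Finset.mem_Icc]
        exact ⟨m, ⟨hm1, (Nat.le_div_iff_mul_le hpj).mpr hmle⟩, rfl⟩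
      calc ((Finset.Ioc 0 L).filter (fun n => ∃ m, 1 ≤ m ∧ n = b j + m * p j)).card
          ≤ (Finset.image (fun m => b j + m * p j) (Finset.Icc 1 (L / p j))).card :=
            Finset.card_le_card hsubj
        _ ≤ (Finset.Icc 1 (L / p j)).card := Finset.card_image_le
        _ = L / p j := by rw [Nat.card_Icc, Nat.add_sub_cancel]
    have hcard3 : ((Finset.Ioc 0 L).filter (fun n => z n = 0)).card
        ≤ ∑ j ∈ Finset.Icc 1 L, L / p j :=
      le_trans hcard1 (le_trans hcard2 (Finset.sum_le_sum hper))
    have hreal : (((Finset.Ioc 0 L).filter (fun n => z n = 0)).card : ℝ)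
        ≤ (L : ℝ) * ∑ j ∈ Finset.Icc 1 L, (1 : ℝ) / p j := by
      calc (((Finset.Ioc 0 L).filter (fun n => z n = 0)).card : ℝ)
          ≤ ((∑ j ∈ Finset.Icc 1 L, L / p j : ℕ) : ℝ) := by exact_mod_cast hcard3
        _ = ∑ j ∈ Finset.Icc 1 L, ((L / p j : ℕ) : ℝ) := by rw [Nat.cast_sum]
        _ ≤ ∑ j ∈ Finset.Icc 1 L, (L : ℝ) / p j :=
            Finset.sum_le_sum fun j _ => Nat.cast_div_le
        _ = (L : ℝ) * ∑ j ∈ Finset.Icc 1 L, (1 : ℝ) / p j := by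
            rw [Finset.mul_sum]
            exact Finset.sum_congr rfl fun j _ => by rw [mul_one_div]
    have hpartial : ∑ j ∈ Finset.Icc 1 L, (1 : ℝ) / p j ≤ ρ := by
      rw [hreindex L, hρ]
      exact Summable.sum_le_tsum (Finset.range L) (fun i _ => by positivity) hsum
    rw [div_le_iff₀ hL0]
    calc (((Finset.Ioc 0 L).filter (fun n => z n = 0)).card : ℝ)
        ≤ (L : ℝ) * ∑ j ∈ Finset.Icc 1 L, (1 : ℝ) / p j := hreal
      _ ≤ (L : ℝ) * ρ := by
          exact mul_le_mul_of_nonneg_left hpartial (le_of_lt hL0)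
      _ = ρ * L := by ring
  -- MAIN LIMIT
  rw [Metric.tendsto_atTop]
  intro ε hε
  -- choose K
  have hps := hsum.hasSum.tendsto_sum_nat
  rw [Metric.tendsto_atTop] at hps
  obtain ⟨K, hKs⟩ := hps (ε / 4) (by linarith)
  have hK := hKs K le_rfl
  rw [Real.dist_eq, abs_lt] at hK
  set σ : ℝ := ∑ i ∈ Finset.range K, (1 : ℝ) / p (i + 1) with hσ
  have hσρ : ρ - ε / 4 < σ := by rw [hρ]; linarith [hK.1]
  set C : ℝ := ∑ j ∈ Finset.Icc 1 K, ((b j : ℝ) + 1) with hC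
  have hC0 : 0 ≤ C := Finset.sum_nonneg fun j _ => by positivity
  refine ⟨max 1 (⌈4 * C / ε⌉₊ + 1), fun L hL => ?_⟩
  have hL1 : 1 ≤ L := le_trans (le_max_left _ _) hL
  have hL0 : (0:ℝ) < L := by exact_mod_cast hL1
  have hCL : C ≤ ε / 4 * L := by
    have h1 : (⌈4 * C / ε⌉₊ + 1 : ℕ) ≤ L := le_trans (le_max_right _ _) hL
    have h2 : (4 : ℝ) * C / ε ≤ ⌈4 * C / ε⌉₊ := Nat.le_ceil _
    have h3 : ((⌈4 * C / ε⌉₊ + 1 : ℕ) : ℝ) ≤ L := by exact_mod_cast h1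
    push_cast at h3
    have h4 : 4 * C / ε ≤ (L : ℝ) := by linarith
    rw [div_le_iff₀ hε] at h4
    linarith
  -- LOWER BOUND for given L : every window has at least (ρ - ε/2) L zeros
  have hlower : ∀ t : ℕ, ρ - ε / 2 ≤
      (((Finset.Ioc t (t + L)).filter (fun n => z n = 0)).card : ℝ) / L := by
    intro t
    set S : ℕ → Finset ℕ := fun j =>
      (Finset.Ioc t (t + L)).filter (fun n => ∃ m, 1 ≤ m ∧ n = b j + m * p j) with hS
    have hdisj : ∀ i ∈ Finset.Icc 1 K, ∀ j ∈ Finset.Icc 1 K, i ≠ j →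
        Disjoint (S i) (S j) := by
      intro i hi j hj hij
      simp only [Finset.mem_Icc] at hi hj
      rw [Finset.disjoint_left]
      intro n hni hnj
      simp only [hS, Finset.mem_filter] at hni hnj
      obtain ⟨-, m, hm1, hmeq⟩ := hni
      obtain ⟨-, m', hm'1, hm'eq⟩ := hnj
      rcases lt_or_gt_of_ne hij with h | h
      · exact aux_unique p b hp1 hpmono hpdvd hb1 hbrec i j m m' hi.1 h
          (by rw [← hmeq, ← hm'eq])
      · exact aux_unique p b hp1 hpmono hpdvd hb1 hbrec j i m' m hj.1 h
          (by rw [← hmeq, ← hm'eq])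
    have hsubZ : (Finset.Icc 1 K).biUnion S ⊆
        (Finset.Ioc t (t + L)).filter (fun n => z n = 0) := by
      intro n hn
      simp only [Finset.mem_biUnion, hS, Finset.mem_filter, Finset.mem_Icc] at hn ⊢
      obtain ⟨j, hjK, hmem, m, hm1, hmeq⟩ := hn
      refine ⟨hmem, (hz0 n).mpr ?_⟩
      rintro ⟨k, hk1, hkeq⟩
      exact aux_not_initial p b hp1 hpmono hpdvd hb1 hbrec j m hjK.1 hm1 k hk1
        (by rw [hkeq, hmeq])
    have hcardZ : ∑ j ∈ Finset.Icc 1 K, (S j).card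
        ≤ ((Finset.Ioc t (t + L)).filter (fun n => z n = 0)).card := by
      rw [← Finset.card_biUnion hdisj]
      exact Finset.card_le_card hsubZ
    have hsumlow : (L : ℝ) * (∑ j ∈ Finset.Icc 1 K, (1 : ℝ) / p j) - C
        ≤ ∑ j ∈ Finset.Icc 1 K, ((S j).card : ℝ) := by
      have h1 : ∀ j ∈ Finset.Icc 1 K, (L : ℝ) / p j - ((b j : ℝ) + 1) ≤ ((S j).card : ℝ) := by
        intro j hjmem
        simp only [Finset.mem_Icc] at hjmem
        exact aux_card_lower p b hp3 j t L hjmem.1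
      calc (L : ℝ) * (∑ j ∈ Finset.Icc 1 K, (1 : ℝ) / p j) - C
          = ∑ j ∈ Finset.Icc 1 K, ((L : ℝ) / p j - ((b j : ℝ) + 1)) := by
            rw [Finset.sum_sub_distrib, ← hC, Finset.mul_sum]
            congr 1
            exact Finset.sum_congr rfl fun j _ => by rw [mul_one_div]
        _ ≤ ∑ j ∈ Finset.Icc 1 K, ((S j).card : ℝ) := Finset.sum_le_sum h1
    have hcast : (∑ j ∈ Finset.Icc 1 K, ((S j).card : ℝ))
        ≤ (((Finset.Ioc t (t + L)).filter (fun n => z n = 0)).card : ℝ) := by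
      rw [← Nat.cast_sum]
      exact_mod_cast hcardZ
    rw [le_div_iff₀ hL0]
    have hσ' : ∑ j ∈ Finset.Icc 1 K, (1 : ℝ) / p j = σ := by rw [hreindex K, hσ]
    rw [hσ'] at hsumlow
    have hLσ : (L : ℝ) * (ρ - ε / 4) ≤ (L : ℝ) * σ :=
      mul_le_mul_of_nonneg_left (le_of_lt hσρ) (le_of_lt hL0)
    nlinarith [hsumlow, hcast, hCL, hLσ]
  have hFlow : ρ - ε / 2 ≤
      (⨅ t : ℕ, (((Finset.Ioc t (t + L)).filter (fun n => z n = 0)).card : ℝ) / L) :=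
    le_ciInf hlower
  have hFup := hupper L hL1
  rw [Real.dist_eq, abs_lt]
  constructor <;> [linarith; linarith]
end

section
/- For every ε > 0 there exist δ > 0 and n₀ ∈ ℕ such that for every n ≥ n₀, the number of distinct words w ∈ {0,1}ⁿ that occur in z (i.e., w = (z(t+1), …, z(t+n)) for some t ≥ 0) and in which the number of indices i with w_i = 0 is at most (ρ + δ)·n, does not exceed 2^{ε·n}. -/
/-!
Fix `K` with `∑_{j ≤ K} 1/p_j ≥ ρ - δ`. In a window `z(t+1), …, z(t+n)` with `t ≥ b_K`, every
position in one of the progressions `b_j + p_j ℕ`, `j ≤ K`, carries a zero: it lies past `b_j`, and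
the later `b_k` avoid that progression. These progressions are pairwise disjoint, so they cover at
least `(ρ - δ) n - K` positions of the window, and which positions they cover depends only on
`t mod p_K`. A word with at most `(ρ + δ) n` zeros is therefore determined by `t mod p_K` and a set
of at most `2δn + K` further zeros. Counting such sets by `#{S : |S| ≤ M} ≤ x^(-M) (1 + x)^n` bounds
the number of words by `p_K x^(-K) (x^(-2δ) (1 + x))^n + b_K`, which is below `2^(εn)` for large
`n` once `x` and `δ` are small.
-/

open Classical Filter Topology Finset

section DivisibilityChain

variable {p : ℕ → ℕ}

lemma dvd_of_le_of_dvd_succ (hdvd : ∀ k, 1 ≤ k → p k ∣ p (k + 1)) {j k : ℕ} (hj : 1 ≤ j)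
    (hjk : j ≤ k) : p j ∣ p k := by
  induction k, hjk using Nat.le_induction with
  | base => rfl
  | succ k hjk ih => exact ih.trans (hdvd k (hj.trans hjk))

lemma pos_of_dvd_succ (hlt : ∀ k, 1 ≤ k → p k < p (k + 1)) (hdvd : ∀ k, 1 ≤ k → p k ∣ p (k + 1))
    {k : ℕ} (hk : 1 ≤ k) : 0 < p k :=
  Nat.pos_of_dvd_of_pos (hdvd k hk) (Nat.zero_lt_of_lt (hlt k hk))

lemma two_mul_le_succ_of_dvd_succ (hlt : ∀ k, 1 ≤ k → p k < p (k + 1))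
    (hdvd : ∀ k, 1 ≤ k → p k ∣ p (k + 1)) {k : ℕ} (hk : 1 ≤ k) : 2 * p k ≤ p (k + 1) := by
  obtain ⟨c, hc⟩ := hdvd k hk
  have hpos := pos_of_dvd_succ hlt hdvd hk
  have hc2 : 2 ≤ c := by
    by_contra! hc2
    have := hlt k hk
    interval_cases c <;> simp_all
  calc 2 * p k ≤ c * p k := Nat.mul_le_mul_right _ hc2
    _ = p (k + 1) := by rw [hc, mul_comm]

lemma two_pow_le_of_dvd_succ (hlt : ∀ k, 1 ≤ k → p k < p (k + 1))
    (hdvd : ∀ k, 1 ≤ k → p k ∣ p (k + 1)) (j : ℕ) : 2 ^ j ≤ p (j + 1) := by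
  induction j with
  | zero => exact pos_of_dvd_succ hlt hdvd le_rfl
  | succ j ih =>
    rw [pow_succ]
    grind [two_mul_le_succ_of_dvd_succ hlt hdvd (Nat.le_add_left 1 j)]

lemma summable_one_div_of_dvd_succ (hlt : ∀ k, 1 ≤ k → p k < p (k + 1))
    (hdvd : ∀ k, 1 ≤ k → p k ∣ p (k + 1)) : Summable fun j ↦ (1 : ℝ) / p (j + 1) := by
  refine Summable.of_nonneg_of_le (fun j ↦ by positivity) (fun j ↦ ?_) summable_geometric_two
  rw [one_div_pow]
  exact one_div_le_one_div_of_le (by positivity) (mod_cast two_pow_le_of_dvd_succ hlt hdvd j)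

lemma exists_le_sum_Icc_one_div (hlt : ∀ k, 1 ≤ k → p k < p (k + 1))
    (hdvd : ∀ k, 1 ≤ k → p k ∣ p (k + 1)) {r : ℝ} (hr : r < ∑' j : ℕ, (1 : ℝ) / p (j + 1)) :
    ∃ K, 1 ≤ K ∧ r ≤ ∑ j ∈ Icc 1 K, (1 : ℝ) / p j := by
  have hlim := (summable_one_div_of_dvd_succ hlt hdvd).hasSum.tendsto_sum_nat
  obtain ⟨K, hrK, hK⟩ := ((hlim.eventually (Ici_mem_nhds hr)).and (eventually_ge_atTop 1)).exists
  refine ⟨K, hK, ?_⟩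
  rw [← Ico_add_one_right_eq_Icc, sum_Ico_eq_sum_range]
  simpa [add_comm] using hrK

end DivisibilityChain

lemma div_le_card_filter_add_modEq (n s v : ℕ) {r : ℕ} (hr : 0 < r) :
    n / r ≤ #{i : Fin n | s + i ≡ v [MOD r]} := by
  obtain ⟨v', hv'⟩ : ∃ v', s + v' ≡ v [MOD r] := ⟨v + (r - s % r), by
    have := Nat.mod_lt s hr
    have := Nat.div_add_mod s r
    calc s + (v + (r - s % r)) = v + r * (s / r + 1) := by grind
      _ ≡ v [MOD r] := Nat.add_modulus_mul_modEq_iff.2 rfl⟩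
  have hcount : #{i : Fin n | s + i ≡ v [MOD r]} = Nat.count (· ≡ v' [MOD r]) n := by
    rw [Nat.count_eq_card_filter_range]
    refine card_bij (fun i _ ↦ i.val) (fun i hi ↦ ?_) (by simp [Fin.val_inj]) fun x hx ↦ ?_
    · simp only [mem_filter, mem_univ, true_and] at hi
      simpa using (Nat.ModEq.add_left_cancel' s (hi.trans hv'.symm))
    · rw [mem_filter, mem_range] at hx
      exact ⟨⟨x, hx.1⟩, by simpa using (Nat.ModEq.add_left s hx.2).trans hv', rfl⟩
  rw [hcount, Nat.count_modEq_card _ hr]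
  exact Nat.le_add_right _ _

lemma card_filter_card_le_le_rpow_mul_pow (α : Type*) [Fintype α] {x : ℝ} (hx0 : 0 < x)
    (hx1 : x ≤ 1) (M : ℝ) :
    (#{S : Finset α | (#S : ℝ) ≤ M} : ℝ) ≤ x ^ (-M) * (1 + x) ^ Fintype.card α := by
  -- `(1 + x) ^ |α| = ∑ S, x ^ |S|`, and each `S` with `|S| ≤ M` contributes at least `x ^ M`.
  rw [add_comm, ← Fintype.sum_pow_mul_eq_add_pow, mul_sum, card_eq_sum_ones, Nat.cast_sum,
    sum_filter]
  gcongr with S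
  split_ifs with hS
  · simp only [Nat.cast_one, one_pow, mul_one]
    rw [← Real.rpow_natCast, ← Real.rpow_add hx0]
    exact Real.one_le_rpow_of_pos_of_le_one_of_nonpos hx0 hx1 (by linarith)
  · positivity

lemma eventually_mul_pow_add_le_pow {a c : ℝ} (C B : ℝ) (ha : 0 ≤ a) (hac : a < c) (hc : 1 < c) :
    ∀ᶠ n : ℕ in atTop, C * a ^ n + B ≤ c ^ n := by
  have hc0 : 0 < c := by linarith
  have hac' := tendsto_pow_atTop_nhds_zero_of_lt_one (by positivity) ((div_lt_one hc0).2 hac)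
  have hc' := tendsto_pow_atTop_nhds_zero_of_lt_one (by positivity) ((div_lt_one hc0).2 hc)
  have hlim := (hac'.const_mul C).add (hc'.const_mul B)
  rw [mul_zero, mul_zero, add_zero] at hlim
  filter_upwards [hlim.eventually_le_const zero_lt_one] with n hn
  have hcn : 0 < c ^ n := by positivity
  rw [div_pow, div_pow, one_pow] at hn
  calc C * a ^ n + B = (C * (a ^ n / c ^ n) + B * (1 / c ^ n)) * c ^ n := by field_simp
    _ ≤ c ^ n := by nlinarith

lemma exists_rpow_neg_mul_one_add_lt {c : ℝ} (hc : 1 < c) :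
    ∃ x η : ℝ, 0 < x ∧ x ≤ 1 ∧ 0 < η ∧ x ^ (-η) * (1 + x) < c := by
  set x := min 1 ((c - 1) / 2)
  have hx0 : 0 < x := lt_min one_pos (by linarith)
  have hxc : 1 + x < c := by have := min_le_right 1 ((c - 1) / 2); linarith
  have hcont : ContinuousAt (fun η : ℝ ↦ x ^ (-η) * (1 + x)) 0 :=
    ((Real.continuousAt_const_rpow hx0.ne').comp continuousAt_neg).mul continuousAt_const
  have hev := (hcont.eventually_lt continuousAt_const (by simpa using hxc)).filter_mono
    (nhdsWithin_le_nhds (s := Set.Ioi 0))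
  obtain ⟨η, hη, hη0⟩ := (hev.and self_mem_nhdsWithin).exists
  exact ⟨x, η, hx0, min_le_left _ _, hη0, hη⟩

lemma Nat.ModEq.exists_eq_add_mul {a q r : ℕ} (hmod : q ≡ a [MOD r]) (h : a ≤ q) :
    ∃ m, q = a + m * r := by
  obtain ⟨m, hm⟩ := (Nat.modEq_iff_dvd' h).1 hmod.symm
  exact ⟨m, by rw [mul_comm] at hm; omega⟩

def coveredPositions (p b : ℕ → ℕ) (K n t : ℕ) : Finset (Fin n) :=
  {i | ∃ j ∈ Icc 1 K, t + 1 + i ≡ b j [MOD p j]}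

lemma coveredPositions_mod_eq {p : ℕ → ℕ} (b : ℕ → ℕ) (hdvd : ∀ k, 1 ≤ k → p k ∣ p (k + 1))
    (K n t : ℕ) : coveredPositions p b K n (t % p K) = coveredPositions p b K n t := by
  ext i
  simp only [coveredPositions, mem_filter, mem_univ, true_and]
  refine exists_congr fun j ↦ and_congr_right fun hj ↦ ?_
  rw [mem_Icc] at hj
  have : t % p K + 1 + i ≡ t + 1 + i [MOD p j] := by
    simpa only [add_assoc] using
      ((Nat.mod_modEq t (p K)).add_right (1 + i)).of_dvd (dvd_of_le_of_dvd_succ hdvd hj.1 hj.2)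
  exact ⟨this.symm.trans, this.trans⟩

def GreedyOffsets (p b : ℕ → ℕ) : Prop :=
  ∀ k : ℕ, 1 ≤ k → IsLeast
    {n : ℕ | 1 ≤ n ∧ ∀ j : ℕ, 1 ≤ j → j ≤ k → ¬∃ m : ℕ, n = b j + m * p j} (b (k + 1))

namespace GreedyOffsets

variable {p b : ℕ → ℕ}

lemma ne_add_mul (hb : GreedyOffsets p b) {j k : ℕ} (hj : 1 ≤ j) (hjk : j < k) (m : ℕ) :
    b k ≠ b j + m * p j := by
  obtain ⟨k, rfl⟩ : ∃ k', k = k' + 1 := ⟨k - 1, by omega⟩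
  exact fun h ↦ (hb k (by omega)).1.2 j hj (by omega) ⟨m, h⟩

lemma lt_succ (hb : GreedyOffsets p b) (hb1 : b 1 = 1) {k : ℕ} (hk : 1 ≤ k) :
    b k < b (k + 1) := by
  have hne : b (k + 1) ≠ b k := by simpa using hb.ne_add_mul hk (Nat.lt_succ_self k) 0
  suffices b k ≤ b (k + 1) by omega
  rcases Nat.lt_or_ge k 2 with hk2 | hk2
  · obtain rfl : k = 1 := by omega
    rw [hb1]
    exact (hb 1 le_rfl).1.1
  · obtain ⟨k, rfl⟩ : ∃ k', k = k' + 1 := ⟨k - 1, by omega⟩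
    have hmem := (hb (k + 1) hk).1
    exact (hb k (by omega)).2 ⟨hmem.1, fun j hj hjk ↦ hmem.2 j hj (by omega)⟩

lemma strictMonoOn (hb : GreedyOffsets p b) (hb1 : b 1 = 1) : StrictMonoOn b (Set.Ici 1) :=
  strictMonoOn_of_lt_succ Set.ordConnected_Ici fun _ _ ha _ ↦ by simpa using hb.lt_succ hb1 ha

lemma not_modEq_of_modEq (hb : GreedyOffsets p b) (hb1 : b 1 = 1)
    (hdvd : ∀ k, 1 ≤ k → p k ∣ p (k + 1)) {j k q : ℕ} (hj : 1 ≤ j) (hjk : j < k)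
    (hqj : q ≡ b j [MOD p j]) : ¬q ≡ b k [MOD p k] := fun hqk ↦ by
  have hmod : b k ≡ b j [MOD p j] :=
    ((hqk.of_dvd (dvd_of_le_of_dvd_succ hdvd hj hjk.le)).symm.trans hqj)
  obtain ⟨m, hm⟩ := hmod.exists_eq_add_mul (hb.strictMonoOn hb1 hj (hj.trans hjk.le) hjk).le
  exact hb.ne_add_mul hj hjk m hm

lemma eq_zero_of_modEq {z : ℕ → ℕ} (hb : GreedyOffsets p b) (hb1 : b 1 = 1)
    (hz : ∀ n : ℕ, (z n = 1 ↔ ∃ k : ℕ, 1 ≤ k ∧ b k = n) ∧ (z n = 1 ∨ z n = 0))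
    {j q : ℕ} (hj : 1 ≤ j) (hjq : b j < q) (hmod : q ≡ b j [MOD p j]) : z q = 0 := by
  refine (hz q).2.resolve_left fun h1 ↦ ?_
  obtain ⟨k, hk, rfl⟩ := (hz q).1.1 h1
  rcases lt_trichotomy j k with hjk | rfl | hkj
  · obtain ⟨m, hm⟩ := hmod.exists_eq_add_mul hjq.le
    exact hb.ne_add_mul hj hjk m hm
  · exact hjq.false
  · exact (hb.strictMonoOn hb1 hk (hk.trans hkj.le) hkj).not_gt hjq

lemma eq_zero_of_mem_coveredPositions {z : ℕ → ℕ} (hb : GreedyOffsets p b) (hb1 : b 1 = 1)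
    (hz : ∀ n : ℕ, (z n = 1 ↔ ∃ k : ℕ, 1 ≤ k ∧ b k = n) ∧ (z n = 1 ∨ z n = 0))
    {K n t : ℕ} (hKt : b K ≤ t) {i : Fin n} (hi : i ∈ coveredPositions p b K n t) :
    z (t + 1 + i) = 0 := by
  simp only [coveredPositions, mem_filter, mem_univ, true_and, mem_Icc] at hi
  obtain ⟨j, ⟨hj, hjK⟩, hmod⟩ := hi
  refine hb.eq_zero_of_modEq hb1 hz hj ?_ hmod
  have := (hb.strictMonoOn hb1).monotoneOn hj (hj.trans hjK) hjK
  omega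

lemma sum_one_div_mul_sub_le_card_coveredPositions (hb : GreedyOffsets p b) (hb1 : b 1 = 1)
    (hlt : ∀ k, 1 ≤ k → p k < p (k + 1)) (hdvd : ∀ k, 1 ≤ k → p k ∣ p (k + 1)) (K n t : ℕ) :
    (∑ j ∈ Icc 1 K, (1 : ℝ) / p j) * n - K ≤ #(coveredPositions p b K n t) := by
  let residueClass (j : ℕ) : Finset (Fin n) := {i | t + 1 + i ≡ b j [MOD p j]}
  have hunion : coveredPositions p b K n t = (Icc 1 K).biUnion residueClass := by
    ext i
    simp [coveredPositions, residueClass]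
  have hdisj : ((Icc 1 K : Finset ℕ) : Set ℕ).PairwiseDisjoint residueClass := by
    intro j hj k hk hne
    rw [Function.onFun, disjoint_filter]
    intro i _ hij hik
    rcases hne.lt_or_gt with h | h
    · exact hb.not_modEq_of_modEq hb1 hdvd (mem_Icc.1 hj).1 h hij hik
    · exact hb.not_modEq_of_modEq hb1 hdvd (mem_Icc.1 hk).1 h hik hij
  have hnat : ∑ j ∈ Icc 1 K, n / p j ≤ #(coveredPositions p b K n t) := by
    rw [hunion, card_biUnion hdisj]
    exact sum_le_sum fun j hj ↦
      div_le_card_filter_add_modEq n (t + 1) (b j) (pos_of_dvd_succ hlt hdvd (mem_Icc.1 hj).1)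
  calc (∑ j ∈ Icc 1 K, (1 : ℝ) / p j) * n - K = ∑ j ∈ Icc 1 K, ((n : ℝ) / p j - 1) := by
        simp [sum_sub_distrib, sum_mul, div_eq_inv_mul]
    _ ≤ ∑ j ∈ Icc 1 K, ((n / p j : ℕ) : ℝ) := sum_le_sum fun j _ ↦
        ((Nat.sub_one_lt_floor _).trans_eq (congrArg _ (Nat.floor_div_eq_div n (p j)))).le
    _ ≤ #(coveredPositions p b K n t) := by exact_mod_cast hnat

lemma ncard_windows_le {z : ℕ → ℕ} (hb : GreedyOffsets p b) (hb1 : b 1 = 1)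
    (hz : ∀ n : ℕ, (z n = 1 ↔ ∃ k : ℕ, 1 ≤ k ∧ b k = n) ∧ (z n = 1 ∨ z n = 0))
    (hlt : ∀ k, 1 ≤ k → p k < p (k + 1)) (hdvd : ∀ k, 1 ≤ k → p k ∣ p (k + 1))
    {K : ℕ} (hK : 1 ≤ K) (n : ℕ) (θ : ℝ) :
    (Set.ncard {w : Fin n → ℕ | (∃ t : ℕ, ∀ i : Fin n, w i = z (t + 1 + (i : ℕ))) ∧
        (#{i | w i = 0} : ℝ) ≤ θ} : ℝ) ≤
      p K * #{S : Finset (Fin n) | (#S : ℝ) ≤ θ - ((∑ j ∈ Icc 1 K, (1 : ℝ) / p j) * n - K)} +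
        b K := by
  set W := {w : Fin n → ℕ | (∃ t : ℕ, ∀ i : Fin n, w i = z (t + 1 + (i : ℕ))) ∧
    (#{i | w i = 0} : ℝ) ≤ θ}
  set C := coveredPositions p b K n
  let window (t : ℕ) (i : Fin n) : ℕ := z (t + 1 + i)
  set small : Finset (Finset (Fin n)) :=
    {S | (#S : ℝ) ≤ θ - ((∑ j ∈ Icc 1 K, (1 : ℝ) / p j) * n - K)}
  -- A window starting at `t ≥ b K` is recovered from `t % p K` and its uncovered zeros.
  let decode (rS : ℕ × Finset (Fin n)) (i : Fin n) : ℕ := if i ∈ C rS.1 ∪ rS.2 then 0 else 1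
  have hsub : W ⊆ ↑((range (p K) ×ˢ small).image decode ∪ (range (b K)).image window) := by
    rintro w ⟨⟨t, hw⟩, hθ⟩
    set Z : Finset (Fin n) := {i | w i = 0}
    rw [coe_union, coe_image, coe_image]
    rcases lt_or_ge t (b K) with ht | ht
    · exact Or.inr ⟨t, mem_range.2 ht, funext fun i ↦ (hw i).symm⟩
    have hCw : C t ⊆ Z := fun i hi ↦ by
      simp [Z, hw i, hb.eq_zero_of_mem_coveredPositions hb1 hz ht hi]
    refine Or.inl ⟨(t % p K, Z \ C t), ?_, funext fun i ↦ ?_⟩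
    · refine mem_product.2 ⟨mem_range.2 (Nat.mod_lt _ (pos_of_dvd_succ hlt hdvd hK)), ?_⟩
      rw [mem_filter, card_sdiff_of_subset hCw, Nat.cast_sub (card_le_card hCw)]
      exact ⟨mem_univ _, by
        linarith [hb.sum_one_div_mul_sub_le_card_coveredPositions hb1 hlt hdvd K n t]⟩
    · simp only [decode, C, coveredPositions_mod_eq b hdvd, union_sdiff_of_subset hCw]
      rcases (hz (t + 1 + i)).2 with h | h <;> simp [Z, hw i, h]
  have hcard : W.ncard ≤ p K * #small + b K :=
    calc _ ≤ _ := Set.ncard_le_ncard hsub (finite_toSet _)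
      _ ≤ #((range (p K) ×ˢ small).image decode) + #((range (b K)).image window) := by
        rw [Set.ncard_coe_finset]
        exact card_union_le _ _
      _ ≤ p K * #small + b K := by
        grw [card_image_le, card_image_le, card_product, card_range, card_range]
  exact_mod_cast hcard

end GreedyOffsets

theorem few_words_with_small_frequency_of_zeros_general
    (p : ℕ → ℕ)
    (hpmono : ∀ k : ℕ, 1 ≤ k → p k < p (k + 1))
    (hpdvd : ∀ k : ℕ, 1 ≤ k → p k ∣ p (k + 1))
    (b : ℕ → ℕ) (hb1 : b 1 = 1)
    (hbrec : ∀ k : ℕ, 1 ≤ k → IsLeast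
      {n : ℕ | 1 ≤ n ∧ ∀ j : ℕ, 1 ≤ j → j ≤ k → ¬∃ m : ℕ, n = b j + m * p j} (b (k + 1)))
    (z : ℕ → ℕ)
    (hz : ∀ n : ℕ, (z n = 1 ↔ ∃ k : ℕ, 1 ≤ k ∧ b k = n) ∧ (z n = 1 ∨ z n = 0)) :
    ∀ ε : ℝ, 0 < ε → ∃ δ : ℝ, 0 < δ ∧ ∃ n₀ : ℕ, ∀ n : ℕ, n₀ ≤ n →
      ((Set.ncard {w : Fin n → ℕ |
          (∃ t : ℕ, ∀ i : Fin n, w i = z (t + 1 + (i : ℕ))) ∧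
          ((Finset.univ.filter (fun i : Fin n => w i = 0)).card : ℝ) ≤
            ((∑' j : ℕ, (1 : ℝ) / p (j + 1)) + δ) * n} : ℝ))
        ≤ 2 ^ (ε * n) := by
  intro ε hε
  set ρ := ∑' j : ℕ, (1 : ℝ) / p (j + 1)
  have h2ε : 1 < (2 : ℝ) ^ ε := Real.one_lt_rpow one_lt_two hε
  obtain ⟨x, η, hx0, hx1, hη, hxη⟩ := exists_rpow_neg_mul_one_add_lt h2ε
  obtain ⟨K, hK, hρK⟩ := exists_le_sum_Icc_one_div hpmono hpdvd (by linarith : ρ - η / 2 < ρ)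
  refine ⟨η / 2, by positivity, eventually_atTop.1 ?_⟩
  filter_upwards [eventually_mul_pow_add_le_pow (p K * x ^ (-(K : ℝ))) (b K) (by positivity) hxη
    h2ε] with n hn
  have hslack : (ρ + η / 2) * n - ((∑ j ∈ Icc 1 K, (1 : ℝ) / p j) * n - K) ≤ η * n + K := by
    nlinarith [mul_le_mul_of_nonneg_right hρK (Nat.cast_nonneg (α := ℝ) n)]
  calc _ ≤ (p K : ℝ) * #{S : Finset (Fin n) |
          (#S : ℝ) ≤ (ρ + η / 2) * n - ((∑ j ∈ Icc 1 K, (1 : ℝ) / p j) * n - K)} + b K :=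
        GreedyOffsets.ncard_windows_le hbrec hb1 hz hpmono hpdvd hK n _
    _ ≤ p K * (x ^ (-(η * n + K)) * (1 + x) ^ n) + b K := by
        gcongr
        calc _ ≤ (#{S : Finset (Fin n) | (#S : ℝ) ≤ η * n + K} : ℝ) := by
              exact_mod_cast card_le_card (monotone_filter_right _ fun _ _ hS ↦ le_trans hS hslack)
          _ ≤ _ := by simpa using card_filter_card_le_le_rpow_mul_pow (Fin n) hx0 hx1 (η * n + K)
    _ = p K * x ^ (-(K : ℝ)) * (x ^ (-η) * (1 + x)) ^ n + b K := by
        rw [neg_add, Real.rpow_add hx0, mul_pow, ← Real.rpow_natCast (x ^ (-η)),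
          ← Real.rpow_mul hx0.le, neg_mul]
        ring
    _ ≤ (2 ^ ε) ^ n := hn
    _ = 2 ^ (ε * n) := by rw [← Real.rpow_natCast, ← Real.rpow_mul zero_le_two]

/-- For every `ε > 0` there are `δ > 0` and `n₀` such that for all `n ≥ n₀`,
the number of distinct words of length `n` occurring in `z` in which the frequency of zeros is
at most `ρ + δ` does not exceed `2^{εn}`. -/
theorem few_words_with_small_frequency_of_zeros
    (p : ℕ → ℕ)
    (hp1 : 3 ≤ p 1)
    (hpmono : ∀ k : ℕ, 1 ≤ k → p k < p (k + 1))
    (hpdvd : ∀ k : ℕ, 1 ≤ k → p k ∣ p (k + 1))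
    (b : ℕ → ℕ) (hb1 : b 1 = 1)
    (hbrec : ∀ k : ℕ, 1 ≤ k → IsLeast
      {n : ℕ | 1 ≤ n ∧ ∀ j : ℕ, 1 ≤ j → j ≤ k → ¬∃ m : ℕ, n = b j + m * p j} (b (k + 1)))
    (z : ℕ → ℕ)
    (hz : ∀ n : ℕ, (z n = 1 ↔ ∃ k : ℕ, 1 ≤ k ∧ b k = n) ∧ (z n = 1 ∨ z n = 0)) :
    ∀ ε : ℝ, 0 < ε → ∃ δ : ℝ, 0 < δ ∧ ∃ n₀ : ℕ, ∀ n : ℕ, n₀ ≤ n →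
      ((Set.ncard {w : Fin n → ℕ |
          (∃ t : ℕ, ∀ i : Fin n, w i = z (t + 1 + (i : ℕ))) ∧
          ((Finset.univ.filter (fun i : Fin n => w i = 0)).card : ℝ) ≤
            ((∑' j : ℕ, (1 : ℝ) / p (j + 1)) + δ) * n} : ℝ))
        ≤ 2 ^ (ε * n) :=
  few_words_with_small_frequency_of_zeros_general p hpmono hpdvd b hb1 hbrec z hz
end

section
/- For every natural number m ≥ 1 there exist positive integers n_1 < n_2 < … < n_m such that z(n_i) = 1 for each i, z(n) = 0 for every other n in the interval [n_1, n_m], and n_{i+1} − n_i > m for each i < m. In particular, for every m there is an interval of m consecutive positive integers on which z is identically 0, and hence the upper Banach density of {n ∈ ℕ₊ : z(n) = 0}, i.e. lim_{L→∞} sup_{t ≥ 0} |{n ∈ (t, t+L] : z(n) = 0}| / L, equals 1. -/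
open Classical Filter Topology

/-!
For `j ≤ L` we have `p j ∣ p L` and `b j < p j`, so the set of integers missed by the first `L`
progressions is `p L`-periodic; on `(b L, 2 p L]` it is exactly the set of starting points `b k`,
since every later progression has step at least `p (L + 1) ≥ 2 p L`. Consequently `p L = b i` is a
starting point, none lies in `(p L, p L + b L]`, and above `p L + b L` the starting points of
`(b L, p L]` reappear shifted by `p L`: `b (i + t) = p L + b (L + t)`. Thus the gaps after `b i`
are `b (L + 1) > L` followed by the gaps after `b (L + 1)`, and iterating this from a large `L`
produces any number of consecutive gaps larger than any bound. The iteration needs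
`b (L + j + 1) < p L`, which survives a step because `p (i - 1) ≥ 2 p L`, and holds initially
because `p L - 1` is missed by the first `L` progressions.
-/

namespace GreedyCovering

theorem exists_eq_add_mul_iff_mod_eq {n r d : ℕ} (h : r < d) :
    (∃ m, n = r + m * d) ↔ n % d = r := by
  constructor
  · rintro ⟨m, rfl⟩
    rw [Nat.add_mul_mod_self_right, Nat.mod_eq_of_lt h]
  · intro hn
    exact ⟨n / d, by rw [← hn, Nat.mod_add_div']⟩

structure IsDivChain (p : ℕ → ℕ) : Prop where
  lt_succ : ∀ k, 1 ≤ k → p k < p (k + 1)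
  dvd_succ : ∀ k, 1 ≤ k → p k ∣ p (k + 1)

namespace IsDivChain

variable {p : ℕ → ℕ}

theorem strictMonoOn (hp : IsDivChain p) : StrictMonoOn p (Set.Ici 1) :=
  strictMonoOn_of_lt_add_one Set.ordConnected_Ici fun k _ hk _ => hp.lt_succ k hk

theorem dvd_of_le (hp : IsDivChain p) {j k : ℕ} (hj : 1 ≤ j) (hjk : j ≤ k) : p j ∣ p k :=
  Nat.rel_of_forall_rel_succ_of_le_of_le (· ∣ ·) hp.dvd_succ hj hjk

theorem two_mul_le (hp : IsDivChain p) {k j : ℕ} (hk : 1 ≤ k) (hkj : k < j) : 2 * p k ≤ p j := by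
  obtain ⟨c, hc⟩ := hp.dvd_succ k hk
  have hlt := hp.lt_succ k hk
  have hc2 : 2 ≤ c := by
    by_contra! h
    interval_cases c <;> simp_all
  calc 2 * p k ≤ p k * c := by rw [mul_comm]; exact Nat.mul_le_mul_left _ hc2
    _ = p (k + 1) := hc.symm
    _ ≤ p j := hp.strictMonoOn.monotoneOn (Set.mem_Ici.2 (by omega)) (Set.mem_Ici.2 (by omega)) hkj

end IsDivChain

def Uncovered (p b : ℕ → ℕ) (k n : ℕ) : Prop :=
  1 ≤ n ∧ ∀ j : ℕ, 1 ≤ j → j ≤ k → ¬∃ m : ℕ, n = b j + m * p j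

-- `IsStart b n` is the paper's `z n = 1`.
def IsStart (b : ℕ → ℕ) (n : ℕ) : Prop := ∃ k : ℕ, 1 ≤ k ∧ b k = n

structure IsGreedy (p b : ℕ → ℕ) : Prop where
  one : b 1 = 1
  isLeast_succ : ∀ k, 1 ≤ k → IsLeast {n | Uncovered p b k n} (b (k + 1))

variable {p b : ℕ → ℕ}

theorem Uncovered.anti {k k' n : ℕ} (h : Uncovered p b k n) (hk : k' ≤ k) :
    Uncovered p b k' n :=
  ⟨h.1, fun j hj hjk => h.2 j hj (hjk.trans hk)⟩

namespace IsGreedy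

theorem uncovered_b_succ (hb : IsGreedy p b) {k : ℕ} (hk : 1 ≤ k) :
    Uncovered p b k (b (k + 1)) :=
  (hb.isLeast_succ k hk).1

theorem b_lt_b_succ (hb : IsGreedy p b) {k : ℕ} (hk : 1 ≤ k) : b k < b (k + 1) := by
  have hmem := hb.uncovered_b_succ hk
  have hne : b (k + 1) ≠ b k := fun h => hmem.2 k hk le_rfl ⟨0, by simp [h]⟩
  refine lt_of_le_of_ne ?_ hne.symm
  match k, hmem with
  | 1, hmem => rw [hb.one]; exact hmem.1
  | k + 2, hmem => exact (hb.isLeast_succ (k + 1) (by omega)).2 (hmem.anti (by omega))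

theorem strictMonoOn (hb : IsGreedy p b) : StrictMonoOn b (Set.Ici 1) :=
  strictMonoOn_of_lt_add_one Set.ordConnected_Ici fun _ _ hk _ => hb.b_lt_b_succ hk

theorem b_le_b_iff (hb : IsGreedy p b) {j k : ℕ} (hj : 1 ≤ j) (hk : 1 ≤ k) :
    b j ≤ b k ↔ j ≤ k :=
  hb.strictMonoOn.le_iff_le hj hk

theorem b_lt_b_iff (hb : IsGreedy p b) {j k : ℕ} (hj : 1 ≤ j) (hk : 1 ≤ k) :
    b j < b k ↔ j < k :=
  hb.strictMonoOn.lt_iff_lt hj hk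

theorem self_le_b (hb : IsGreedy p b) {k : ℕ} (hk : 1 ≤ k) : k ≤ b k := by
  induction k, hk using Nat.le_induction with
  | base => rw [hb.one]
  | succ _ hk ih => exact ih.trans_lt (hb.b_lt_b_succ hk)

theorem b_lt_of_uncovered (hb : IsGreedy p b) {k n : ℕ} (hk : 1 ≤ k) (h : Uncovered p b k n) :
    b k < n :=
  (hb.b_lt_b_succ hk).trans_le ((hb.isLeast_succ k hk).2 h)

theorem exists_eq_b_add_mul (hb : IsGreedy p b) {n : ℕ} (hn : 1 ≤ n) :
    ∃ j, 1 ≤ j ∧ ∃ m, n = b j + m * p j := by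
  by_contra h
  have := hb.b_lt_of_uncovered hn ⟨hn, fun j hj _ hm => h ⟨j, hj, hm⟩⟩
  have := hb.self_le_b hn
  omega

theorem isLeast_isStart_gt_b (hb : IsGreedy p b) {s : ℕ} (hs : 1 ≤ s) :
    IsLeast {x | IsStart b x ∧ b s < x} (b (s + 1)) := by
  refine ⟨⟨⟨s + 1, by omega, rfl⟩, hb.b_lt_b_succ hs⟩, ?_⟩
  rintro x ⟨⟨k, hk, rfl⟩, hlt⟩
  rw [hb.b_lt_b_iff hs hk] at hlt
  exact (hb.b_le_b_iff (by omega) hk).2 hlt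

theorem not_isStart_of_b_lt_of_lt_b_succ (hb : IsGreedy p b) {s x : ℕ} (hs : 1 ≤ s)
    (h₁ : b s < x) (h₂ : x < b (s + 1)) : ¬IsStart b x := fun hx =>
  h₂.not_ge ((hb.isLeast_isStart_gt_b hs).2 ⟨hx, h₁⟩)

theorem exists_b_eq_of_isStart (hb : IsGreedy p b) {s r x : ℕ} (hs : 1 ≤ s) (hr : 1 ≤ r)
    (hx : IsStart b x) (h₁ : b s ≤ x) (h₂ : x ≤ b r) : ∃ k, s ≤ k ∧ k ≤ r ∧ b k = x := by
  obtain ⟨k, hk, rfl⟩ := hx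
  exact ⟨k, (hb.b_le_b_iff hs hk).1 h₁, (hb.b_le_b_iff hk hr).1 h₂, rfl⟩

theorem b_succ_lt_p_of_forall (hp : IsDivChain p) (hb : IsGreedy p b) {k : ℕ}
    (hk : 1 ≤ k) (h : ∀ j, 1 ≤ j → j ≤ k → b j + 1 < p j) : b (k + 1) < p k := by
  have hpk := h k hk le_rfl
  have hunc : Uncovered p b k (p k - 1) := by
    refine ⟨by omega, fun j hj hjk ⟨m, hm⟩ => ?_⟩
    have hpj := h j hj hjk
    have hdvd : p j ∣ m * p j + (b j + 1) := by
      rw [show m * p j + (b j + 1) = p k by omega]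
      exact hp.dvd_of_le hj hjk
    have := Nat.le_of_dvd (by omega) ((Nat.dvd_add_right (dvd_mul_left _ _)).mp hdvd)
    omega
  have := (hb.isLeast_succ k hk).2 hunc
  omega

theorem b_add_one_lt_p (hp : IsDivChain p) (hp1 : 3 ≤ p 1) (hb : IsGreedy p b) {k : ℕ}
    (hk : 1 ≤ k) : b k + 1 < p k := by
  suffices h : ∀ k j, 1 ≤ j → j ≤ k → b j + 1 < p j from h k k hk le_rfl
  intro k
  induction k with
  | zero => omega
  | succ k ih =>
    intro j hj hjk
    obtain hjk | rfl := hjk.lt_or_eq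
    · exact ih j hj (by omega)
    obtain rfl | hk := Nat.eq_zero_or_pos k
    · rw [zero_add, hb.one]; omega
    · have := hb.b_succ_lt_p_of_forall hp hk ih
      have := hp.lt_succ k hk
      omega

theorem b_succ_lt_p (hp : IsDivChain p) (hp1 : 3 ≤ p 1) (hb : IsGreedy p b) {k : ℕ}
    (hk : 1 ≤ k) : b (k + 1) < p k :=
  hb.b_succ_lt_p_of_forall hp hk fun _ hj _ => hb.b_add_one_lt_p hp hp1 hj

theorem uncovered_iff_mod (hp : IsDivChain p) (hp1 : 3 ≤ p 1) (hb : IsGreedy p b) {k n : ℕ} :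
    Uncovered p b k n ↔ 1 ≤ n ∧ ∀ j, 1 ≤ j → j ≤ k → n % p j ≠ b j :=
  and_congr Iff.rfl <| forall₃_congr fun _ hj _ => not_congr <|
    exists_eq_add_mul_iff_mod_eq (by have := hb.b_add_one_lt_p hp hp1 hj; omega)

theorem uncovered_p_add_iff (hp : IsDivChain p) (hp1 : 3 ≤ p 1) (hb : IsGreedy p b)
    {L u : ℕ} (hu : 1 ≤ u) : Uncovered p b L (p L + u) ↔ Uncovered p b L u := by
  simp only [hb.uncovered_iff_mod hp hp1]
  refine and_congr (by omega) (forall₃_congr fun j hj hjL => ?_)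
  obtain ⟨c, hc⟩ := hp.dvd_of_le hj hjL
  rw [hc, Nat.mul_add_mod]

theorem uncovered_p (hp : IsDivChain p) (hp1 : 3 ≤ p 1) (hb : IsGreedy p b) {L : ℕ}
    (hL : 1 ≤ L) : Uncovered p b L (p L) := by
  refine (hb.uncovered_iff_mod hp hp1).2 ⟨by have := hb.b_add_one_lt_p hp hp1 hL; omega, ?_⟩
  intro j hj hjL
  rw [Nat.mod_eq_zero_of_dvd (hp.dvd_of_le hj hjL)]
  have := hb.self_le_b hj
  omega

theorem isStart_iff_uncovered (hp : IsDivChain p) (hb : IsGreedy p b) {L n : ℕ} (hL : 1 ≤ L)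
    (hn : b L < n) (hn' : n ≤ 2 * p L) : IsStart b n ↔ Uncovered p b L n := by
  constructor
  · rintro ⟨k, hk, rfl⟩
    obtain ⟨k, rfl⟩ : ∃ k', k = k' + 1 := ⟨k - 1, by omega⟩
    have hLk : L ≤ k := by
      have := (hb.b_lt_b_iff hL hk).1 hn
      omega
    exact (hb.uncovered_b_succ (hL.trans hLk)).anti hLk
  · intro h
    obtain ⟨j, hj, m, hm⟩ := hb.exists_eq_b_add_mul h.1
    have hLj : L < j := by
      by_contra hjL
      exact h.2 j hj (by omega) ⟨m, hm⟩
    obtain rfl | hm1 := Nat.eq_zero_or_pos m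
    · exact ⟨j, hj, by simpa using hm.symm⟩
    · have := hp.two_mul_le hL hLj
      have := hb.self_le_b hj
      have := Nat.le_mul_of_pos_left (p j) hm1
      omega

theorem isStart_p (hp : IsDivChain p) (hp1 : 3 ≤ p 1) (hb : IsGreedy p b) {L : ℕ}
    (hL : 1 ≤ L) : IsStart b (p L) :=
  (hb.isStart_iff_uncovered hp hL (by have := hb.b_add_one_lt_p hp hp1 hL; omega)
    (by omega)).2 (hb.uncovered_p hp hp1 hL)

theorem isStart_p_add_iff (hp : IsDivChain p) (hp1 : 3 ≤ p 1) (hb : IsGreedy p b)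
    {L u : ℕ} (hL : 1 ≤ L) (hu : 1 ≤ u) (huL : u ≤ p L) :
    IsStart b (p L + u) ↔ IsStart b u ∧ b L < u := by
  have hbL := hb.b_add_one_lt_p hp hp1 hL
  rw [hb.isStart_iff_uncovered hp hL (by omega) (by omega), hb.uncovered_p_add_iff hp hp1 hu]
  constructor
  · intro h
    have hlt := hb.b_lt_of_uncovered hL h
    exact ⟨(hb.isStart_iff_uncovered hp hL hlt (by omega)).2 h, hlt⟩
  · rintro ⟨h, hlt⟩
    exact (hb.isStart_iff_uncovered hp hL hlt (by omega)).1 h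

theorem isLeast_p_add (hp : IsDivChain p) (hp1 : 3 ≤ p 1) (hb : IsGreedy p b) {L c y : ℕ}
    (hL : 1 ≤ L) (hc : b L ≤ c) (hy : IsLeast {x | IsStart b x ∧ c < x} y) (hyL : y ≤ p L) :
    IsLeast {x | IsStart b x ∧ p L + c < x} (p L + y) := by
  obtain ⟨⟨hystart, hcy⟩, hymin⟩ := hy
  refine ⟨⟨(hb.isStart_p_add_iff hp hp1 hL (by omega) hyL).2 ⟨hystart, by omega⟩, by omega⟩, ?_⟩
  rintro x ⟨hx, hcx⟩
  by_cases hxL : x ≤ 2 * p L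
  · obtain ⟨u, rfl⟩ : ∃ u, x = p L + u := ⟨x - p L, by omega⟩
    obtain ⟨hu, -⟩ := (hb.isStart_p_add_iff hp hp1 hL (by omega) (by omega)).1 hx
    have := hymin ⟨hu, by omega⟩
    omega
  · omega

theorem setOf_isStart_gt_p (hp : IsDivChain p) (hp1 : 3 ≤ p 1) (hb : IsGreedy p b) {L : ℕ}
    (hL : 1 ≤ L) : {x | IsStart b x ∧ p L < x} = {x | IsStart b x ∧ p L + b L < x} := by
  ext x
  refine ⟨fun ⟨hx, hlt⟩ => ⟨hx, ?_⟩, fun ⟨hx, hlt⟩ => ⟨hx, by omega⟩⟩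
  by_contra hle
  have := hb.b_add_one_lt_p hp hp1 hL
  obtain ⟨u, rfl⟩ : ∃ u, x = p L + u := ⟨x - p L, by omega⟩
  have := ((hb.isStart_p_add_iff hp hp1 hL (by omega) (by omega)).1 hx).2
  omega

theorem b_add_eq_p_add (hp : IsDivChain p) (hp1 : 3 ≤ p 1) (hb : IsGreedy p b) {L i t : ℕ}
    (hL : 1 ≤ L) (hi : 1 ≤ i) (hbi : b i = p L) (ht : 1 ≤ t) (htL : b (L + t) ≤ p L) :
    b (i + t) = p L + b (L + t) := by
  induction t, ht using Nat.le_induction with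
  | base =>
    refine (hb.isLeast_isStart_gt_b hi).unique ?_
    rw [hbi, hb.setOf_isStart_gt_p hp hp1 hL]
    exact hb.isLeast_p_add hp hp1 hL le_rfl (hb.isLeast_isStart_gt_b hL) htL
  | succ t ht ih =>
    have hmono := hb.b_lt_b_succ (show 1 ≤ L + t by omega)
    refine (hb.isLeast_isStart_gt_b (show 1 ≤ i + t by omega)).unique ?_
    rw [ih (hmono.le.trans htL)]
    exact hb.isLeast_p_add hp hp1 hL ((hb.b_le_b_iff hL (by omega)).2 (by omega))
      (hb.isLeast_isStart_gt_b (by omega)) htL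

theorem exists_long_gaps (hp : IsDivChain p) (hp1 : 3 ≤ p 1) (hb : IsGreedy p b) (θ j : ℕ) :
    ∃ L, θ < L ∧ b (L + (j + 1)) < p L ∧ ∀ t < j, b (L + (t + 1)) + θ < b (L + (t + 2)) := by
  induction j with
  | zero => exact ⟨θ + 1, by omega, hb.b_succ_lt_p hp hp1 (by omega), by simp⟩
  | succ j ih =>
    obtain ⟨L, hθL, hlast, hgaps⟩ := ih
    have hL : 1 ≤ L := by omega
    obtain ⟨i, hi, hbi⟩ := hb.isStart_p hp hp1 hL
    have hiL : L + (j + 1) < i := (hb.b_lt_b_iff (by omega) hi).1 (hbi ▸ hlast)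
    have hshift : ∀ t, 1 ≤ t → t ≤ j + 1 → b (i + t) = p L + b (L + t) := fun t ht htj =>
      hb.b_add_eq_p_add hp hp1 hL hi hbi ht
        (((hb.b_le_b_iff (by omega) (by omega)).2 (by omega)).trans hlast.le)
    refine ⟨i - 1, by omega, ?_, fun t ht => ?_⟩
    · rw [show i - 1 + (j + 1 + 1) = i + (j + 1) by omega, hshift (j + 1) (by omega) le_rfl]
      have := hp.two_mul_le hL (show L < i - 1 by omega)
      omega
    · rw [show i - 1 + (t + 1) = i + t by omega, show i - 1 + (t + 2) = i + (t + 1) by omega]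
      rcases t with _ | t
      · rw [add_zero, hbi, hshift 1 le_rfl (by omega)]
        have := hb.self_le_b (show 1 ≤ L + 1 by omega)
        omega
      · show b (i + (t + 1)) + θ < b (i + (t + 2))
        rw [hshift (t + 1) (by omega) (by omega), hshift (t + 2) (by omega) (by omega)]
        have := hgaps t (by omega)
        omega

end IsGreedy

open Finset in
theorem tendsto_iSup_card_filter_Ioc_div_of_runs {P : ℕ → Prop} [DecidablePred P]
    (h : ∀ L, ∃ t, ∀ n, t < n → n ≤ t + L → P n) :
    Tendsto (fun L : ℕ => ⨆ t : ℕ, (((Ioc t (t + L)).filter P).card : ℝ) / L) atTop (𝓝 1) := by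
  refine tendsto_const_nhds.congr' ?_
  filter_upwards [eventually_ge_atTop 1] with L hL
  have hL' : (0 : ℝ) < L := by exact_mod_cast hL
  have hle : ∀ t, (((Ioc t (t + L)).filter P).card : ℝ) / L ≤ 1 := fun t => by
    rw [div_le_one hL']
    exact_mod_cast (card_filter_le _ _).trans (by simp)
  obtain ⟨t₀, ht₀⟩ := h L
  have heq : (((Ioc t₀ (t₀ + L)).filter P).card : ℝ) / L = 1 := by
    rw [filter_true_of_mem fun n hn => ht₀ n (mem_Ioc.1 hn).1 (mem_Ioc.1 hn).2, Nat.card_Ioc,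
      Nat.add_sub_cancel_left, div_self hL'.ne']
  exact (le_antisymm (ciSup_le hle) (heq ▸ le_ciSup ⟨1, Set.forall_mem_range.2 hle⟩ t₀)).symm

end GreedyCovering

open GreedyCovering in
/-- For every `m ≥ 1` the sequence `z` contains `m` single symbols `1`
separated by gaps of length `> m` filled with zeros; in particular `z` has arbitrarily long
blocks of consecutive zeros, and the upper Banach density of the set of zeros is `1`. -/
theorem sparse_ones_and_upper_Banach_density_one
    (p : ℕ → ℕ)
    (hp1 : 3 ≤ p 1)
    (hpmono : ∀ k : ℕ, 1 ≤ k → p k < p (k + 1))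
    (hpdvd : ∀ k : ℕ, 1 ≤ k → p k ∣ p (k + 1))
    (b : ℕ → ℕ) (hb1 : b 1 = 1)
    (hbrec : ∀ k : ℕ, 1 ≤ k → IsLeast
      {n : ℕ | 1 ≤ n ∧ ∀ j : ℕ, 1 ≤ j → j ≤ k → ¬∃ m : ℕ, n = b j + m * p j} (b (k + 1)))
    (z : ℕ → ℕ)
    (hz : ∀ n : ℕ, (z n = 1 ↔ ∃ k : ℕ, 1 ≤ k ∧ b k = n) ∧ (z n = 1 ∨ z n = 0)) :
    (∀ m : ℕ, ∀ hm : 1 ≤ m, ∃ n : Fin m → ℕ,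
      StrictMono n ∧
      (∀ i : Fin m, 1 ≤ n i ∧ z (n i) = 1) ∧
      (∀ j : ℕ, n ⟨0, hm⟩ ≤ j → j ≤ n ⟨m - 1, Nat.sub_lt hm Nat.one_pos⟩ →
        (∀ i : Fin m, j ≠ n i) → z j = 0) ∧
      (∀ i : Fin m, ∀ h : (i : ℕ) + 1 < m,
        m < n ⟨(i : ℕ) + 1, h⟩ - n i)) ∧
    (∀ m : ℕ, ∃ t : ℕ, ∀ j : ℕ, t < j → j ≤ t + m → z j = 0) ∧
    Tendsto (fun L : ℕ =>
        ⨆ t : ℕ, (((Finset.Ioc t (t + L)).filter (fun n => z n = 0)).card : ℝ) / L)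
      atTop (𝓝 1) := by
  have hp : IsDivChain p := ⟨hpmono, hpdvd⟩
  have hb : IsGreedy p b := ⟨hb1, hbrec⟩
  have hz1 : ∀ n, z n = 1 ↔ IsStart b n := fun n => (hz n).1
  have hz0 : ∀ n, z n = 0 ↔ ¬IsStart b n := fun n => by
    rw [← hz1]
    rcases (hz n).2 with h | h <;> simp [h]
  have zero_runs : ∀ m, ∃ t, ∀ j, t < j → j ≤ t + m → z j = 0 := fun m => by
    obtain ⟨L, -, -, hgaps⟩ := hb.exists_long_gaps hp hp1 m 1
    have hgap : b (L + 1) + m < b (L + 2) := hgaps 0 one_pos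
    exact ⟨b (L + 1), fun j h₁ h₂ => (hz0 j).2
      (hb.not_isStart_of_b_lt_of_lt_b_succ (by omega) h₁ (show j < b (L + 2) by omega))⟩
  refine ⟨fun m hm => ?_, zero_runs, tendsto_iSup_card_filter_Ioc_div_of_runs zero_runs⟩
  obtain ⟨L, -, -, hgaps⟩ := hb.exists_long_gaps hp hp1 m (m - 1)
  refine ⟨fun i => b (L + (i + 1)), fun i j hij => (hb.b_lt_b_iff (by omega) (by omega)).2
    (by simp only [Fin.lt_def] at hij; omega), fun i => ⟨?_, (hz1 _).2 ⟨_, by omega, rfl⟩⟩, ?_, ?_⟩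
  · exact (show 1 ≤ L + (i + 1) by omega).trans (hb.self_le_b (by omega))
  · intro x h₁ h₂ hne
    refine (hz0 x).2 fun hx => ?_
    obtain ⟨k, hk₁, hk₂, rfl⟩ := hb.exists_b_eq_of_isStart (by omega) (by omega) hx h₁ h₂
    exact hne ⟨k - (L + 1), by simp only at hk₂; omega⟩ (by simp only; congr 1; omega)
  · intro i h
    have := hgaps i (by omega)
    show m < b (L + (i + 2)) - b (L + (i + 1))
    omega
end

section
/- Let (X, T) be a minimal topological dynamical system on a compact metric space (T a homeomorphism), let (G, τ) be an odometer, and let π : X → G be an almost 1-1 factor map. Then a point x ∈ X is regularly recurrent if and only if π⁻¹({π(x)}) = {x}. -/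
/-!
Write `K_p(z)` for the closure of the `T ^ p`-orbit of `z` and `H_p` for the closure of
`ℤ • (p • g₀)`. Then `π` maps `K_p(z)` into `π z + H_p`, and compactness of `X` shows that a point
`w` with `π⁻¹{π w} = {w}` and `π w ∈ π z + H_p` lies in `K_p(z)`.

If the fibre of `x` is `{x}`, then, `π` being a closed map, every neighbourhood of `x` contains
`π⁻¹ V` for a neighbourhood `V` of `π x`; an open subgroup of `G` inside `V - π x` has finite
index `p`, and the times `pℤ` return `x` to `π⁻¹ V`.

Conversely, by minimality the finitely many closed sets `K_p(T^j z)`, `0 ≤ j < p`, cover `X`. For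
`w` with a one-point fibre this gives `π⁻¹(π w + H_p) ⊆ K_p(w)`, and applied to such a `w` it
produces a one-point fibre `w` with `x ∈ K_p(w)`, hence `w ∈ K_p(x)`. So the whole fibre of `x`
lies in `K_p(x)`, which regular recurrence puts inside any given neighbourhood of `x`.
-/

open Set

lemma exists_forall_add_mul_zsmul_mem {G : Type*} [AddGroup G] [TopologicalSpace G]
    [IsTopologicalAddGroup G] [CompactSpace G] [TotallyDisconnectedSpace G] (g : G) {a : G}
    {V : Set G} (hV : IsOpen V) (ha : a ∈ V) :
    ∃ p : ℕ, 1 ≤ p ∧ ∀ m : ℤ, a + (m * p) • g ∈ V := by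
  obtain ⟨N, hN⟩ := ProfiniteGrp.exist_openNormalAddSubgroup_sub_open_nhds_of_zero
    (hV.preimage (continuous_const_add a)) (by simpa using ha)
  have := AddSubgroup.quotient_finite_of_isOpen _ N.isOpen'
  refine ⟨N.index, Nat.one_le_iff_ne_zero.mpr AddSubgroup.index_ne_zero_of_finite, fun m => hN ?_⟩
  rw [mul_zsmul, natCast_zsmul]
  exact zsmul_mem (N.nsmul_index_mem g) m

namespace Homeomorph

variable {X : Type*} [TopologicalSpace X]

lemma toEquiv_zpow (T : X ≃ₜ X) (n : ℤ) : (T ^ n).toEquiv = T.toEquiv ^ n :=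
  map_zpow (⟨⟨toEquiv, rfl⟩, fun _ _ => rfl⟩ : (X ≃ₜ X) →* Equiv.Perm X) T n

@[simp]
lemma toEquiv_zpow_apply (T : X ≃ₜ X) (n : ℤ) (x : X) : (T.toEquiv ^ n) x = (T ^ n) x := by
  rw [← toEquiv_zpow]; rfl

def orbitClosure (S : X ≃ₜ X) (z : X) : Set X :=
  closure (range fun n : ℤ => (S ^ n) z)

lemma isClosed_orbitClosure (S : X ≃ₜ X) (z : X) : IsClosed (S.orbitClosure z) :=
  isClosed_closure

lemma zpow_apply_mem_orbitClosure (S : X ≃ₜ X) (n : ℤ) (z : X) :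
    (S ^ n) z ∈ S.orbitClosure z :=
  subset_closure ⟨n, rfl⟩

lemma orbitClosure_subset_of_mem {S : X ≃ₜ X} {z w : X} (hw : w ∈ S.orbitClosure z) :
    S.orbitClosure w ⊆ S.orbitClosure z := by
  refine closure_minimal ?_ (S.isClosed_orbitClosure z)
  rintro _ ⟨n, rfl⟩
  refine map_mem_closure (S ^ n).continuous hw ?_
  rintro _ ⟨m, rfl⟩
  exact ⟨n + m, by simp only [zpow_add, mul_apply]⟩

lemma exists_mem_orbitClosure_pow (T : X ≃ₜ X) {z : X}
    (hz : Dense (range fun n : ℤ => (T ^ n) z)) {p : ℤ} (hp : 0 < p) (v : X) :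
    ∃ j : ℤ, v ∈ (T ^ p).orbitClosure ((T ^ j) z) := by
  have hcover : range (fun n : ℤ => (T ^ n) z) ⊆
      ⋃ j ∈ Ico 0 p, (T ^ p).orbitClosure ((T ^ j) z) := by
    rintro _ ⟨n, rfl⟩
    refine mem_biUnion (x := n % p) ⟨Int.emod_nonneg n hp.ne', Int.emod_lt_of_pos n hp⟩ ?_
    convert (T ^ p).zpow_apply_mem_orbitClosure (n / p) ((T ^ (n % p)) z) using 1
    rw [← mul_apply, ← zpow_mul, ← zpow_add, add_comm, Int.emod_add_mul_ediv]
  have hclosed := (finite_Ico 0 p).isClosed_biUnion fun j _ =>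
    (T ^ p).isClosed_orbitClosure ((T ^ j) z)
  obtain ⟨j, -, hj⟩ :=
    mem_iUnion₂.mp (closure_minimal hcover hclosed (hz.closure_eq ▸ mem_univ v))
  exact ⟨j, hj⟩

def IsRegularlyRecurrent (T : X ≃ₜ X) (x : X) : Prop :=
  ∀ U : Set X, IsOpen U → x ∈ U → ∃ p : ℕ, 1 ≤ p ∧ ∀ m : ℤ, (T ^ (m * p)) x ∈ U

section Factor

variable {G : Type*} [AddCommGroup G] {S : X ≃ₜ X} {π : X → G} {g : G}

lemma map_zpow_apply_eq_add_zsmul (hπ : ∀ x, π (S x) = π x + g) (n : ℤ) (x : X) :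
    π ((S ^ n) x) = π x + n • g := by
  induction n using Int.induction_on generalizing x with
  | zero => simp
  | succ n ih =>
    rw [zpow_add_one, mul_apply, ih, hπ, add_zsmul, one_zsmul]
    abel
  | pred n ih =>
    have hinv : π (S⁻¹ x) = π x - g := by
      rw [eq_sub_iff_add_eq, ← hπ, inv_apply, apply_symm_apply]
    rw [zpow_sub_one, mul_apply, ih, hinv, sub_zsmul, one_zsmul]
    abel

lemma fiber_zpow_apply_eq_singleton (hπ : ∀ x, π (S x) = π x + g) {w : X}
    (hw : π ⁻¹' {π w} = {w}) (n : ℤ) : π ⁻¹' {π ((S ^ n) w)} = {(S ^ n) w} := by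
  refine Set.ext fun v => ⟨fun hv => ?_, fun hv => by rw [hv]; rfl⟩
  have hvw : (S ^ (-n)) v = w := by
    refine hw.subset ?_
    change π ((S ^ (-n)) v) = π w
    rw [map_zpow_apply_eq_add_zsmul hπ, show π v = _ from hv, map_zpow_apply_eq_add_zsmul hπ,
      neg_zsmul, add_neg_cancel_right]
  rw [mem_singleton_iff, ← hvw, ← mul_apply, ← zpow_add, add_neg_cancel, zpow_zero, one_apply]

variable [TopologicalSpace G] [IsTopologicalAddGroup G]

lemma map_sub_mem_of_mem_orbitClosure (hπc : Continuous π) (hπ : ∀ x, π (S x) = π x + g)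
    {z v : X} (hv : v ∈ S.orbitClosure z) :
    π v - π z ∈ (AddSubgroup.zmultiples g).topologicalClosure := by
  refine closure_minimal ?_ ((AddSubgroup.isClosed_topologicalClosure _).preimage
    (hπc.sub continuous_const)) hv
  rintro _ ⟨n, rfl⟩
  refine AddSubgroup.le_topologicalClosure _ ?_
  simp [map_zpow_apply_eq_add_zsmul hπ, AddSubgroup.zsmul_mem_zmultiples]

lemma mem_orbitClosure_of_fiber_eq_singleton [CompactSpace X] [T2Space G] (hπc : Continuous π)
    (hπ : ∀ x, π (S x) = π x + g) {z w : X} (hw : π ⁻¹' {π w} = {w})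
    (hwz : π w - π z ∈ (AddSubgroup.zmultiples g).topologicalClosure) :
    w ∈ S.orbitClosure z := by
  have himage : IsClosed (π '' S.orbitClosure z) :=
    ((S.isClosed_orbitClosure z).isCompact.image hπc).isClosed
  have hsub : ((AddSubgroup.zmultiples g).topologicalClosure : Set G) ⊆
      (π z + ·) ⁻¹' (π '' S.orbitClosure z) := by
    rw [AddSubgroup.topologicalClosure_coe]
    refine closure_minimal ?_ (himage.preimage (continuous_const.add continuous_id))
    rintro _ ⟨n, rfl⟩
    exact ⟨(S ^ n) z, S.zpow_apply_mem_orbitClosure n z, map_zpow_apply_eq_add_zsmul hπ n z⟩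
  obtain ⟨u, hu, hπu⟩ := hsub hwz
  rwa [← (hw.subset (hπu.trans (add_sub_cancel _ _)) : u = w)]

variable [CompactSpace X] [T2Space G] {T : X ≃ₜ X}

lemma mem_orbitClosure_pow_of_sub_mem (hπc : Continuous π) (hπ : ∀ x, π (T x) = π x + g)
    {w v : X} (hmin : Dense (range fun n : ℤ => (T ^ n) w)) (hw : π ⁻¹' {π w} = {w})
    {p : ℤ} (hp : 0 < p) (hv : π v - π w ∈ (AddSubgroup.zmultiples (p • g)).topologicalClosure) :
    v ∈ (T ^ p).orbitClosure w := by
  have hπp : ∀ x, π ((T ^ p) x) = π x + p • g := map_zpow_apply_eq_add_zsmul hπ p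
  obtain ⟨j, hj⟩ := T.exists_mem_orbitClosure_pow hmin hp v
  have hvj := map_sub_mem_of_mem_orbitClosure hπc hπp hj
  have hjw : (T ^ j) w ∈ (T ^ p).orbitClosure w := by
    refine mem_orbitClosure_of_fiber_eq_singleton hπc hπp
      (fiber_zpow_apply_eq_singleton hπ hw j) ?_
    rw [← sub_sub_sub_cancel_left _ _ (π v)]
    exact sub_mem hv hvj
  exact orbitClosure_subset_of_mem hjw hj

lemma mem_orbitClosure_pow_of_map_eq (hπc : Continuous π) (hπ : ∀ x, π (T x) = π x + g)
    (hmin : ∀ x, Dense (range fun n : ℤ => (T ^ n) x)) (hR : ∃ z, π ⁻¹' {π z} = {z})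
    {p : ℤ} (hp : 0 < p) {x y : X} (hxy : π y = π x) : y ∈ (T ^ p).orbitClosure x := by
  have hπp : ∀ x, π ((T ^ p) x) = π x + p • g := map_zpow_apply_eq_add_zsmul hπ p
  obtain ⟨z, hz⟩ := hR
  obtain ⟨j, hxj⟩ := T.exists_mem_orbitClosure_pow (hmin z) hp x
  have hw := fiber_zpow_apply_eq_singleton hπ hz j
  have hxw := map_sub_mem_of_mem_orbitClosure hπc hπp hxj
  have hwx : (T ^ j) z ∈ (T ^ p).orbitClosure x :=
    mem_orbitClosure_of_fiber_eq_singleton hπc hπp hw (by simpa using neg_mem hxw)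
  exact orbitClosure_subset_of_mem hwx
    (mem_orbitClosure_pow_of_sub_mem hπc hπ (hmin _) hw hp (hxy ▸ hxw))

lemma IsRegularlyRecurrent.fiber_eq_singleton [T2Space X] (hπc : Continuous π)
    (hπ : ∀ x, π (T x) = π x + g) (hmin : ∀ x, Dense (range fun n : ℤ => (T ^ n) x))
    (hR : ∃ z, π ⁻¹' {π z} = {z}) {x : X} (hx : T.IsRegularlyRecurrent x) :
    π ⁻¹' {π x} = {x} := by
  refine Subset.antisymm (fun y hy => ?_) (singleton_subset_iff.mpr rfl)
  by_contra hyx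
  obtain ⟨U, V, hU, hV, hxU, hyV, hUV⟩ := t2_separation (Ne.symm hyx)
  obtain ⟨p, hp, hpU⟩ := hx U hU hxU
  have hK : (T ^ (p : ℤ)).orbitClosure x ⊆ Vᶜ := by
    refine closure_minimal ?_ hV.isClosed_compl
    rintro _ ⟨m, rfl⟩
    simp only [← zpow_mul, mul_comm (p : ℤ) m]
    exact hUV.subset_compl_right (hpU m)
  exact hK (mem_orbitClosure_pow_of_map_eq hπc hπ hmin hR (by omega) hy) hyV

lemma isRegularlyRecurrent_of_fiber_eq_singleton [CompactSpace G] [TotallyDisconnectedSpace G]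
    (hπc : Continuous π) (hπ : ∀ x, π (T x) = π x + g) {x : X} (hx : π ⁻¹' {π x} = {x}) :
    T.IsRegularlyRecurrent x := by
  intro U hU hxU
  have hV : IsOpen (kernImage π U) := isClosedMap_iff_kernImage.mp hπc.isClosedMap hU
  have hxV : π x ∈ kernImage π U := fun x' hx' => (hx.subset hx' : x' = x) ▸ hxU
  obtain ⟨p, hp, hpV⟩ := exists_forall_add_mul_zsmul_mem g hV hxV
  exact ⟨p, hp, fun m => hpV m (map_zpow_apply_eq_add_zsmul hπ _ x)⟩

end Factor

end Homeomorph

theorem regularly_recurrent_iff_singleton_fiber_general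
    {X : Type*} [MetricSpace X] [CompactSpace X]
    {G : Type*} [AddCommGroup G] [TopologicalSpace G] [IsTopologicalAddGroup G]
    [CompactSpace G] [TotallyDisconnectedSpace G]
    (g₀ : G) (T : X ≃ₜ X)
    -- (X,T) is minimal
    (hmin : ∀ x : X, Dense (Set.range fun n : ℤ => (T.toEquiv ^ n) x))
    -- π is a factor map onto the odometer (G, τ), τ(g) = g + g₀
    (π : X → G) (hπcont : Continuous π) (hπequiv : ∀ x : X, π (T x) = π x + g₀)
    -- π is almost 1-1
    (ha11 : {x : X | π ⁻¹' {π x} = {x}} ∈ residual X) :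
    ∀ x : X,
      (∀ U : Set X, IsOpen U → x ∈ U →
          ∃ p : ℕ, 1 ≤ p ∧ ∀ m : ℤ, (T.toEquiv ^ (m * p)) x ∈ U)
        ↔ π ⁻¹' {π x} = {x} := by
  intro x
  simp only [Homeomorph.toEquiv_zpow_apply] at hmin ⊢
  have : Nonempty X := ⟨x⟩
  have hR : ∃ z, π ⁻¹' {π z} = {z} := (dense_of_mem_residual ha11).nonempty
  exact ⟨Homeomorph.IsRegularlyRecurrent.fiber_eq_singleton hπcont hπequiv hmin hR,
    Homeomorph.isRegularlyRecurrent_of_fiber_eq_singleton hπcont hπequiv⟩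

/-- Let `(X,T)` be minimal, `(G,τ)` an odometer (`τ` the rotation by a
topological generator `g₀` of an infinite compact metrizable totally disconnected abelian
group) and `π : X → G` an almost 1-1 factor map. Then `x ∈ X` is regularly recurrent iff
`π⁻¹({π x}) = {x}`. -/
theorem regularly_recurrent_iff_singleton_fiber
    {X : Type*} [MetricSpace X] [CompactSpace X]
    {G : Type*} [AddCommGroup G] [TopologicalSpace G] [IsTopologicalAddGroup G]
    [CompactSpace G] [TopologicalSpace.MetrizableSpace G]
    [TotallyDisconnectedSpace G] [Infinite G]
    (g₀ : G) (hgen : Dense (Set.range fun n : ℤ => n • g₀))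
    (T : X ≃ₜ X)
    -- (X,T) is minimal
    (hmin : ∀ x : X, Dense (Set.range fun n : ℤ => (T.toEquiv ^ n) x))
    -- π is a factor map onto the odometer (G, τ), τ(g) = g + g₀
    (π : X → G) (hπcont : Continuous π) (hπsurj : Function.Surjective π)
    (hπequiv : ∀ x : X, π (T x) = π x + g₀)
    -- π is almost 1-1
    (ha11 : {x : X | π ⁻¹' {π x} = {x}} ∈ residual X) :
    ∀ x : X,
      (∀ U : Set X, IsOpen U → x ∈ U →
          ∃ p : ℕ, 1 ≤ p ∧ ∀ m : ℤ, (T.toEquiv ^ (m * p)) x ∈ U)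
        ↔ π ⁻¹' {π x} = {x} :=
  regularly_recurrent_iff_singleton_fiber_general g₀ T hmin π hπcont hπequiv ha11
end

section
/- Let Λ be a nonempty finite set, let x₀ : ℤ → Λ be a regularly recurrent sequence (for every n ∈ ℤ there is p ≥ 1 with x₀(n + mp) = x₀(n) for all m ∈ ℤ), and let X ⊆ Λ^ℤ be the closure of the orbit of x₀ under the left shift. For p ≥ 1 and x ∈ X set Per_p(x) = {n ∈ ℤ : x(n + mp) = x(n) for all m ∈ ℤ}. Then for every p ≥ 1 and every x ∈ X, the two-sided density lim_{N→∞} |Per_p(x) ∩ [−N, N]| / (2N+1) exists and equals the corresponding density for x₀; i.e., the density of the p-periodic part is constant throughout X. -/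
/-!
`Per_p(x)` is invariant under translation by `p`, so its density is the proportion of residues
mod `p` that it contains, since every residue class has density `1/p` in `[-N, N]`.
It remains to see that for `x` in the orbit closure, `Per_p(x)` is a translate of `Per_p(x₀)`.
If `x₀(n + m p) ≠ x₀(n)`, then regular recurrence of `x₀` at `n` and at `n + m p` makes this
failure repeat along a progression `n + Q ℤ` with `p ∣ Q`; hence every window of some fixed
length `W` witnesses the failure of periodicity of every non-periodic residue class of `x₀`.
A shift of `x₀` agreeing with `x` on a large enough window then has the same periodic residues
as `x`.
-/

open Classical Filter Topology
open Finset Function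

section Residues

variable {p : ℕ}

lemma Function.Periodic.eq_of_intCast_eq {β : Type*} {f : ℤ → β} (hf : Periodic f p)
    {a b : ℤ} (h : (a : ZMod p) = b) : f a = f b := by
  obtain ⟨t, ht⟩ := (ZMod.intCast_eq_intCast_iff_dvd_sub a b p).1 h
  rw [show b = a + t * p by linarith]
  simpa using (hf.int_mul t a).symm

variable [NeZero p]

lemma Function.Periodic.sum_val_add {M : Type*} [AddCommMonoid M] {f : ℤ → M}
    (hf : Periodic f p) (k : ℤ) : ∑ c : ZMod p, f (c.val + k) = ∑ c : ZMod p, f c.val :=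
  Fintype.sum_equiv (Equiv.addRight (k : ZMod p)) _ _ fun c => hf.eq_of_intCast_eq (by simp)

lemma Function.Periodic.sum_eq_sum_card_smul {M : Type*} [AddCommMonoid M] {f : ℤ → M}
    (hf : Periodic f p) (s : Finset ℤ) :
    ∑ n ∈ s, f n = ∑ c : ZMod p, #{n ∈ s | ((n : ℤ) : ZMod p) = c} • f c.val :=
  calc ∑ n ∈ s, f n = ∑ n ∈ s, f (n : ZMod p).val :=
        sum_congr rfl fun n _ => hf.eq_of_intCast_eq (by simp)
    _ = ∑ c : ZMod p, ∑ n ∈ s with ((n : ℤ) : ZMod p) = c, f c.val :=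
        (sum_fiberwise' s (fun n : ℤ => (n : ZMod p)) (fun c => f c.val)).symm
    _ = _ := by simp only [sum_const]

lemma abs_card_filter_intCast_eq_sub_le (c : ZMod p) (N : ℕ) :
    |(#{n ∈ Icc (-(N : ℤ)) N | ((n : ℤ) : ZMod p) = c} : ℝ) - (2 * N + 1) / p| ≤ 1 := by
  have hIcc : Icc (-(N : ℤ)) N = Ico (-(N : ℤ)) (N + 1) := by
    ext; simp only [mem_Icc, mem_Ico]; omega
  have hcong (n : ℤ) : (n : ZMod p) = c ↔ n ≡ c.val [ZMOD p] := by
    rw [← ZMod.intCast_eq_intCast_iff]; simp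
  have hp : (0 : ℚ) < p := by exact_mod_cast NeZero.pos p
  have hcard := Int.Ico_filter_modEq_card (-(N : ℤ)) (N + 1) (r := p)
    (by exact_mod_cast NeZero.pos p) c.val
  push_cast at hcard
  set A : ℚ := (N + 1 - c.val) / p
  set B : ℚ := (-N - c.val) / p
  have hAB : A - B = (2 * N + 1) / p := by ring
  have hA₁ := Int.le_ceil A
  have hA₂ := Int.ceil_lt_add_one A
  have hB₁ := Int.le_ceil B
  have hB₂ := Int.ceil_lt_add_one B
  have hnonneg : (0 : ℤ) ≤ ⌈A⌉ - ⌈B⌉ := by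
    have : 0 < A - B := by rw [hAB]; positivity
    have : ((-1 : ℤ) : ℚ) < ((⌈A⌉ - ⌈B⌉ : ℤ) : ℚ) := by push_cast; linarith
    exact_mod_cast this
  rw [max_eq_left hnonneg] at hcard
  have hq : |((#{n ∈ Ico (-(N : ℤ)) (N + 1) | n ≡ c.val [ZMOD p]} : ℤ) : ℚ) - (2 * N + 1) / p|
      ≤ 1 := by
    rw [hcard, abs_le, ← hAB]; push_cast; constructor <;> linarith
  have hr := Rat.cast_le (K := ℝ) |>.mpr hq
  push_cast at hr
  simp_rw [hIcc, hcong]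
  exact hr

lemma tendsto_card_filter_intCast_eq_div (c : ZMod p) :
    Tendsto (fun N : ℕ => (#{n ∈ Icc (-(N : ℤ)) N | ((n : ℤ) : ZMod p) = c} : ℝ) / (2 * N + 1))
      atTop (𝓝 (1 / p)) := by
  have hden : Tendsto (fun N : ℕ => 2 * (N : ℝ) + 1) atTop atTop :=
    tendsto_atTop_add_const_right _ _ (tendsto_natCast_atTop_atTop.const_mul_atTop two_pos)
  have herr := tendsto_bdd_div_atTop_nhds_zero (Eventually.of_forall fun N =>
    (abs_le.1 (abs_card_filter_intCast_eq_sub_le c N)).1) (Eventually.of_forall fun N =>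
    (abs_le.1 (abs_card_filter_intCast_eq_sub_le c N)).2) hden
  refine (zero_add (1 / (p : ℝ)) ▸ herr.add_const (1 / (p : ℝ))).congr fun N => ?_
  field_simp
  ring

theorem Function.Periodic.tendsto_sum_Icc_div {f : ℤ → ℝ} (hf : Periodic f p) :
    Tendsto (fun N : ℕ => (∑ n ∈ Icc (-(N : ℤ)) N, f n) / (2 * N + 1))
      atTop (𝓝 ((∑ c : ZMod p, f c.val) / p)) := by
  simp_rw [hf.sum_eq_sum_card_smul, nsmul_eq_mul, sum_div, mul_div_right_comm]
  simpa only [one_div_mul_eq_div] using tendsto_finsetSum univ fun c _ =>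
    (tendsto_card_filter_intCast_eq_div c).mul_const (f c.val)

end Residues

section PeriodicPart

variable {α : Type*}

def periodicPart (p : ℤ) (x : ℤ → α) : Set ℤ := {n | ∀ m : ℤ, x (n + m * p) = x n}

def RegularlyRecurrent (x : ℤ → α) : Prop := ∀ n : ℤ, ∃ p : ℕ, 1 ≤ p ∧ n ∈ periodicPart p x

def orbitClosure [TopologicalSpace α] (x : ℤ → α) : Set (ℤ → α) :=
  closure (Set.range fun k : ℤ => fun i : ℤ => x (i + k))

lemma add_mul_mem_periodicPart_iff {p : ℤ} {x : ℤ → α} {n : ℤ} (j : ℤ) :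
    n + j * p ∈ periodicPart p x ↔ n ∈ periodicPart p x := by
  refine ⟨fun h m => ?_, fun h m => ?_⟩
  · have h₁ := h (m - j)
    have h₂ := h (-j)
    rw [show n + j * p + (m - j) * p = n + m * p by ring] at h₁
    rw [show n + j * p + -j * p = n by ring] at h₂
    rw [h₁, h₂]
  · rw [show n + j * p + m * p = n + (j + m) * p by ring, h, h]

lemma periodic_mem_periodicPart (p : ℤ) (x : ℤ → α) :
    Periodic (· ∈ periodicPart p x) p := fun n => by
  simpa using add_mul_mem_periodicPart_iff (x := x) (n := n) 1

lemma exists_eq_shift_on_of_mem_orbitClosure [TopologicalSpace α] [DiscreteTopology α]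
    {x₀ x : ℤ → α} (hx : x ∈ orbitClosure x₀) (F : Finset ℤ) :
    ∃ k : ℤ, ∀ i ∈ F, x i = x₀ (i + k) := by
  have hU : IsOpen ((F : Set ℤ).pi fun i => {x i}) :=
    isOpen_set_pi F.finite_toSet fun i _ => isOpen_discrete _
  obtain ⟨_, hyU, k, rfl⟩ := mem_closure_iff.1 hx _ hU fun i _ => rfl
  exact ⟨k, fun i hi => (hyU i hi).symm⟩

variable {x₀ : ℤ → α} {p : ℕ}

lemma exists_progression_of_not_mem_periodicPart (hrr : RegularlyRecurrent x₀) (hp : 0 < p)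
    {n : ℤ} (hn : n ∉ periodicPart p x₀) :
    ∃ Q m : ℤ, 0 < Q ∧ (p : ℤ) ∣ Q ∧ ∀ t : ℤ, x₀ (n + t * Q + m * p) ≠ x₀ (n + t * Q) := by
  obtain ⟨m, hm⟩ := not_forall.1 hn
  obtain ⟨q₁, hq₁, hn₁⟩ := hrr n
  obtain ⟨q₂, hq₂, hn₂⟩ := hrr (n + m * p)
  refine ⟨q₁ * q₂ * p, m, by positivity, dvd_mul_left _ _, fun t => ?_⟩
  rwa [show n + t * (q₁ * q₂ * p) + m * p = n + m * p + (t * q₁ * p) * q₂ by ring, hn₂,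
    show n + t * (q₁ * q₂ * p) = n + (t * q₂ * p) * q₁ by ring, hn₁]

lemma exists_bound_nonperiodicity_witness (hrr : RegularlyRecurrent x₀) [NeZero p] :
    ∃ W : ℤ, ∀ n ∉ periodicPart p x₀, ∀ a : ℤ, ∃ j m : ℤ, (j : ZMod p) = n ∧
      |j - a| ≤ W ∧ |j + m * p - a| ≤ W ∧ x₀ (j + m * p) ≠ x₀ j := by
  choose Q m hQ hpQ hQm using fun c : {c : ZMod p // (c.val : ℤ) ∉ periodicPart p x₀} =>
    exists_progression_of_not_mem_periodicPart hrr (NeZero.pos p) c.2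
  refine ⟨∑ c, (Q c + |m c * p|), fun n hn a => ?_⟩
  have hc : ((n : ZMod p).val : ℤ) ∉ periodicPart p x₀ := by
    rwa [(periodic_mem_periodicPart p x₀).eq_of_intCast_eq (b := n) (by simp)]
  set c : {c : ZMod p // (c.val : ℤ) ∉ periodicPart p x₀} := ⟨n, hc⟩
  have hW : Q c + |m c * p| ≤ ∑ c, (Q c + |m c * p|) :=
    single_le_sum (f := fun c => Q c + |m c * p|) (fun c _ => by have := hQ c; positivity)
      (mem_univ c)
  set r : ℤ := ((n : ZMod p).val : ℤ)
  set t := -((r - a) / Q c)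
  have hja : r + t * Q c - a = (r - a) % Q c := by rw [Int.emod_def]; ring
  have hja₀ : 0 ≤ r + t * Q c - a := hja ▸ Int.emod_nonneg _ (hQ c).ne'
  have hja₁ : r + t * Q c - a < Q c := hja ▸ Int.emod_lt_of_pos _ (hQ c)
  refine ⟨r + t * Q c, m c, ?_, ?_, ?_, hQm c t⟩
  · simp [r, (ZMod.intCast_zmod_eq_zero_iff_dvd _ p).2 (hpQ c)]
  · rw [abs_of_nonneg hja₀]
    linarith [abs_nonneg (m c * p)]
  · have := abs_add_le (r + t * Q c - a) (m c * p)
    rw [abs_of_nonneg hja₀, show r + t * Q c - a + m c * p = r + t * Q c + m c * p - a by ring]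
      at this
    linarith

theorem exists_mem_periodicPart_iff_add_mem [TopologicalSpace α] [DiscreteTopology α]
    (hrr : RegularlyRecurrent x₀) [NeZero p] {x : ℤ → α} (hx : x ∈ orbitClosure x₀) :
    ∃ k : ℤ, ∀ n, n ∈ periodicPart p x ↔ n + k ∈ periodicPart p x₀ := by
  obtain ⟨W, hW⟩ := exists_bound_nonperiodicity_witness (p := p) hrr
  choose w hw using fun c : {c : ZMod p // (c.val : ℤ) ∉ periodicPart p x} => not_forall.1 c.2
  obtain ⟨k, hk⟩ := exists_eq_shift_on_of_mem_orbitClosure hx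
    (Icc (-W) W ∪ univ.image (fun c : ZMod p => (c.val : ℤ)) ∪
      univ.image (fun c => (c.1.val : ℤ) + w c * p))
  refine ⟨k, fun n => ?_⟩
  set r : ℤ := ((n : ZMod p).val : ℤ)
  have hr : (r : ZMod p) = n := by simp [r]
  have hrF : r ∈ univ.image (fun c : ZMod p => (c.val : ℤ)) := mem_image_of_mem _ (mem_univ _)
  rw [(periodic_mem_periodicPart p x).eq_of_intCast_eq hr.symm,
    (periodic_mem_periodicPart p x₀).eq_of_intCast_eq (a := n + k) (b := r + k)
      (by push_cast [hr]; rfl)]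
  constructor
  · intro hrx
    by_contra hrx₀
    obtain ⟨j, m, hj, hja, hjma, hne⟩ := hW _ hrx₀ k
    have hjx : j - k ∈ periodicPart p x :=
      ((periodic_mem_periodicPart p x).eq_of_intCast_eq (a := r) (b := j - k)
        (by push_cast [hj]; ring)).mp hrx
    have hjF : j - k ∈ Icc (-W) W := mem_Icc.2 (abs_le.1 hja)
    have hjmF : j - k + m * p ∈ Icc (-W) W :=
      mem_Icc.2 (abs_le.1 (by rwa [show j - k + m * p = j + m * p - k by ring]))
    apply hne
    rw [show j + m * p = j - k + m * p + k by ring, ← hk _ (by simp [hjmF]), hjx m,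
      hk _ (by simp [hjF]), sub_add_cancel]
  · intro hrx₀
    by_contra hrx
    apply hw ⟨_, hrx⟩
    rw [hk _ (mem_union_right _ (mem_image_of_mem _ (mem_univ _))),
      hk _ (mem_union_left _ (mem_union_right _ hrF)), add_right_comm, hrx₀]

end PeriodicPart

theorem density_of_periodic_part_constant_general
    {Λ : Type*} [TopologicalSpace Λ] [DiscreteTopology Λ]
    (x₀ : ℤ → Λ)
    (hrr : ∀ n : ℤ, ∃ p : ℕ, 1 ≤ p ∧ ∀ m : ℤ, x₀ (n + m * p) = x₀ n) :
    ∀ p : ℕ, 1 ≤ p → ∃ d : ℝ,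
      ∀ x ∈ closure (Set.range fun k : ℤ => fun i : ℤ => x₀ (i + k)),
        Tendsto (fun N : ℕ =>
            (∑ n ∈ Finset.Icc (-(N : ℤ)) (N : ℤ),
              if (∀ m : ℤ, x (n + m * p) = x n) then (1 : ℝ) else 0) / (2 * N + 1))
          atTop (𝓝 d) := by
  intro p hp
  have : NeZero p := ⟨by omega⟩
  set f₀ : ℤ → ℝ := fun n => if n ∈ periodicPart p x₀ then 1 else 0
  have hf₀ : Periodic f₀ p :=
    (periodic_mem_periodicPart p x₀).comp fun P : Prop => if P then (1 : ℝ) else 0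
  refine ⟨(∑ c : ZMod p, f₀ c.val) / p, fun x hx => ?_⟩
  obtain ⟨k, hk⟩ := exists_mem_periodicPart_iff_add_mem (p := p) hrr hx
  have hlim := (hf₀.add_const k).tendsto_sum_Icc_div
  rw [hf₀.sum_val_add k] at hlim
  refine hlim.congr fun N => ?_
  congr 1
  exact sum_congr rfl fun n _ => if_congr (hk n).symm rfl rfl

/-- In a Toeplitz subshift (the orbit closure `X` of a regularly recurrent
sequence `x₀ : ℤ → Λ`), for each `p ≥ 1` the two-sided density of the `p`-periodic part
`Per_p(x)` exists and takes the same value for every `x ∈ X`. -/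
theorem density_of_periodic_part_constant
    {Λ : Type*} [Finite Λ] [Nonempty Λ] [TopologicalSpace Λ] [DiscreteTopology Λ]
    (x₀ : ℤ → Λ)
    (hrr : ∀ n : ℤ, ∃ p : ℕ, 1 ≤ p ∧ ∀ m : ℤ, x₀ (n + m * p) = x₀ n) :
    ∀ p : ℕ, 1 ≤ p → ∃ d : ℝ,
      ∀ x ∈ closure (Set.range fun k : ℤ => fun i : ℤ => x₀ (i + k)),
        Tendsto (fun N : ℕ =>
            (∑ n ∈ Finset.Icc (-(N : ℤ)) (N : ℤ),
              if (∀ m : ℤ, x (n + m * p) = x n) then (1 : ℝ) else 0) / (2 * N + 1))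
          atTop (𝓝 d) :=
  density_of_periodic_part_constant_general x₀ hrr
end

section
/- Let (X, T) be a minimal topological dynamical system on a compact metric space (T a homeomorphism), let (G, τ) be an odometer with Haar probability measure λ, and let π : X → G be an almost 1-1 factor map. Assume regularity: λ({g ∈ G : π⁻¹({g}) is a singleton}) = 1. Then (X, T) is uniquely ergodic; moreover, its unique T-invariant Borel probability measure μ satisfies π_*μ = λ, and π is injective on a Borel subset of X of full μ-measure, so that π is a measure-theoretic isomorphism between (X, μ, T) and (G, λ, τ). -/
/-!
Let `S ⊆ G` be the set of points with a one-point fiber. For an invariant probability measure `μ`,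
the push-forward `π_* μ` is invariant under `τ`; since translation acts continuously on measures
and `ℤ • g₀` is dense, it is invariant under every translation, so it is the Haar measure `λ`.
Regularity then says that `μ` lives on `π ⁻¹' S`, where `π` is continuous and injective, hence
(Lusin–Souslin) a Borel isomorphism onto `S`. So `μ` is the lift of `λ` along this isomorphism,
which proves uniqueness; conversely that lift is a probability measure whose image under `T` is
again a lift of `λ`, hence equal to it, which proves existence.
-/

open MeasureTheory Set BoundedContinuousFunction

section SingletonFibers

variable {X Y : Type*} {π : X → Y}

theorem injOn_preimage_setOf_preimage_eq_singleton :
    InjOn π (π ⁻¹' {y | ∃ x, π ⁻¹' {y} = {x}}) := by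
  rintro x ⟨z, hz⟩ x' - hxx'
  have hx : x ∈ π ⁻¹' {π x} := rfl
  have hx' : x' ∈ π ⁻¹' {π x} := hxx'.symm
  rw [hz] at hx hx'
  exact hx.trans hx'.symm

theorem compl_setOf_preimage_eq_singleton [MetricSpace X] (hπ : Function.Surjective π) :
    {y | ∃ x, π ⁻¹' {y} = {x}}ᶜ =
      ⋃ n : ℕ, (π ∘ Prod.fst) ''
        {p : X × X | π p.1 = π p.2 ∧ 1 / (n + 1 : ℝ) ≤ dist p.1 p.2} := by
  ext y
  simp only [mem_compl_iff, mem_ofPred_eq, not_exists, mem_iUnion, mem_image,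
    Function.comp_apply, Prod.exists]
  constructor
  · intro hy
    obtain ⟨x, rfl⟩ := hπ y
    obtain ⟨x', hx', hne⟩ : ∃ x' ∈ π ⁻¹' {π x}, x' ≠ x := by
      by_contra! h
      exact hy x (Subset.antisymm h (singleton_subset_iff.2 rfl))
    obtain ⟨n, hn⟩ := exists_nat_one_div_lt (dist_pos.2 hne.symm)
    exact ⟨n, x, x', ⟨hx'.symm, hn.le⟩, rfl⟩
  · rintro ⟨n, x, x', ⟨hxx', hdist⟩, rfl⟩ z hz
    have hx : π x ∈ {y | ∃ x, π ⁻¹' {y} = {x}} := ⟨z, hz⟩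
    rw [injOn_preimage_setOf_preimage_eq_singleton hx (by rwa [mem_preimage, ← hxx']) hxx',
      dist_self] at hdist
    exact absurd hdist (not_le.2 Nat.one_div_pos_of_nat)

theorem measurableSet_setOf_preimage_eq_singleton [MetricSpace X] [CompactSpace X]
    [TopologicalSpace Y] [T2Space Y] [MeasurableSpace Y] [OpensMeasurableSpace Y]
    (hπc : Continuous π) (hπ : Function.Surjective π) :
    MeasurableSet {y | ∃ x, π ⁻¹' {y} = {x}} := by
  refine MeasurableSet.of_compl ?_
  rw [compl_setOf_preimage_eq_singleton hπ]
  refine MeasurableSet.iUnion fun n => ?_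
  have hcompact : IsCompact {p : X × X | π p.1 = π p.2 ∧ 1 / (n + 1 : ℝ) ≤ dist p.1 p.2} :=
    ((isClosed_eq (hπc.comp continuous_fst) (hπc.comp continuous_snd)).inter
      (isClosed_le continuous_const continuous_dist)).isCompact
  exact (hcompact.image (hπc.comp continuous_fst)).isClosed.measurableSet

end SingletonFibers

namespace MeasureTheory

theorem MeasurePreserving.map_of_semiconj {X Y : Type*} [MeasurableSpace X] [MeasurableSpace Y]
    {π : X → Y} {T : X → X} {τ : Y → Y} {μ : Measure X} {ν : Measure Y}
    (hπ : MeasurePreserving π μ ν) (hτ : MeasurePreserving τ ν ν) (h : Function.Semiconj π T τ)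
    (hT : Measurable T) : MeasurePreserving π (μ.map T) ν :=
  (h.comp_eq ▸ hτ.comp hπ).map_of_comp hπ.measurable hT

namespace Measure

section Lift

variable {X Y : Type*} [TopologicalSpace X] [PolishSpace X] [MeasurableSpace X] [BorelSpace X]
  [TopologicalSpace Y] [T2Space Y] [MeasurableSpace Y] [BorelSpace Y]
  {π : X → Y} {S : Set Y}

/-- Meaningful only when `π` restricted to `π ⁻¹' S` is a measurable embedding: otherwise
`Measure.comap` returns `0`. -/
noncomputable def liftOver (π : X → Y) (S : Set Y) (ν : Measure Y) : Measure X :=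
  (ν.comap ((π ⁻¹' S).domRestrict π)).map Subtype.val

theorem map_liftOver (hπ : Continuous π) (hS : MeasurableSet S) (hinj : InjOn π (π ⁻¹' S))
    (hSπ : S ⊆ range π) {ν : Measure Y} (hν : ν Sᶜ = 0) : (liftOver π S ν).map π = ν := by
  have he := ContinuousOn.measurableEmbedding (hπ.measurable hS) hπ.continuousOn hinj
  have hrange : range ((π ⁻¹' S).domRestrict π) = S := by
    rw [domRestrict_eq, range_comp, Subtype.range_coe, image_preimage_eq_of_subset hSπ]
  rw [liftOver, map_map hπ.measurable measurable_subtype_coe, ← domRestrict_eq, he.map_comap,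
    hrange, restrict_eq_self_of_ae_mem (mem_ae_iff.2 hν)]

theorem liftOver_map (hπ : Continuous π) (hS : MeasurableSet S) (hinj : InjOn π (π ⁻¹' S))
    {μ : Measure X} (hμ : μ.map π Sᶜ = 0) : liftOver π S (μ.map π) = μ := by
  have he := ContinuousOn.measurableEmbedding (hπ.measurable hS) hπ.continuousOn hinj
  rw [map_apply hπ.measurable hS.compl] at hμ
  have hμ_eq : (μ.comap ((↑) : π ⁻¹' S → X)).map (↑) = μ := by
    rw [map_comap_subtype_coe (hπ.measurable hS)]
    exact restrict_eq_self_of_ae_mem (mem_ae_iff.2 hμ)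
  conv_lhs => rw [← hμ_eq]
  rw [liftOver, map_map hπ.measurable measurable_subtype_coe, ← domRestrict_eq, he.comap_map,
    hμ_eq]

theorem eq_of_map_eq_of_injOn (hπ : Continuous π) (hS : MeasurableSet S)
    (hinj : InjOn π (π ⁻¹' S)) {μ μ' : Measure X} (h : μ.map π = μ'.map π)
    (hμ : μ.map π Sᶜ = 0) : μ = μ' := by
  calc μ = liftOver π S (μ.map π) := (liftOver_map hπ hS hinj hμ).symm
    _ = μ' := by rw [h, liftOver_map hπ hS hinj (h ▸ hμ)]

end Lift

section Stabilizer

variable {G : Type*} [AddGroup G] [MeasurableSpace G] [MeasurableAdd G]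

def addStabilizer (ν : Measure G) : AddSubgroup G where
  carrier := {g | ν.map (g + ·) = ν}
  zero_mem' := by simp
  add_mem' {a b} ha hb := by
    have h := (MeasurePreserving.mk (measurable_const_add a) ha).comp
      (MeasurePreserving.mk (measurable_const_add b) hb)
    simpa only [mem_ofPred_eq, Function.comp_def, add_assoc] using h.map_eq
  neg_mem' {a} ha := by
    change ν.map (-a + ·) = ν
    conv_lhs => rw [← ha]
    rw [map_map (measurable_const_add _) (measurable_const_add _)]
    simp [Function.comp_def]

theorem mem_addStabilizer {ν : Measure G} {g : G} : g ∈ addStabilizer ν ↔ ν.map (g + ·) = ν :=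
  Iff.rfl

end Stabilizer

section CompactGroup

variable {G : Type*} [AddGroup G] [TopologicalSpace G] [IsTopologicalAddGroup G] [CompactSpace G]
  [MeasurableSpace G] [BorelSpace G]

theorem eq_of_isAddLeftInvariant_of_isProbabilityMeasure (μ ν : Measure G)
    [IsProbabilityMeasure μ] [IsProbabilityMeasure ν] [μ.IsAddLeftInvariant]
    [ν.IsAddLeftInvariant] : μ = ν := by
  have := isOpenPosMeasure_of_addLeftInvariant_of_compact univ isCompact_univ (μ := μ) (by simp)
  have := isOpenPosMeasure_of_addLeftInvariant_of_compact univ isCompact_univ (μ := ν) (by simp)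
  have : μ.IsAddHaarMeasure := ⟨⟩
  have : ν.IsAddHaarMeasure := ⟨⟩
  exact isAddHaarMeasure_eq_of_isProbabilityMeasure μ ν

theorem isClosed_addStabilizer [TopologicalSpace.PseudoMetrizableSpace G] (ν : Measure G)
    [IsFiniteMeasure ν] : IsClosed (addStabilizer ν : Set G) := by
  -- bounded continuous functions separate finite measures
  have hchar : (addStabilizer ν : Set G) =
      ⋂ f : G →ᵇ ℝ, {g | ∫ h, f (g + h) ∂ν = ∫ h, f h ∂ν} := by
    ext g
    simp only [SetLike.mem_coe, mem_addStabilizer, mem_iInter, mem_ofPred_eq]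
    have hint : ∀ f : G →ᵇ ℝ, ∫ h, f h ∂(ν.map (g + ·)) = ∫ h, f (g + h) ∂ν := fun f =>
      integral_map (measurable_const_add g).aemeasurable f.continuous.aestronglyMeasurable
    refine ⟨fun h f => by rw [← hint f, h], fun h => ?_⟩
    exact ext_of_forall_integral_eq_of_IsFiniteMeasure fun f => (hint f).trans (h f)
  rw [hchar]
  refine isClosed_iInter fun f => isClosed_eq ?_ continuous_const
  simpa only [restrict_univ] using continuous_parametric_integral_of_continuous (μ := ν)
    (f := fun g h => f (g + h)) (by fun_prop) isCompact_univ

theorem isAddLeftInvariant_of_map_add_left_eq_self [TopologicalSpace.PseudoMetrizableSpace G]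
    {g₀ : G} (hgen : Dense (range fun n : ℤ => n • g₀)) (ν : Measure G) [IsFiniteMeasure ν]
    (h : ν.map (g₀ + ·) = ν) : ν.IsAddLeftInvariant := by
  have hrange : (range fun n : ℤ => n • g₀) ⊆ addStabilizer ν := by
    rintro _ ⟨n, rfl⟩
    exact zsmul_mem (mem_addStabilizer.2 h) n
  have hstab := closure_minimal hrange (isClosed_addStabilizer ν)
  rw [hgen.closure_eq] at hstab
  exact ⟨fun g => mem_addStabilizer.1 (hstab (mem_univ g))⟩

theorem map_eq_of_semiconj_add_left [TopologicalSpace.PseudoMetrizableSpace G] {g₀ : G}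
    (hgen : Dense (range fun n : ℤ => n • g₀)) (lam : Measure G) [IsProbabilityMeasure lam]
    [lam.IsAddLeftInvariant] {X : Type*} [MeasurableSpace X] {T : X → X} (hT : Measurable T)
    {π : X → G} (hπ : Measurable π) (h : Function.Semiconj π T (g₀ + ·)) {μ : Measure X}
    [IsProbabilityMeasure μ] (hμ : μ.map T = μ) : μ.map π = lam := by
  have hν := MeasurePreserving.of_semiconj ⟨hπ, rfl⟩ ⟨hT, hμ⟩ h (measurable_const_add g₀)
  have := isProbabilityMeasure_map (μ := μ) hπ.aemeasurable
  have := isAddLeftInvariant_of_map_add_left_eq_self hgen (μ.map π) hν.map_eq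
  exact eq_of_isAddLeftInvariant_of_isProbabilityMeasure _ _

end CompactGroup

end Measure

end MeasureTheory

open MeasureTheory.Measure

theorem regular_almost_one_one_extension_uniquely_ergodic_and_isomorphic_general
    {X : Type*} [MetricSpace X] [CompactSpace X] [MeasurableSpace X] [BorelSpace X]
    {G : Type*} [AddCommGroup G] [TopologicalSpace G] [IsTopologicalAddGroup G]
    [CompactSpace G] [TopologicalSpace.MetrizableSpace G]
    [MeasurableSpace G] [BorelSpace G]
    (g₀ : G) (hgen : Dense (Set.range fun n : ℤ => n • g₀))
    -- λ is the Haar probability measure of G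
    (lam : Measure G) (hlamprob : IsProbabilityMeasure lam)
    (hlaminv : ∀ g : G, lam.map (fun h => g + h) = lam)
    (T : X ≃ₜ X)
    -- π is a factor map onto the odometer (G, τ), τ(g) = g + g₀
    (π : X → G) (hπcont : Continuous π) (hπsurj : Function.Surjective π)
    (hπequiv : ∀ x : X, π (T x) = π x + g₀)
    -- regularity: λ-almost every fiber is a singleton
    (hreg : lam {g : G | ∃ x : X, π ⁻¹' {g} = {x}} = 1) :
    -- (X,T) is uniquely ergodic …
    (∃! μ : Measure X, IsProbabilityMeasure μ ∧ μ.map T = μ) ∧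
    -- … and its unique invariant measure is carried isomorphically onto λ by π
    (∀ μ : Measure X, IsProbabilityMeasure μ → μ.map T = μ →
      μ.map π = lam ∧ ∃ B : Set X, MeasurableSet B ∧ μ B = 1 ∧ Set.InjOn π B) := by
  set S := {g : G | ∃ x : X, π ⁻¹' {g} = {x}}
  have hS : MeasurableSet S := measurableSet_setOf_preimage_eq_singleton hπcont hπsurj
  have hinj : InjOn π (π ⁻¹' S) := injOn_preimage_setOf_preimage_eq_singleton
  have hSc : lam Sᶜ = 0 := (prob_compl_eq_zero_iff hS).2 hreg
  have : lam.IsAddLeftInvariant := ⟨hlaminv⟩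
  have hπT : Function.Semiconj π T (g₀ + ·) := fun x => (hπequiv x).trans (add_comm _ _)
  have hpush : ∀ μ : Measure X, IsProbabilityMeasure μ → μ.map T = μ → μ.map π = lam :=
    fun _ _ hμT => map_eq_of_semiconj_add_left hgen lam T.measurable hπcont.measurable hπT hμT
  have hunique : ∀ μ μ' : Measure X, μ.map π = lam → μ'.map π = lam → μ = μ' :=
    fun _ _ hμ hμ' => eq_of_map_eq_of_injOn hπcont hS hinj (hμ.trans hμ'.symm) (hμ ▸ hSc)
  set μ₀ := liftOver π S lam
  have hμ₀ : MeasurePreserving π μ₀ lam :=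
    ⟨hπcont.measurable, map_liftOver hπcont hS hinj (fun g _ => hπsurj g) hSc⟩
  have hμ₀T : μ₀.map T = μ₀ := hunique _ _ (hμ₀.map_of_semiconj
    ⟨measurable_const_add g₀, hlaminv g₀⟩ hπT T.measurable).map_eq hμ₀.map_eq
  have hμ₀prob : IsProbabilityMeasure μ₀ :=
    (isProbabilityMeasure_map_iff hπcont.aemeasurable).1 (by rwa [hμ₀.map_eq])
  refine ⟨⟨μ₀, ⟨hμ₀prob, hμ₀T⟩, fun μ ⟨hμ, hμT⟩ => hunique _ _ (hpush μ hμ hμT) hμ₀.map_eq⟩,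
    fun μ hμ hμT => ⟨hpush μ hμ hμT, π ⁻¹' S, hπcont.measurable hS, ?_, hinj⟩⟩
  rw [← map_apply hπcont.measurable hS, hpush μ hμ hμT, hreg]

/-- A regular almost 1-1 extension `(X,T)` of an odometer `(G,τ)` (regular:
`λ`-almost every fiber of `π` is a singleton, `λ` the Haar probability measure) is uniquely
ergodic, and the factor map `π` is a measure-theoretic isomorphism between the unique invariant
measure `μ` and `λ`: `π_*μ = λ` and `π` is injective on a Borel set of full `μ`-measure. -/
theorem regular_almost_one_one_extension_uniquely_ergodic_and_isomorphic
    {X : Type*} [MetricSpace X] [CompactSpace X] [MeasurableSpace X] [BorelSpace X]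
    {G : Type*} [AddCommGroup G] [TopologicalSpace G] [IsTopologicalAddGroup G]
    [CompactSpace G] [TopologicalSpace.MetrizableSpace G]
    [TotallyDisconnectedSpace G] [Infinite G]
    [MeasurableSpace G] [BorelSpace G]
    (g₀ : G) (hgen : Dense (Set.range fun n : ℤ => n • g₀))
    -- λ is the Haar probability measure of G
    (lam : Measure G) (hlamprob : IsProbabilityMeasure lam)
    (hlaminv : ∀ g : G, lam.map (fun h => g + h) = lam)
    (T : X ≃ₜ X)
    -- (X,T) is minimal
    (hmin : ∀ x : X, Dense (Set.range fun n : ℤ => (T.toEquiv ^ n) x))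
    -- π is a factor map onto the odometer (G, τ), τ(g) = g + g₀
    (π : X → G) (hπcont : Continuous π) (hπsurj : Function.Surjective π)
    (hπequiv : ∀ x : X, π (T x) = π x + g₀)
    -- π is almost 1-1
    (ha11 : {x : X | π ⁻¹' {π x} = {x}} ∈ residual X)
    -- regularity: λ-almost every fiber is a singleton
    (hreg : lam {g : G | ∃ x : X, π ⁻¹' {g} = {x}} = 1) :
    -- (X,T) is uniquely ergodic …
    (∃! μ : Measure X, IsProbabilityMeasure μ ∧ μ.map T = μ) ∧
    -- … and its unique invariant measure is carried isomorphically onto λ by π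
    (∀ μ : Measure X, IsProbabilityMeasure μ → μ.map T = μ →
      μ.map π = lam ∧ ∃ B : Set X, MeasurableSet B ∧ μ B = 1 ∧ Set.InjOn π B) :=
  regular_almost_one_one_extension_uniquely_ergodic_and_isomorphic_general g₀ hgen lam hlamprob
    hlaminv T π hπcont hπsurj hπequiv hreg
end
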